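/- arXiv:2203.10589 — 5 statements merged into one kernel-verified Lean document; each statement's English description precedes it below -/
import Mathlib

section
/- With R n as above, S n the count of noncrossing adjacent-arc-free partial matchings on n points, and F n the Fibonacci numbers (F 1 = F 2 = 1), for all n ≥ 4: R n = F n - Σ_{j=1}^{⌊n/2⌋ - 1} S j · F (n-1-2j). -/
/-- A partial matching on `n` linearly ordered points (0-indexed), given as a finite
set of arcs `(i,j)` with `i + 2 ≤ j` (so no arc connects two adjacent points),
with all arc endpoints pairwise distinct. -/
def IsMatching (n : ℕ) (M : Finset (Fin n × Fin n)) : Prop :=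
  (∀ p ∈ M, p.1.val + 2 ≤ p.2.val) ∧
  ∀ p ∈ M, ∀ q ∈ M, p ≠ q →
    p.1 ≠ q.1 ∧ p.1 ≠ q.2 ∧ p.2 ≠ q.1 ∧ p.2 ≠ q.2

/-- No two arcs cross. -/
def Noncrossing (n : ℕ) (M : Finset (Fin n × Fin n)) : Prop :=
  ∀ p ∈ M, ∀ q ∈ M, ¬(p.1 < q.1 ∧ q.1 < p.2 ∧ p.2 < q.2)

/-- The matching is invariant under the reflection `i ↦ n+1-i` (here `Fin.rev`). -/
def SymmMatching (n : ℕ) (M : Finset (Fin n × Fin n)) : Prop :=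
  ∀ p ∈ M, (p.2.rev, p.1.rev) ∈ M

noncomputable def S (n : ℕ) : ℕ :=
  Nat.card {M : Finset (Fin n × Fin n) // IsMatching n M ∧ Noncrossing n M}

noncomputable def R (n : ℕ) : ℕ :=
  Nat.card {M : Finset (Fin n × Fin n) // IsMatching n M ∧ Noncrossing n M ∧ SymmMatching n M}


namespace NW

def NA (n : ℕ) (A : Finset (ℕ × ℕ)) : Prop :=
  (∀ p ∈ A, p.1 + 2 ≤ p.2 ∧ p.2 < n) ∧
  (∀ p ∈ A, ∀ q ∈ A, p ≠ q → p.1 ≠ q.1 ∧ p.1 ≠ q.2 ∧ p.2 ≠ q.1 ∧ p.2 ≠ q.2) ∧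
  (∀ p ∈ A, ∀ q ∈ A, ¬(p.1 < q.1 ∧ q.1 < p.2 ∧ p.2 < q.2))

def NS (n : ℕ) (A : Finset (ℕ × ℕ)) : Prop :=
  NA n A ∧ ∀ p ∈ A, (n - 1 - p.2, n - 1 - p.1) ∈ A

/-- the embedding from `Fin n × Fin n` arcs to `ℕ × ℕ` arcs -/
lemma emb_inj (n : ℕ) :
    Function.Injective (fun p : Fin n × Fin n => ((p.1.val, p.2.val) : ℕ × ℕ)) := by
    rintro ⟨a, b⟩ ⟨c, d⟩ h
    simp only [Prod.mk.injEq] at h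
    exact Prod.ext (Fin.val_injective h.1) (Fin.val_injective h.2)

def emb (n : ℕ) : (Fin n × Fin n) ↪ (ℕ × ℕ) :=
  ⟨fun p => (p.1.val, p.2.val), emb_inj n⟩

lemma mem_map_emb {n : ℕ} {M : Finset (Fin n × Fin n)} {p : ℕ × ℕ} :
    p ∈ M.map (emb n) ↔ ∃ q ∈ M, (q.1.val, q.2.val) = p := by
  simp [Finset.mem_map, emb]

lemma NA_map_iff {n : ℕ} (M : Finset (Fin n × Fin n)) :
    NA n (M.map (emb n)) ↔ IsMatching n M ∧ Noncrossing n M := by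
  constructor
  · rintro ⟨h1, h2, h3⟩
    refine ⟨⟨fun p hp => (h1 _ (Finset.mem_map_of_mem _ hp)).1, ?_⟩, ?_⟩
    · intro p hp q hq hne
      have := h2 _ (Finset.mem_map_of_mem (emb n) hp) _ (Finset.mem_map_of_mem (emb n) hq)
        (by simpa using fun h => hne ((emb n).injective h))
      simp only [emb, Function.Embedding.coeFn_mk] at this
      exact ⟨fun h => this.1 (by rw [h]), fun h => this.2.1 (by rw [h]),
        fun h => this.2.2.1 (by rw [h]), fun h => this.2.2.2 (by rw [h])⟩
    · intro p hp q hq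
      have := h3 _ (Finset.mem_map_of_mem (emb n) hp) _ (Finset.mem_map_of_mem (emb n) hq)
      simp only [emb, Function.Embedding.coeFn_mk] at this
      exact fun h => this ⟨h.1, h.2.1, h.2.2⟩
  · rintro ⟨⟨h1, h2⟩, h3⟩
    refine ⟨?_, ?_, ?_⟩
    · rintro p hp
      rw [mem_map_emb] at hp
      obtain ⟨q, hq, rfl⟩ := hp
      exact ⟨h1 q hq, q.2.isLt⟩
    · rintro p hp q hq hne
      rw [mem_map_emb] at hp hq
      obtain ⟨a, ha, rfl⟩ := hp
      obtain ⟨b, hb, rfl⟩ := hq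
      have hab : a ≠ b := by rintro rfl; exact hne rfl
      have := h2 a ha b hb hab
      simp only [ne_eq, Fin.ext_iff] at this ⊢
      exact this
    · rintro p hp q hq
      rw [mem_map_emb] at hp hq
      obtain ⟨a, ha, rfl⟩ := hp
      obtain ⟨b, hb, rfl⟩ := hq
      have := h3 a ha b hb
      exact fun h => this ⟨h.1, h.2.1, h.2.2⟩

lemma NS_map_iff {n : ℕ} (M : Finset (Fin n × Fin n)) :
    NS n (M.map (emb n)) ↔ IsMatching n M ∧ Noncrossing n M ∧ SymmMatching n M := by
  rw [NS, NA_map_iff]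
  constructor
  · rintro ⟨⟨h1, h2⟩, h3⟩
    refine ⟨h1, h2, ?_⟩
    intro p hp
    have this : ((n - 1 - p.2.val, n - 1 - p.1.val) : ℕ × ℕ) ∈ M.map (emb n) :=
      h3 _ (Finset.mem_map_of_mem (emb n) hp)
    rw [mem_map_emb] at this
    obtain ⟨q, hq, hqe⟩ := this
    have : q = (p.2.rev, p.1.rev) := by
      have e1 : (q.1 : ℕ) = n - 1 - p.2.val := (Prod.mk.injEq _ _ _ _).mp hqe |>.1
      have e2 : (q.2 : ℕ) = n - 1 - p.1.val := (Prod.mk.injEq _ _ _ _).mp hqe |>.2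
      refine Prod.ext (Fin.ext ?_) (Fin.ext ?_) <;>
        simp [e1, e2, Fin.val_rev] <;> omega
    rwa [this] at hq
  · rintro ⟨h1, h2, h3⟩
    refine ⟨⟨h1, h2⟩, ?_⟩
    intro p hp
    rw [mem_map_emb] at hp ⊢
    obtain ⟨q, hq, rfl⟩ := hp
    refine ⟨(q.2.rev, q.1.rev), h3 q hq, ?_⟩
    simp [Fin.val_rev]
    omega

end NW

namespace NW

lemma map_preimage_emb {n : ℕ} {A : Finset (ℕ × ℕ)} (hb : ∀ p ∈ A, p.1 < n ∧ p.2 < n) :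
    (A.preimage (emb n) ((emb n).injective.injOn)).map (emb n) = A := by
  ext b
  simp only [Finset.mem_map, Finset.mem_preimage]
  constructor
  · rintro ⟨a, ha, rfl⟩; exact ha
  · intro hb'
    exact ⟨(⟨b.1, (hb b hb').1⟩, ⟨b.2, (hb b hb').2⟩), by simpa [emb] using hb', by simp [emb]⟩

lemma NS_bounds {n : ℕ} {A : Finset (ℕ × ℕ)} (h : NS n A) : ∀ p ∈ A, p.1 < n ∧ p.2 < n := by
  intro p hp
  have := h.1.1 p hp
  omega

lemma NA_bounds {n : ℕ} {A : Finset (ℕ × ℕ)} (h : NA n A) : ∀ p ∈ A, p.1 < n ∧ p.2 < n := by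
  intro p hp
  have := h.1 p hp
  omega

noncomputable def equivNS (n : ℕ) :
    {M : Finset (Fin n × Fin n) // IsMatching n M ∧ Noncrossing n M ∧ SymmMatching n M} ≃
      {A : Finset (ℕ × ℕ) // NS n A} where
  toFun M := ⟨M.1.map (emb n), (NS_map_iff _).2 M.2⟩
  invFun A := ⟨A.1.preimage (emb n) ((emb n).injective.injOn), by
    have h := map_preimage_emb (NS_bounds A.2)
    rw [← NS_map_iff]; rw [h]; exact A.2⟩
  left_inv M := by
    ext a
    simp only [Finset.mem_preimage, Finset.mem_map']
  right_inv A := by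
    exact Subtype.ext (map_preimage_emb (NS_bounds A.2))

noncomputable def equivNA (n : ℕ) :
    {M : Finset (Fin n × Fin n) // IsMatching n M ∧ Noncrossing n M} ≃
      {A : Finset (ℕ × ℕ) // NA n A} where
  toFun M := ⟨M.1.map (emb n), (NA_map_iff _).2 M.2⟩
  invFun A := ⟨A.1.preimage (emb n) ((emb n).injective.injOn), by
    have h := map_preimage_emb (NA_bounds A.2)
    rw [← NA_map_iff]; rw [h]; exact A.2⟩
  left_inv M := by
    ext a
    simp only [Finset.mem_preimage, Finset.mem_map']
  right_inv A := by
    exact Subtype.ext (map_preimage_emb (NA_bounds A.2))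

lemma R_eq (n : ℕ) : R n = Set.ncard {A | NS n A} := by
  rw [R, Nat.card_congr (equivNS n), ← Nat.card_coe_set_eq]
  rfl

lemma S_eq (n : ℕ) : S n = Set.ncard {A | NA n A} := by
  rw [S, Nat.card_congr (equivNA n), ← Nat.card_coe_set_eq]
  rfl

lemma finite_NA (n : ℕ) : {A | NA n A}.Finite := by
  apply Set.Finite.subset (Finset.finite_toSet ((Finset.range n ×ˢ Finset.range n).powerset))
  intro A hA
  simp only [Finset.coe_powerset, Set.mem_preimage, Set.mem_powerset_iff,
    Finset.coe_subset, Finset.mem_coe]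
  intro p hp
  have := NA_bounds hA p hp
  simp [Finset.mem_product, this.1, this.2]

lemma finite_NS (n : ℕ) : {A | NS n A}.Finite :=
  (finite_NA n).subset (fun _ h => h.1)

lemma finite_sub (n : ℕ) (P : Finset (ℕ × ℕ) → Prop) : {A | NS n A ∧ P A}.Finite :=
  (finite_NS n).subset (fun _ h => h.1)

end NW

namespace NW

/-- endpoints of arcs are pairwise distinct; share an endpoint means same arc -/
lemma eq_of_share {n : ℕ} {A : Finset (ℕ × ℕ)} (h : NA n A) {a b c d : ℕ}
    (h1 : (a, b) ∈ A) (h2 : (c, d) ∈ A) (hsh : a = c ∨ a = d ∨ b = c ∨ b = d) :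
    a = c ∧ b = d := by
  by_cases he : ((a, b) : ℕ × ℕ) = (c, d)
  · simpa [Prod.ext_iff] using he
  · have := h.2.1 _ h1 _ h2 he
    simp only at this
    tauto

/-- no arc endpoint at the center (odd case; trivial for even `n` by parity) -/
lemma center_unmatched {n : ℕ} {A : Finset (ℕ × ℕ)} (h : NS n A) {a b : ℕ}
    (hm : (a, b) ∈ A) : 2 * a + 1 ≠ n ∧ 2 * b + 1 ≠ n := by
  have hb := h.1.1 _ hm
  simp only at hb
  have hmir : (n - 1 - b, n - 1 - a) ∈ A := h.2 _ hm
  constructor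
  · intro hc
    -- a is the center; mirror arc ends at n-1-a = a
    have := eq_of_share h.1 hm hmir (by omega)
    omega
  · intro hc
    have := eq_of_share h.1 hm hmir (by omega)
    omega

/-- an arc spanning the center must be self-symmetric -/
lemma spanning {n : ℕ} {A : Finset (ℕ × ℕ)} (h : NS n A) {a b : ℕ}
    (hm : (a, b) ∈ A) (ha : 2 * a + 1 < n) (hb : n < 2 * b + 1) : a + b = n - 1 := by
  have hbd := h.1.1 _ hm
  simp only at hbd
  have hmir : (n - 1 - b, n - 1 - a) ∈ A := h.2 _ hm
  have hx1 := h.1.2.2 _ hm _ hmir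
  have hx2 := h.1.2.2 _ hmir _ hm
  simp only at hx1 hx2
  by_contra hne
  -- if not self symmetric, the two arcs cross
  omega

def pm (f : ℕ → ℕ) : ℕ × ℕ → ℕ × ℕ := fun p => (f p.1, f p.2)

lemma mem_image_pm {f : ℕ → ℕ} {A : Finset (ℕ × ℕ)} {p : ℕ × ℕ} :
    p ∈ A.image (pm f) ↔ ∃ q ∈ A, f q.1 = p.1 ∧ f q.2 = p.2 := by
  simp [Finset.mem_image, pm, Prod.ext_iff]

/-- generic transfer of the matching conditions along a map monotone on endpoints -/
lemma NA_image {m n : ℕ} {A : Finset (ℕ × ℕ)} (hA : NA m A) (f : ℕ → ℕ)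
    (hgap : ∀ p ∈ A, f p.1 + 2 ≤ f p.2 ∧ f p.2 < n)
    (hmono : ∀ p ∈ A, ∀ q ∈ A, ∀ x y : ℕ, (x = p.1 ∨ x = p.2) → (y = q.1 ∨ y = q.2) →
      (x < y ↔ f x < f y)) :
    NA n (A.image (pm f)) := by
  obtain ⟨hA1, hA2, hA3⟩ := hA
  refine ⟨?_, ?_, ?_⟩
  · intro p hp
    rw [mem_image_pm] at hp
    obtain ⟨q, hq, e1, e2⟩ := hp
    have := hgap q hq
    omega
  · intro p hp q hq hne
    rw [mem_image_pm] at hp hq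
    obtain ⟨u, hu, e1, e2⟩ := hp
    obtain ⟨v, hv, e3, e4⟩ := hq
    have hneuv : u ≠ v := by
      rintro rfl
      apply hne
      rw [Prod.ext_iff]
      constructor <;> omega
    have hd := hA2 u hu v hv hneuv
    have m11 := hmono u hu v hv u.1 v.1 (Or.inl rfl) (Or.inl rfl)
    have m12 := hmono u hu v hv u.1 v.2 (Or.inl rfl) (Or.inr rfl)
    have m21 := hmono u hu v hv u.2 v.1 (Or.inr rfl) (Or.inl rfl)
    have m22 := hmono u hu v hv u.2 v.2 (Or.inr rfl) (Or.inr rfl)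
    have m11' := hmono v hv u hu v.1 u.1 (Or.inl rfl) (Or.inl rfl)
    have m12' := hmono v hv u hu v.2 u.1 (Or.inr rfl) (Or.inl rfl)
    have m21' := hmono v hv u hu v.1 u.2 (Or.inl rfl) (Or.inr rfl)
    have m22' := hmono v hv u hu v.2 u.2 (Or.inr rfl) (Or.inr rfl)
    simp only [ne_eq] at hd ⊢
    omega
  · intro p hp q hq
    rw [mem_image_pm] at hp hq
    obtain ⟨u, hu, e1, e2⟩ := hp
    obtain ⟨v, hv, e3, e4⟩ := hq
    have hx := hA3 u hu v hv
    have m11 := hmono u hu v hv u.1 v.1 (Or.inl rfl) (Or.inl rfl)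
    have m21 := hmono v hv u hu v.1 u.2 (Or.inl rfl) (Or.inr rfl)
    have m22 := hmono u hu v hv u.2 v.2 (Or.inr rfl) (Or.inr rfl)
    omega

/-- symmetric version: additionally needs mirror-equivariance on endpoints -/
lemma NS_image {m n : ℕ} {A : Finset (ℕ × ℕ)} (hA : NS m A) (f : ℕ → ℕ)
    (hgap : ∀ p ∈ A, f p.1 + 2 ≤ f p.2 ∧ f p.2 < n)
    (hmono : ∀ p ∈ A, ∀ q ∈ A, ∀ x y : ℕ, (x = p.1 ∨ x = p.2) → (y = q.1 ∨ y = q.2) →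
      (x < y ↔ f x < f y))
    (hsym : ∀ p ∈ A, ∀ x : ℕ, (x = p.1 ∨ x = p.2) → f (m - 1 - x) = n - 1 - f x) :
    NS n (A.image (pm f)) := by
  refine ⟨NA_image hA.1 f hgap hmono, ?_⟩
  intro p hp
  rw [mem_image_pm] at hp
  obtain ⟨u, hu, e1, e2⟩ := hp
  rw [mem_image_pm]
  refine ⟨(m - 1 - u.2, m - 1 - u.1), hA.2 u hu, ?_, ?_⟩
  · simpa using (hsym u hu u.2 (Or.inr rfl)) ▸ congrArg (n - 1 - ·) e2
  · simpa using (hsym u hu u.1 (Or.inl rfl)) ▸ congrArg (n - 1 - ·) e1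

lemma image_pm_id {f : ℕ → ℕ} {A : Finset (ℕ × ℕ)}
    (hid : ∀ p ∈ A, f p.1 = p.1 ∧ f p.2 = p.2) : A.image (pm f) = A := by
  rw [Finset.image_congr (g := id), Finset.image_id]
  intro p hp
  have := hid p (by simpa using hp)
  simp [pm, Prod.ext_iff, this.1, this.2]

lemma image_pm_pm {f g : ℕ → ℕ} {A : Finset (ℕ × ℕ)} :
    (A.image (pm f)).image (pm g) = A.image (pm (g ∘ f)) := by
  rw [Finset.image_image]
  rfl

end NW

namespace NW

lemma pm_injective {f : ℕ → ℕ} (hf : Function.Injective f) : Function.Injective (pm f) := by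
  rintro ⟨a, b⟩ ⟨c, d⟩ h
  simp only [pm, Prod.ext_iff] at h ⊢
  exact ⟨hf h.1, hf h.2⟩

/-- point-insertion at position `n/2` -/
def up1 (n : ℕ) : ℕ → ℕ := fun x => if x < n / 2 then x else x + 1

def down1 (n : ℕ) : ℕ → ℕ := fun x => if x < n / 2 then x else x - 1

lemma L1_image (n : ℕ) (hn : 2 ≤ n) :
    (fun A => A.image (pm (up1 n))) '' {A | NS (n - 1) A} =
      {B | NS n B ∧ (∀ p ∈ B, p.1 ≠ n / 2 ∧ p.2 ≠ n / 2) ∧ (n / 2 - 1, n / 2 + 1) ∉ B} := by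
  ext B
  simp only [Set.mem_image, Set.mem_setOf_eq]
  constructor
  · rintro ⟨A, hA, rfl⟩
    have hbd := hA.1.1
    refine ⟨?_, ?_, ?_⟩
    · refine NS_image hA (up1 n) ?_ ?_ ?_
      · intro p hp
        have := hbd p hp
        simp only [up1]
        split_ifs <;> omega
      · intro p _ q _ x y _ _
        simp only [up1]
        split_ifs <;> omega
      · intro p hp x hx
        have hb := hbd p hp
        have hc := center_unmatched hA (show (p.1, p.2) ∈ A by simpa using hp)
        simp only [up1]
        split_ifs <;> omega
    · intro p hp
      rw [mem_image_pm] at hp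
      obtain ⟨q, hq, e1, e2⟩ := hp
      simp only [up1] at e1 e2
      constructor <;> [skip; skip] <;> first
        | (rw [← e1]; split_ifs <;> omega)
        | (rw [← e2]; split_ifs <;> omega)
    · intro hc
      rw [mem_image_pm] at hc
      obtain ⟨q, hq, e1, e2⟩ := hc
      have := hbd q hq
      simp only [up1] at e1 e2
      split_ifs at e1 e2 <;> omega
  · rintro ⟨hB, h2, h3⟩
    refine ⟨B.image (pm (down1 n)), ?_, ?_⟩
    · have hbd := hB.1.1
      refine NS_image hB (down1 n) ?_ ?_ ?_
      · intro p hp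
        have hb := hbd p hp
        have he := h2 p hp
        have hne : (p.1, p.2) ≠ (n / 2 - 1, n / 2 + 1) := by
          intro e
          exact h3 (by rw [← e]; simpa using hp)
        simp only [ne_eq, Prod.mk.injEq, not_and] at hne
        simp only [down1]
        split_ifs <;> omega
      · intro p hp q hq x y hx hy
        have hbp := hbd p hp; have hbq := hbd q hq
        have hep := h2 p hp; have heq := h2 q hq
        simp only [down1]
        split_ifs <;> rcases hx with rfl | rfl <;> rcases hy with rfl | rfl <;> omega
      · intro p hp x hx
        have hb := hbd p hp
        have he := h2 p hp
        have hmir : (n - 1 - p.2, n - 1 - p.1) ∈ B := hB.2 p hp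
        have he' := h2 _ hmir
        simp only at he'
        simp only [down1]
        split_ifs <;> rcases hx with rfl | rfl <;> omega
    · rw [image_pm_pm]
      apply image_pm_id
      intro p hp
      have hb := hB.1.1 p hp
      have he := h2 p hp
      simp only [Function.comp, down1, up1]
      constructor <;> (split_ifs <;> omega)

lemma L1_inj (n : ℕ) : Set.InjOn (fun A => A.image (pm (up1 n))) {A | NS (n - 1) A} := by
  have : Function.Injective (up1 n) := by
    intro x y h
    simp only [up1] at h
    split_ifs at h <;> omega
  exact fun A _ B _ h => Finset.image_injective (pm_injective this) h

lemma card_L1 (n : ℕ) (hn : 2 ≤ n) :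
    Set.ncard {B | NS n B ∧ (∀ p ∈ B, p.1 ≠ n / 2 ∧ p.2 ≠ n / 2) ∧ (n / 2 - 1, n / 2 + 1) ∉ B}
      = Set.ncard {A | NS (n - 1) A} := by
  rw [← L1_image n hn]
  exact Set.ncard_image_of_injOn (L1_inj n)

end NW

namespace NW

lemma NA_subset {n : ℕ} {A B : Finset (ℕ × ℕ)} (h : NA n B) (hs : A ⊆ B) : NA n A :=
  ⟨fun p hp => h.1 p (hs hp), fun p hp q hq => h.2.1 p (hs hp) q (hs hq),
   fun p hp q hq => h.2.2 p (hs hp) q (hs hq)⟩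

lemma NS_erase_selfsym {n : ℕ} {B : Finset (ℕ × ℕ)} (h : NS n B) {s : ℕ × ℕ}
    (hself : s.1 + s.2 = n - 1 ∧ s.2 ≤ n - 1) : NS n (B.erase s) := by
  refine ⟨NA_subset h.1 (Finset.erase_subset _ _), ?_⟩
  intro p hp
  rw [Finset.mem_erase] at hp ⊢
  refine ⟨?_, h.2 p hp.2⟩
  intro hc
  apply hp.1
  have hb := h.1.1 p hp.2
  have e1 : n - 1 - p.2 = s.1 := congrArg Prod.fst hc
  have e2 : n - 1 - p.1 = s.2 := congrArg Prod.snd hc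
  have : p.1 = s.1 ∧ p.2 = s.2 := by omega
  exact Prod.ext this.1 this.2

/-- inserting a self-symmetric arc compatible with everything -/
lemma NS_insert {n : ℕ} {B : Finset (ℕ × ℕ)} (hB : NS n B) {s : ℕ × ℕ}
    (hgap : s.1 + 2 ≤ s.2 ∧ s.2 < n) (hself : s.1 + s.2 = n - 1)
    (hdisj : ∀ p ∈ B, p.1 ≠ s.1 ∧ p.1 ≠ s.2 ∧ p.2 ≠ s.1 ∧ p.2 ≠ s.2)
    (hnc1 : ∀ p ∈ B, ¬(p.1 < s.1 ∧ s.1 < p.2 ∧ p.2 < s.2))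
    (hnc2 : ∀ p ∈ B, ¬(s.1 < p.1 ∧ p.1 < s.2 ∧ s.2 < p.2)) :
    NS n (insert s B) := by
  obtain ⟨⟨hb1, hb2, hb3⟩, hb4⟩ := hB
  refine ⟨⟨?_, ?_, ?_⟩, ?_⟩
  · intro p hp
    rcases Finset.mem_insert.1 hp with rfl | hp
    · exact hgap
    · exact hb1 p hp
  · intro p hp q hq hne
    rcases Finset.mem_insert.1 hp with hp' | hp' <;> rcases Finset.mem_insert.1 hq with hq' | hq'
    · exact absurd (hp'.trans hq'.symm) hne
    · subst hp'
      have := hdisj q hq'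
      refine ⟨?_, ?_, ?_, ?_⟩ <;> omega
    · subst hq'
      have := hdisj p hp'
      refine ⟨?_, ?_, ?_, ?_⟩ <;> omega
    · exact hb2 p hp' q hq' hne
  · intro p hp q hq
    rcases Finset.mem_insert.1 hp with hp' | hp' <;> rcases Finset.mem_insert.1 hq with hq' | hq'
    · subst hp'; subst hq'; omega
    · subst hp'
      exact fun hc => hnc2 q hq' ⟨hc.1, hc.2.1, hc.2.2⟩
    · subst hq'
      exact fun hc => hnc1 p hp' ⟨hc.1, hc.2.1, hc.2.2⟩
    · exact hb3 p hp' q hq'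
  · intro p hp
    rcases Finset.mem_insert.1 hp with hp' | hp'
    · subst hp'
      have : (n - 1 - p.2, n - 1 - p.1) = p := by
        have : n - 1 - p.2 = p.1 ∧ n - 1 - p.1 = p.2 := by omega
        exact Prod.ext this.1 this.2
      rw [this]
      exact Finset.mem_insert_self p B
    · exact Finset.mem_insert_of_mem (hb4 p hp')

end NW

namespace NW

def up2 (n : ℕ) : ℕ → ℕ := fun x => if x < n / 2 - 1 then x else x + 2
def down2 (n : ℕ) : ℕ → ℕ := fun x => if x < n / 2 - 1 then x else x - 2

/-- key endpoint facts for a symmetric matching containing the special arc, odd n -/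
lemma L2_avoid {n : ℕ} (hn : 5 ≤ n) (hodd : n % 2 = 1) {B : Finset (ℕ × ℕ)}
    (hB : NS n B) (hs : (n / 2 - 1, n / 2 + 1) ∈ B) :
    ∀ p ∈ B.erase (n / 2 - 1, n / 2 + 1),
      (p.1 < n / 2 - 1 ∨ n / 2 + 1 < p.1) ∧ (p.2 < n / 2 - 1 ∨ n / 2 + 1 < p.2) := by
  intro p hp
  rw [Finset.mem_erase] at hp
  have hb := hB.1.1 p hp.2
  have hc := center_unmatched hB (show (p.1, p.2) ∈ B by simpa using hp.2)
  have hsh : ¬(p.1 = n / 2 - 1 ∨ p.1 = n / 2 + 1 ∨ p.2 = n / 2 - 1 ∨ p.2 = n / 2 + 1) := by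
    intro hor
    have := eq_of_share hB.1 (show (p.1, p.2) ∈ B by simpa using hp.2) hs hor
    apply hp.1
    have : p = (n / 2 - 1, n / 2 + 1) := Prod.ext this.1 this.2
    exact this
  push_neg at hsh
  omega

lemma L2_image (n : ℕ) (hn : 5 ≤ n) (hodd : n % 2 = 1) :
    (fun A => insert (n / 2 - 1, n / 2 + 1) (A.image (pm (up2 n)))) '' {A | NS (n - 2) A} =
      {B | NS n B ∧ (n / 2 - 1, n / 2 + 1) ∈ B} := by
  ext B
  simp only [Set.mem_image, Set.mem_setOf_eq]
  constructor
  · rintro ⟨A, hA, rfl⟩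
    have hbd := hA.1.1
    have himg : NS n (A.image (pm (up2 n))) := by
      refine NS_image hA (up2 n) ?_ ?_ ?_
      · intro p hp
        have := hbd p hp
        simp only [up2]
        split_ifs <;> omega
      · intro p _ q _ x y _ _
        simp only [up2]
        split_ifs <;> omega
      · intro p hp x hx
        have hb := hbd p hp
        have hc := center_unmatched hA (show (p.1, p.2) ∈ A by simpa using hp)
        simp only [up2]
        split_ifs <;> rcases hx with rfl | rfl <;> omega
    have hav : ∀ q ∈ A.image (pm (up2 n)),
        (q.1 < n / 2 - 1 ∨ n / 2 + 1 < q.1) ∧ (q.2 < n / 2 - 1 ∨ n / 2 + 1 < q.2) := by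
      intro q hq
      rw [mem_image_pm] at hq
      obtain ⟨u, hu, e1, e2⟩ := hq
      have hb := hbd u hu
      have hc := center_unmatched hA (show (u.1, u.2) ∈ A by simpa using hu)
      simp only [up2] at e1 e2
      split_ifs at e1 e2 <;> omega
    constructor
    · refine NS_insert himg ⟨by simp; omega, by simp; omega⟩ (by simp; omega) ?_ ?_ ?_
      · intro p hp
        have := hav p hp
        simp only
        omega
      · intro p hp
        have := hav p hp
        simp only
        omega
      · intro p hp
        have := hav p hp
        simp only
        omega
    · exact Finset.mem_insert_self _ _
  · rintro ⟨hB, hs⟩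
    set s : ℕ × ℕ := (n / 2 - 1, n / 2 + 1) with hsdef
    have hE : NS n (B.erase s) := NS_erase_selfsym hB (by simp [hsdef]; omega)
    have hav := L2_avoid hn hodd hB hs
    refine ⟨(B.erase s).image (pm (down2 n)), ?_, ?_⟩
    · refine NS_image hE (down2 n) ?_ ?_ ?_
      · intro p hp
        have hb := hE.1.1 p hp
        have := hav p hp
        simp only [down2]
        split_ifs <;> omega
      · intro p hp q hq x y hx hy
        have h1 := hav p hp; have h2 := hav q hq
        have hb1 := hE.1.1 p hp; have hb2 := hE.1.1 q hq
        simp only [down2]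
        split_ifs <;> rcases hx with rfl | rfl <;> rcases hy with rfl | rfl <;> omega
      · intro p hp x hx
        have h1 := hav p hp
        have hb := hE.1.1 p hp
        have hmir := hE.2 p hp
        have h2 := hav _ hmir
        simp only at h2
        simp only [down2]
        split_ifs <;> rcases hx with rfl | rfl <;> omega
    · rw [image_pm_pm, image_pm_id, Finset.insert_erase hs]
      intro p hp
      have := hav p hp
      have hb := hE.1.1 p hp
      simp only [Function.comp, down2, up2]
      constructor <;> (split_ifs <;> omega)

lemma L2_inj (n : ℕ) (hn : 5 ≤ n) (hodd : n % 2 = 1) :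
    Set.InjOn (fun A => insert (n / 2 - 1, n / 2 + 1) (A.image (pm (up2 n))))
      {A | NS (n - 2) A} := by
  intro A1 h1 A2 h2 he
  simp only at he
  have hrec : ∀ A : Finset (ℕ × ℕ), NS (n - 2) A →
      ((insert (n / 2 - 1, n / 2 + 1) (A.image (pm (up2 n)))).erase
        (n / 2 - 1, n / 2 + 1)).image (pm (down2 n)) = A := by
    intro A hA
    have hnotin : (n / 2 - 1, n / 2 + 1) ∉ A.image (pm (up2 n)) := by
      intro hc
      rw [mem_image_pm] at hc
      obtain ⟨u, hu, e1, e2⟩ := hc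
      have hb := hA.1.1 u hu
      have hc' := center_unmatched hA (show (u.1, u.2) ∈ A by simpa using hu)
      simp only [up2] at e1 e2
      split_ifs at e1 e2 <;> omega
    rw [Finset.erase_insert hnotin, image_pm_pm, image_pm_id]
    intro p hp
    have hb := hA.1.1 p hp
    have hc := center_unmatched hA (show (p.1, p.2) ∈ A by simpa using hp)
    simp only [Function.comp, up2, down2]
    constructor <;> (split_ifs <;> omega)
  rw [← hrec A1 h1, ← hrec A2 h2, he]

lemma card_L2 (n : ℕ) (hn : 5 ≤ n) (hodd : n % 2 = 1) :
    Set.ncard {B | NS n B ∧ (n / 2 - 1, n / 2 + 1) ∈ B} = Set.ncard {A | NS (n - 2) A} := by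
  rw [← L2_image n hn hodd]
  exact Set.ncard_image_of_injOn (L2_inj n hn hodd)

end NW

namespace NW

def mir (t : ℕ) : ℕ × ℕ → ℕ × ℕ := fun p => (2 * t - 1 - p.2, 2 * t - 1 - p.1)

def F5 (t : ℕ) (L : Finset (ℕ × ℕ)) : Finset (ℕ × ℕ) := L ∪ L.image (mir t)

lemma mem_F5 {t : ℕ} {L : Finset (ℕ × ℕ)} {x : ℕ × ℕ} :
    x ∈ F5 t L ↔ x ∈ L ∨ ∃ u ∈ L, (2 * t - 1 - u.2, 2 * t - 1 - u.1) = x := by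
  simp [F5, Finset.mem_union, Finset.mem_image, mir]

lemma L5_image (t : ℕ) :
    (F5 t) '' {L | NA t L} = {N | NS (2 * t) N ∧ ∀ p ∈ N, p.1 + p.2 ≠ 2 * t - 1} := by
  ext N
  simp only [Set.mem_image, Set.mem_setOf_eq]
  constructor
  · rintro ⟨L, hL, rfl⟩
    obtain ⟨hL1, hL2, hL3⟩ := hL
    -- every element of F5 is an L arc (both endpoints < t) or mirrored (both ≥ t)
    have hcl : ∀ x ∈ F5 t L, (x ∈ L ∧ x.1 + 2 ≤ x.2 ∧ x.2 < t) ∨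
        (∃ u ∈ L, (2 * t - 1 - u.2, 2 * t - 1 - u.1) = x ∧ t ≤ x.1 ∧ x.1 + 2 ≤ x.2 ∧
          x.2 < 2 * t) := by
      intro x hx
      rcases mem_F5.1 hx with hx' | ⟨u, hu, hx'⟩
      · exact Or.inl ⟨hx', hL1 x hx'⟩
      · right
        refine ⟨u, hu, hx', ?_⟩
        have := hL1 u hu
        have e1 : x.1 = 2 * t - 1 - u.2 := (congrArg Prod.fst hx').symm
        have e2 : x.2 = 2 * t - 1 - u.1 := (congrArg Prod.snd hx').symm
        omega
    refine ⟨⟨⟨?_, ?_, ?_⟩, ?_⟩, ?_⟩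
    · intro p hp
      rcases hcl p hp with ⟨_, h⟩ | ⟨_, _, _, h⟩ <;> omega
    · intro p hp q hq hne
      rcases hcl p hp with ⟨hpL, hpb⟩ | ⟨u, hu, hue, hpb⟩ <;>
        rcases hcl q hq with ⟨hqL, hqb⟩ | ⟨v, hv, hve, hqb⟩
      · exact hL2 p hpL q hqL hne
      · refine ⟨?_, ?_, ?_, ?_⟩ <;> omega
      · refine ⟨?_, ?_, ?_, ?_⟩ <;> omega
      · have huv : u ≠ v := by
          rintro rfl
          exact hne (hue.symm.trans hve)
        have hb1 := hL1 u hu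
        have hb2 := hL1 v hv
        have hd := hL2 u hu v hv huv
        have e1 : p.1 = 2 * t - 1 - u.2 := (congrArg Prod.fst hue).symm
        have e2 : p.2 = 2 * t - 1 - u.1 := (congrArg Prod.snd hue).symm
        have e3 : q.1 = 2 * t - 1 - v.2 := (congrArg Prod.fst hve).symm
        have e4 : q.2 = 2 * t - 1 - v.1 := (congrArg Prod.snd hve).symm
        refine ⟨?_, ?_, ?_, ?_⟩ <;> omega
    · intro p hp q hq
      rcases hcl p hp with ⟨hpL, hpb⟩ | ⟨u, hu, hue, hpb⟩ <;>
        rcases hcl q hq with ⟨hqL, hqb⟩ | ⟨v, hv, hve, hqb⟩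
      · exact hL3 p hpL q hqL
      · omega
      · omega
      · have hb1 := hL1 u hu
        have hb2 := hL1 v hv
        have hx1 := hL3 u hu v hv
        have hx2 := hL3 v hv u hu
        have e1 : p.1 = 2 * t - 1 - u.2 := (congrArg Prod.fst hue).symm
        have e2 : p.2 = 2 * t - 1 - u.1 := (congrArg Prod.snd hue).symm
        have e3 : q.1 = 2 * t - 1 - v.2 := (congrArg Prod.fst hve).symm
        have e4 : q.2 = 2 * t - 1 - v.1 := (congrArg Prod.snd hve).symm
        omega
    · intro p hp
      rcases hcl p hp with ⟨hpL, hpb⟩ | ⟨u, hu, hue, hpb⟩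
      · exact mem_F5.2 (Or.inr ⟨p, hpL, rfl⟩)
      · have hb := hL1 u hu
        have e1 : p.1 = 2 * t - 1 - u.2 := (congrArg Prod.fst hue).symm
        have e2 : p.2 = 2 * t - 1 - u.1 := (congrArg Prod.snd hue).symm
        have : (2 * t - 1 - p.2, 2 * t - 1 - p.1) = u := by
          have : 2 * t - 1 - p.2 = u.1 ∧ 2 * t - 1 - p.1 = u.2 := by omega
          exact Prod.ext this.1 this.2
        rw [this]
        exact mem_F5.2 (Or.inl hu)
    · intro p hp
      rcases hcl p hp with ⟨_, hpb⟩ | ⟨_, _, _, hpb⟩ <;> omega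
  · rintro ⟨hN, hnc⟩
    refine ⟨N.filter (fun p => p.2 < t), ?_, ?_⟩
    · refine ⟨?_, ?_, ?_⟩
      · intro p hp
        rw [Finset.mem_filter] at hp
        have := hN.1.1 p hp.1
        exact ⟨this.1, hp.2⟩
      · intro p hp q hq
        rw [Finset.mem_filter] at hp hq
        exact hN.1.2.1 p hp.1 q hq.1
      · intro p hp q hq
        rw [Finset.mem_filter] at hp hq
        exact hN.1.2.2 p hp.1 q hq.1
    · -- F5 of the filtered left part recovers N
      ext x
      rw [mem_F5]
      constructor
      · rintro (hx | ⟨u, hu, hx⟩)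
        · exact (Finset.mem_filter.1 hx).1
        · rw [Finset.mem_filter] at hu
          rw [← hx]
          exact hN.2 u hu.1
      · intro hx
        have hb := hN.1.1 x hx
        by_cases hside : x.2 < t
        · exact Or.inl (Finset.mem_filter.2 ⟨hx, hside⟩)
        · -- x lives in the right half: x.1 ≥ t, else it would span and cross
          have hx1 : t ≤ x.1 := by
            by_contra hc
            have := spanning hN hx (by omega) (by omega)
            exact hnc x hx (by omega)
          right
          refine ⟨(2 * t - 1 - x.2, 2 * t - 1 - x.1),
            Finset.mem_filter.2 ⟨hN.2 x hx, by simp only; omega⟩, ?_⟩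
          · have hmb := hN.1.1 _ (hN.2 x hx)
            simp only at hmb ⊢
            have : 2 * t - 1 - (2 * t - 1 - x.1) = x.1 ∧ 2 * t - 1 - (2 * t - 1 - x.2) = x.2 := by
              omega
            exact Prod.ext this.1 this.2
      -- filter membership side condition
    
lemma L5_inj (t : ℕ) : Set.InjOn (F5 t) {L | NA t L} := by
  intro L1 h1 L2 h2 he
  have hrec : ∀ L : Finset (ℕ × ℕ), NA t L → (F5 t L).filter (fun p => p.2 < t) = L := by
    intro L hL
    ext x
    rw [Finset.mem_filter, mem_F5]
    constructor
    · rintro ⟨hx | ⟨u, hu, hx⟩, hx2⟩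
      · exact hx
      · have := hL.1 u hu
        have e2 : x.2 = 2 * t - 1 - u.1 := (congrArg Prod.snd hx).symm
        omega
    · intro hx
      exact ⟨Or.inl hx, (hL.1 x hx).2⟩
  rw [← hrec L1 h1, ← hrec L2 h2, he]

lemma card_L5 (t : ℕ) :
    Set.ncard {N | NS (2 * t) N ∧ ∀ p ∈ N, p.1 + p.2 ≠ 2 * t - 1} = S t := by
  rw [S_eq, ← L5_image t]
  exact Set.ncard_image_of_injOn (L5_inj t)

end NW

namespace NW

section L3

variable {n : ℕ}

/-- no arc starts at position n/2 - 1 (even n) -/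
lemma noStart {B : Finset (ℕ × ℕ)} (hB : NS n B) (hn : 4 ≤ n) (hev : n % 2 = 0) :
    ∀ q ∈ B, q.1 ≠ n / 2 - 1 := by
  intro q hq hc
  have hb := hB.1.1 q hq
  have := spanning hB (show (q.1, q.2) ∈ B by simpa using hq) (by omega) (by omega)
  omega

/-- no arc ends at position n/2 (even n) -/
lemma noEnd {B : Finset (ℕ × ℕ)} (hB : NS n B) (hn : 4 ≤ n) (hev : n % 2 = 0) :
    ∀ q ∈ B, q.2 ≠ n / 2 := by
  intro q hq hc
  have hb := hB.1.1 q hq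
  have hm : (n - 1 - q.2, n - 1 - q.1) ∈ B := hB.2 q hq
  exact noStart hB hn hev _ hm (by simp; omega)

lemma L3_struct {B : Finset (ℕ × ℕ)} (hB : NS n B) (hn : 4 ≤ n) (hev : n % 2 = 0)
    (hm : ∃ p ∈ B, p.1 = n / 2 ∨ p.2 = n / 2) :
    ∃ i, i + 3 ≤ n / 2 ∧ (i, n / 2 - 1) ∈ B ∧ (n / 2, n - 1 - i) ∈ B := by
  obtain ⟨p, hp, hor⟩ := hm
  rcases hor with h1 | h2
  · have hb := hB.1.1 p hp
    have hmir : (n - 1 - p.2, n - 1 - p.1) ∈ B := hB.2 p hp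
    refine ⟨n - 1 - p.2, by omega, ?_, ?_⟩
    · have : (n - 1 - p.2, n - 1 - p.1) = (n - 1 - p.2, n / 2 - 1) := by
        rw [Prod.mk.injEq]
        omega
      rwa [this] at hmir
    · have : (n / 2, n - 1 - (n - 1 - p.2)) = p := by
        rw [← h1]
        have : n - 1 - (n - 1 - p.2) = p.2 := by omega
        rw [this]
    
      rwa [this]
  · exact absurd h2 (noEnd hB hn hev p hp)

lemma L3_classify {B : Finset (ℕ × ℕ)} (hB : NS n B) (hn : 4 ≤ n) (hev : n % 2 = 0)
    {i : ℕ} (hi : i + 3 ≤ n / 2) (hs : (i, n / 2 - 1) ∈ B) (ht : (n / 2, n - 1 - i) ∈ B) :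
    ∀ p ∈ B, p ≠ (i, n / 2 - 1) → p ≠ (n / 2, n - 1 - i) →
      (p.1 + 2 ≤ p.2 ∧ p.2 < n) ∧
      (p.1 ≤ n / 2 - 2 ∨ n / 2 + 1 ≤ p.1) ∧ (p.2 ≤ n / 2 - 2 ∨ n / 2 + 1 ≤ p.2) ∧
      (p.1 ≠ i ∧ p.2 ≠ i ∧ p.1 ≠ n - 1 - i ∧ p.2 ≠ n - 1 - i) ∧
      (p.1 ≤ n / 2 - 2 → n / 2 + 1 ≤ p.2 → p.1 + p.2 = n - 1 ∧ p.1 < i) := by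
  intro p hp hne1 hne2
  have hb := hB.1.1 p hp
  have hp' : (p.1, p.2) ∈ B := by simpa using hp
  have f1 := noStart hB hn hev p hp
  have f2 := noEnd hB hn hev p hp
  have f3 : p.2 ≠ n / 2 - 1 := by
    intro hc
    exact hne1 (Prod.ext ((eq_of_share hB.1 hp' hs (by omega)).1) (by omega))
  have f4 : p.1 ≠ n / 2 := by
    intro hc
    exact hne2 (Prod.ext (by omega) ((eq_of_share hB.1 hp' ht (by omega)).2))
  have f5 : ¬(p.1 = i ∨ p.1 = n / 2 - 1 ∨ p.2 = i ∨ p.2 = n / 2 - 1) := by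
    intro hor
    have := eq_of_share hB.1 hp' hs hor
    exact hne1 (Prod.ext this.1 this.2)
  have f6 : ¬(p.1 = n / 2 ∨ p.1 = n - 1 - i ∨ p.2 = n / 2 ∨ p.2 = n - 1 - i) := by
    intro hor
    have := eq_of_share hB.1 hp' ht hor
    exact hne2 (Prod.ext this.1 this.2)
  push_neg at f5 f6
  refine ⟨hb, by omega, by omega, by omega, ?_⟩
  intro hl hr
  have hsum := spanning hB hp' (by omega) (by omega)
  have hnc := hB.1.2.2 _ hs _ hp'
  simp only at hnc
  exact ⟨hsum, by omega⟩

/-- erasing an arc together with its mirror preserves symmetry -/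
lemma NS_erase_mirror {B : Finset (ℕ × ℕ)} (hB : NS n B) (s : ℕ × ℕ)
    (hbd : s.2 ≤ n - 1 ∧ s.1 ≤ n - 1) :
    NS n ((B.erase s).erase (n - 1 - s.2, n - 1 - s.1)) := by
  refine ⟨NA_subset hB.1 (((B.erase s).erase_subset _).trans (B.erase_subset _)), ?_⟩
  intro p hp
  rw [Finset.mem_erase, Finset.mem_erase] at hp ⊢
  obtain ⟨hp1, hp2, hp3⟩ := hp
  have hbp := hB.1.1 p hp3
  refine ⟨?_, ?_, hB.2 p hp3⟩
  · intro hc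
    apply hp2
    have e1 : n - 1 - p.2 = n - 1 - s.2 := congrArg Prod.fst hc
    have e2 : n - 1 - p.1 = n - 1 - s.1 := congrArg Prod.snd hc
    exact Prod.ext (by omega) (by omega)
  · intro hc
    apply hp1
    have e1 : n - 1 - p.2 = s.1 := congrArg Prod.fst hc
    have e2 : n - 1 - p.1 = s.2 := congrArg Prod.snd hc
    exact Prod.ext (by omega) (by omega)

/-- inserting a mirror-pair of arcs -/
lemma NS_insert_pair {B : Finset (ℕ × ℕ)} (hB : NS n B) {s t : ℕ × ℕ}
    (hmir : t = (n - 1 - s.2, n - 1 - s.1))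
    (hg1 : s.1 + 2 ≤ s.2 ∧ s.2 < n) (hg2 : t.1 + 2 ≤ t.2 ∧ t.2 < n)
    (hdst : s.1 ≠ t.1 ∧ s.1 ≠ t.2 ∧ s.2 ≠ t.1 ∧ s.2 ≠ t.2)
    (hncst : ¬(s.1 < t.1 ∧ t.1 < s.2 ∧ s.2 < t.2) ∧ ¬(t.1 < s.1 ∧ s.1 < t.2 ∧ t.2 < s.2))
    (hdisj : ∀ p ∈ B, (p.1 ≠ s.1 ∧ p.1 ≠ s.2 ∧ p.2 ≠ s.1 ∧ p.2 ≠ s.2) ∧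
      (p.1 ≠ t.1 ∧ p.1 ≠ t.2 ∧ p.2 ≠ t.1 ∧ p.2 ≠ t.2))
    (hnc : ∀ p ∈ B, (¬(p.1 < s.1 ∧ s.1 < p.2 ∧ p.2 < s.2) ∧ ¬(s.1 < p.1 ∧ p.1 < s.2 ∧ s.2 < p.2)) ∧
      (¬(p.1 < t.1 ∧ t.1 < p.2 ∧ p.2 < t.2) ∧ ¬(t.1 < p.1 ∧ p.1 < t.2 ∧ t.2 < p.2))) :
    NS n (insert s (insert t B)) := by
  obtain ⟨⟨hb1, hb2, hb3⟩, hb4⟩ := hB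
  have hts : s = (n - 1 - t.2, n - 1 - t.1) := by
    rw [hmir]
    simp only
    exact Prod.ext (by omega) (by omega)
  have memcase : ∀ p : ℕ × ℕ, p ∈ insert s (insert t B) → p = s ∨ p = t ∨ p ∈ B := by
    intro p hp
    rcases Finset.mem_insert.1 hp with h | h
    · exact Or.inl h
    · rcases Finset.mem_insert.1 h with h' | h'
      · exact Or.inr (Or.inl h')
      · exact Or.inr (Or.inr h')
  refine ⟨⟨?_, ?_, ?_⟩, ?_⟩
  · intro p hp
    rcases memcase p hp with rfl | rfl | h
    · exact hg1
    · exact hg2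
    · exact hb1 p h
  · intro p hp q hq hne
    rcases memcase p hp with hp' | hp' | hp' <;> rcases memcase q hq with hq' | hq' | hq'
    · exact absurd (hp'.trans hq'.symm) hne
    · subst hp'; subst hq'; exact ⟨hdst.1, hdst.2.1, hdst.2.2.1, hdst.2.2.2⟩
    · subst hp'
      have := (hdisj q hq').1
      refine ⟨?_, ?_, ?_, ?_⟩ <;> omega
    · subst hp'; subst hq'
      refine ⟨?_, ?_, ?_, ?_⟩ <;> omega
    · exact absurd (hp'.trans hq'.symm) hne
    · subst hp'
      have := (hdisj q hq').2
      refine ⟨?_, ?_, ?_, ?_⟩ <;> omega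
    · subst hq'
      have := (hdisj p hp').1
      refine ⟨?_, ?_, ?_, ?_⟩ <;> omega
    · subst hq'
      have := (hdisj p hp').2
      refine ⟨?_, ?_, ?_, ?_⟩ <;> omega
    · exact hb2 p hp' q hq' hne
  · intro p hp q hq
    rcases memcase p hp with hp' | hp' | hp' <;> rcases memcase q hq with hq' | hq' | hq'
    · subst hp'; subst hq'; omega
    · subst hp'; subst hq'; exact hncst.1
    · subst hp'
      exact fun hc => ((hnc q hq').1).2 ⟨hc.1, hc.2.1, hc.2.2⟩
    · subst hp'; subst hq'; exact hncst.2
    · subst hp'; subst hq'; omega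
    · subst hp'
      exact fun hc => ((hnc q hq').2).2 ⟨hc.1, hc.2.1, hc.2.2⟩
    · subst hq'
      exact fun hc => ((hnc p hp').1).1 ⟨hc.1, hc.2.1, hc.2.2⟩
    · subst hq'
      exact fun hc => ((hnc p hp').2).1 ⟨hc.1, hc.2.1, hc.2.2⟩
    · exact hb3 p hp' q hq'
  · intro p hp
    rcases memcase p hp with hp' | hp' | hp'
    · subst hp'
      rw [← hmir]
      exact Finset.mem_insert_of_mem (Finset.mem_insert_self t _)
    · subst hp'
      rw [← hts]
      exact Finset.mem_insert_self s _
    · exact Finset.mem_insert_of_mem (Finset.mem_insert_of_mem (hb4 p hp'))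

end L3
end NW

namespace NW

section L3core

variable {n : ℕ}

/-- contraction map for the even case -/
def psi (n : ℕ) : ℕ × ℕ → ℕ × ℕ := fun p =>
  if p.2 = n / 2 - 1 then (p.1, n - 3 - p.1)
  else if p.1 = n / 2 then (n - 1 - p.2, p.2 - 2)
  else (down2 n p.1, down2 n p.2)

lemma psi_pair (n a b : ℕ) : psi n (a, b) =
    if b = n / 2 - 1 then (a, n - 3 - a)
    else if a = n / 2 then (n - 1 - b, b - 2) else (down2 n a, down2 n b) := rfl

/-- decomposition of the image of the contraction -/
lemma G3_eq {B : Finset (ℕ × ℕ)} (hB : NS n B) (hn : 4 ≤ n) (hev : n % 2 = 0)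
    {i : ℕ} (hi : i + 3 ≤ n / 2) (hs : (i, n / 2 - 1) ∈ B) (ht : (n / 2, n - 1 - i) ∈ B) :
    B.image (psi n) =
      insert (i, n - 3 - i)
        (((B.erase (i, n / 2 - 1)).erase (n / 2, n - 1 - i)).image (pm (down2 n))) := by
  have hcl := L3_classify hB hn hev hi hs ht
  ext x
  simp only [Finset.mem_insert, Finset.mem_image, Finset.mem_erase]
  constructor
  · rintro ⟨p, hp, rfl⟩
    by_cases h1 : p = (i, n / 2 - 1)
    · subst h1
      left
      rw [psi_pair, if_pos rfl]
    · by_cases h2 : p = (n / 2, n - 1 - i)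
      · subst h2
        left
        rw [psi_pair, if_neg (by omega), if_pos rfl, Prod.mk.injEq]
        omega
      · right
        have hc := hcl p hp h1 h2
        refine ⟨p, ⟨⟨h2, h1, hp⟩, ?_⟩⟩
        simp only [psi]
        rw [if_neg (by omega), if_neg (by omega)]
        rfl
  · rintro (rfl | ⟨p, ⟨⟨h2, h1, hp⟩, rfl⟩⟩)
    · refine ⟨(i, n / 2 - 1), hs, ?_⟩
      rw [psi_pair, if_pos rfl]
    · refine ⟨p, hp, ?_⟩
      have hc := hcl p hp h1 h2
      simp only [psi]
      rw [if_neg (by omega), if_neg (by omega)]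
      rfl

/-- the image of a symmetric matching with n/2 matched is a small symmetric matching
with a crossing arc -/
lemma L3_forward {B : Finset (ℕ × ℕ)} (hB : NS n B) (hn : 4 ≤ n) (hev : n % 2 = 0)
    {i : ℕ} (hi : i + 3 ≤ n / 2) (hs : (i, n / 2 - 1) ∈ B) (ht : (n / 2, n - 1 - i) ∈ B) :
    NS (n - 2) (B.image (psi n)) ∧ (i, n - 3 - i) ∈ B.image (psi n) ∧
      (∀ p ∈ B.image (psi n), p.1 + p.2 = n - 3 → p.1 ≤ i) := by
  have hcl := L3_classify hB hn hev hi hs ht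
  rw [G3_eq hB hn hev hi hs ht]
  set E := (B.erase (i, n / 2 - 1)).erase (n / 2, n - 1 - i) with hEdef
  have hmemE : ∀ p ∈ E, p ∈ B ∧ p ≠ (i, n / 2 - 1) ∧ p ≠ (n / 2, n - 1 - i) := by
    intro p hp
    rw [hEdef, Finset.mem_erase, Finset.mem_erase] at hp
    exact ⟨hp.2.2, hp.2.1, hp.1⟩
  have hE : NS n E := by
    have := NS_erase_mirror hB (i, n / 2 - 1) (by simp; omega)
    have he : ((n : ℕ) - 1 - (i, n / 2 - 1).2, n - 1 - (i, n / 2 - 1).1) = (n / 2, n - 1 - i) := by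
      rw [Prod.mk.injEq]
      constructor <;> (try simp only) <;> (try omega)
    rwa [he] at this
  have himg : NS (n - 2) (E.image (pm (down2 n))) := by
    refine NS_image hE (down2 n) ?_ ?_ ?_
    · intro p hp
      obtain ⟨hpB, h1, h2⟩ := hmemE p hp
      have hc := hcl p hpB h1 h2
      simp only [down2]
      split_ifs <;> omega
    · intro p hp q hq x y hx hy
      obtain ⟨hpB, hp1, hp2⟩ := hmemE p hp
      obtain ⟨hqB, hq1, hq2⟩ := hmemE q hq
      have hcp := hcl p hpB hp1 hp2
      have hcq := hcl q hqB hq1 hq2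
      simp only [down2]
      split_ifs <;> rcases hx with rfl | rfl <;> rcases hy with rfl | rfl <;> omega
    · intro p hp x hx
      obtain ⟨hpB, hp1, hp2⟩ := hmemE p hp
      have hcp := hcl p hpB hp1 hp2
      have hmirB : (n - 1 - p.2, n - 1 - p.1) ∈ E := hE.2 p hp
      obtain ⟨hmB, hm1, hm2⟩ := hmemE _ hmirB
      have hcm := hcl _ hmB hm1 hm2
      simp only at hcm
      simp only [down2]
      split_ifs <;> rcases hx with rfl | rfl <;> omega
  -- facts about endpoints of image arcs
  have havoid : ∀ y ∈ E.image (pm (down2 n)),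
      (y.1 ≠ i ∧ y.1 ≠ n - 3 - i ∧ y.2 ≠ i ∧ y.2 ≠ n - 3 - i) ∧
      ¬(y.1 < i ∧ i < y.2 ∧ y.2 < n - 3 - i) ∧ ¬(i < y.1 ∧ y.1 < n - 3 - i ∧ n - 3 - i < y.2) ∧
      (y.1 + y.2 = n - 3 → y.1 < i) := by
    intro y hy
    rw [mem_image_pm] at hy
    obtain ⟨p, hp, e1, e2⟩ := hy
    obtain ⟨hpB, hp1, hp2⟩ := hmemE p hp
    have hcp := hcl p hpB hp1 hp2
    have hx1 := hB.1.2.2 p hpB _ hs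
    have hx2 := hB.1.2.2 _ hs p hpB
    have hx3 := hB.1.2.2 p hpB _ ht
    have hx4 := hB.1.2.2 _ ht p hpB
    simp only at hx1 hx2 hx3 hx4
    simp only [down2] at e1 e2
    split_ifs at e1 e2 <;> omega
  constructor
  · refine NS_insert himg ⟨by simp only; omega, by simp only; omega⟩ (by simp only; omega)
      ?_ ?_ ?_
    · intro p hp
      have := (havoid p hp).1
      simp only
      omega
    · intro p hp
      have := (havoid p hp).2.1
      simpa only using this
    · intro p hp
      have := (havoid p hp).2.2.1
      simpa only using this
  · constructor
    · exact Finset.mem_insert_self _ _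
    · intro p hp hsum
      rcases Finset.mem_insert.1 hp with hp' | hp'
      · subst hp'
        simp
      · have h4 := (havoid p hp').2.2.2 hsum
        omega

end L3core
end NW

namespace NW

section L3rest

variable {n : ℕ}

lemma L3_recover {B : Finset (ℕ × ℕ)} (hB : NS n B) (hn : 4 ≤ n) (hev : n % 2 = 0)
    {i : ℕ} (hi : i + 3 ≤ n / 2) (hs : (i, n / 2 - 1) ∈ B) (ht : (n / 2, n - 1 - i) ∈ B) :
    insert (i, n / 2 - 1) (insert (n / 2, n - 1 - i)
      (((B.image (psi n)).erase (i, n - 3 - i)).image (pm (up2 n)))) = B := by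
  have hcl := L3_classify hB hn hev hi hs ht
  rw [G3_eq hB hn hev hi hs ht]
  set E := (B.erase (i, n / 2 - 1)).erase (n / 2, n - 1 - i) with hEdef
  have hmemE : ∀ p ∈ E, p ∈ B ∧ p ≠ (i, n / 2 - 1) ∧ p ≠ (n / 2, n - 1 - i) := by
    intro p hp
    rw [hEdef, Finset.mem_erase, Finset.mem_erase] at hp
    exact ⟨hp.2.2, hp.2.1, hp.1⟩
  have hnotin : (i, n - 3 - i) ∉ E.image (pm (down2 n)) := by
    intro hc
    rw [mem_image_pm] at hc
    obtain ⟨p, hp, e1, e2⟩ := hc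
    obtain ⟨hpB, h1, h2⟩ := hmemE p hp
    have hc' := hcl p hpB h1 h2
    simp only [down2] at e1 e2
    split_ifs at e1 e2 <;> omega
  rw [Finset.erase_insert hnotin, image_pm_pm]
  have hid : E.image (pm (up2 n ∘ down2 n)) = E := by
    apply image_pm_id
    intro p hp
    obtain ⟨hpB, h1, h2⟩ := hmemE p hp
    have hc := hcl p hpB h1 h2
    simp only [Function.comp, up2, down2]
    constructor <;> (split_ifs <;> omega)
  rw [hid, hEdef]
  rw [Finset.insert_erase (Finset.mem_erase.2 ⟨?_, ht⟩), Finset.insert_erase hs]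
  intro hc
  have := congrArg Prod.fst hc
  simp only at this
  omega

lemma L3_inj (hn : 4 ≤ n) (hev : n % 2 = 0) :
    Set.InjOn (fun B => B.image (psi n))
      {B | NS n B ∧ ∃ p ∈ B, p.1 = n / 2 ∨ p.2 = n / 2} := by
  rintro B1 ⟨h1, m1⟩ B2 ⟨h2, m2⟩ he
  simp only at he
  obtain ⟨i1, hi1, hs1, ht1⟩ := L3_struct h1 hn hev m1
  obtain ⟨i2, hi2, hs2, ht2⟩ := L3_struct h2 hn hev m2
  obtain ⟨-, hm1, hx1⟩ := L3_forward h1 hn hev hi1 hs1 ht1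
  obtain ⟨-, hm2, hx2⟩ := L3_forward h2 hn hev hi2 hs2 ht2
  have hieq : i1 = i2 := by
    have a1 : i1 ≤ i2 := hx2 _ (he ▸ hm1) (by omega)
    have a2 : i2 ≤ i1 := hx1 _ (he.symm ▸ hm2) (by omega)
    omega
  subst hieq
  rw [← L3_recover h1 hn hev hi1 hs1 ht1, ← L3_recover h2 hn hev hi2 hs2 ht2, he]

lemma L3_image (hn : 4 ≤ n) (hev : n % 2 = 0) :
    (fun B => B.image (psi n)) '' {B | NS n B ∧ ∃ p ∈ B, p.1 = n / 2 ∨ p.2 = n / 2} =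
      {N | NS (n - 2) N ∧ ∃ p ∈ N, p.1 + p.2 = n - 3} := by
  ext N
  simp only [Set.mem_image, Set.mem_setOf_eq]
  constructor
  · rintro ⟨B, ⟨hB, hm⟩, rfl⟩
    obtain ⟨i, hi, hs, ht⟩ := L3_struct hB hn hev hm
    obtain ⟨hNS, hmem, -⟩ := L3_forward hB hn hev hi hs ht
    exact ⟨hNS, ⟨(i, n - 3 - i), hmem, by simp only; omega⟩⟩
  · rintro ⟨hN, p, hp, hsum⟩
    have hbp := hN.1.1 p hp
    -- extract the innermost crossing arc
    have hC : ((N.filter (fun q => q.1 + q.2 = n - 3)).image Prod.fst).Nonempty :=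
      ⟨p.1, Finset.mem_image_of_mem _ (Finset.mem_filter.2 ⟨hp, hsum⟩)⟩
    set iS : ℕ := Finset.max' _ hC with hiSdef
    have hmm := Finset.max'_mem _ hC
    rw [Finset.mem_image] at hmm
    obtain ⟨p0, hp0, hp0e⟩ := hmm
    rw [Finset.mem_filter] at hp0
    have hcr : (iS, n - 3 - iS) ∈ N := by
      obtain ⟨hp01, hp02⟩ := hp0
      have : p0 = (iS, n - 3 - iS) := Prod.ext hp0e (by omega)
      rwa [this] at hp01
    have hmax : ∀ q ∈ N, q.1 + q.2 = n - 3 → q.1 ≤ iS := by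
      intro q hq hqs
      exact Finset.le_max' _ _ (Finset.mem_image_of_mem _ (Finset.mem_filter.2 ⟨hq, hqs⟩))
    have hbcr := hN.1.1 _ hcr
    simp only at hbcr
    have hiS : iS + 3 ≤ n / 2 := by omega
    set core := N.erase (iS, n - 3 - iS) with hcoredef
    have hcore : NS (n - 2) core := NS_erase_selfsym hN (by simp only; omega)
    have hmemC : ∀ q ∈ core, q ∈ N ∧ q ≠ (iS, n - 3 - iS) := by
      intro q hq
      rw [hcoredef, Finset.mem_erase] at hq
      exact ⟨hq.2, hq.1⟩
    have hclN : ∀ q ∈ core, (q.1 + 2 ≤ q.2 ∧ q.2 < n - 2) ∧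
        (q.1 ≠ iS ∧ q.2 ≠ iS ∧ q.1 ≠ n - 3 - iS ∧ q.2 ≠ n - 3 - iS) ∧
        (q.1 ≤ n / 2 - 2 → n / 2 - 1 ≤ q.2 → q.1 + q.2 = n - 3 ∧ q.1 < iS) := by
      intro q hq
      obtain ⟨hqN, hqne⟩ := hmemC q hq
      have hbq := hN.1.1 q hqN
      have hq' : (q.1, q.2) ∈ N := by simpa using hqN
      have hsh : ¬(q.1 = iS ∨ q.1 = n - 3 - iS ∨ q.2 = iS ∨ q.2 = n - 3 - iS) := by
        intro hor
        have := eq_of_share hN.1 hq' hcr hor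
        exact hqne (Prod.ext this.1 this.2)
      push_neg at hsh
      refine ⟨hbq, by omega, ?_⟩
      intro hl hr
      have := spanning hN hq' (by omega) (by omega)
      have := hmax q hqN this
      omega
    have himg : NS n (core.image (pm (up2 n))) := by
      refine NS_image hcore (up2 n) ?_ ?_ ?_
      · intro q hq
        have := (hclN q hq).1
        simp only [up2]
        split_ifs <;> omega
      · intro q _ q' _ x y _ _
        simp only [up2]
        split_ifs <;> omega
      · intro q hq x hx
        have := (hclN q hq).1
        simp only [up2]
        split_ifs <;> rcases hx with rfl | rfl <;> omega
    set X := core.image (pm (up2 n)) with hXdef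
    have hXfacts : ∀ y ∈ X,
        ((y.1 ≠ iS ∧ y.1 ≠ n / 2 - 1 ∧ y.2 ≠ iS ∧ y.2 ≠ n / 2 - 1) ∧
         (y.1 ≠ n / 2 ∧ y.1 ≠ n - 1 - iS ∧ y.2 ≠ n / 2 ∧ y.2 ≠ n - 1 - iS)) ∧
        ((¬(y.1 < iS ∧ iS < y.2 ∧ y.2 < n / 2 - 1) ∧
          ¬(iS < y.1 ∧ y.1 < n / 2 - 1 ∧ n / 2 - 1 < y.2)) ∧
         (¬(y.1 < n / 2 ∧ n / 2 < y.2 ∧ y.2 < n - 1 - iS) ∧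
          ¬(n / 2 < y.1 ∧ y.1 < n - 1 - iS ∧ n - 1 - iS < y.2))) := by
      intro y hy
      rw [hXdef, mem_image_pm] at hy
      obtain ⟨q, hq, e1, e2⟩ := hy
      obtain ⟨hqN, hqne⟩ := hmemC q hq
      have hcq := hclN q hq
      have hq' : (q.1, q.2) ∈ N := by simpa using hqN
      have hz1 := hN.1.2.2 _ hq' _ hcr
      have hz2 := hN.1.2.2 _ hcr _ hq'
      simp only at hz1 hz2
      simp only [up2] at e1 e2
      split_ifs at e1 e2 <;> omega
    have hB : NS n (insert (iS, n / 2 - 1) (insert (n / 2, n - 1 - iS) X)) := by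
      refine NS_insert_pair himg ?_ ⟨by simp only; omega, by simp only; omega⟩
        ⟨by simp only; omega, by simp only; omega⟩ ?_ ?_ ?_ ?_
      · rw [Prod.mk.injEq]
        constructor <;> (try simp only) <;> (try omega)
      · refine ⟨?_, ?_, ?_, ?_⟩ <;> (try simp only) <;> (try omega)
      · constructor <;> (simp only; omega)
      · intro y hy
        exact (hXfacts y hy).1
      · intro y hy
        exact (hXfacts y hy).2
    refine ⟨insert (iS, n / 2 - 1) (insert (n / 2, n - 1 - iS) X), ⟨hB, ?_⟩, ?_⟩
    · exact ⟨(n / 2, n - 1 - iS),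
        Finset.mem_insert_of_mem (Finset.mem_insert_self _ _), Or.inl rfl⟩
    · -- applying the contraction gives back N
      have hsB : (iS, n / 2 - 1) ∈ insert (iS, n / 2 - 1) (insert (n / 2, n - 1 - iS) X) :=
        Finset.mem_insert_self _ _
      have htB : (n / 2, n - 1 - iS) ∈ insert (iS, n / 2 - 1) (insert (n / 2, n - 1 - iS) X) :=
        Finset.mem_insert_of_mem (Finset.mem_insert_self _ _)
      rw [G3_eq hB hn hev hiS hsB htB]
      have hXnos : (iS, n / 2 - 1) ∉ insert (n / 2, n - 1 - iS) X := by
        rw [Finset.mem_insert]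
        rintro (hc | hc)
        · have := congrArg Prod.fst hc
          simp only at this
          omega
        · rw [hXdef, mem_image_pm] at hc
          obtain ⟨q, hq, e1, e2⟩ := hc
          have := (hclN q hq).1
          simp only [up2] at e1 e2
          split_ifs at e1 e2 <;> omega
      have hXnot : (n / 2, n - 1 - iS) ∉ X := by
        intro hc
        rw [hXdef, mem_image_pm] at hc
        obtain ⟨q, hq, e1, e2⟩ := hc
        have := (hclN q hq).1
        simp only [up2] at e1 e2
        split_ifs at e1 e2 <;> omega
      rw [Finset.erase_insert hXnos, Finset.erase_insert hXnot, hXdef, image_pm_pm]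
      have hid : core.image (pm (down2 n ∘ up2 n)) = core := by
        apply image_pm_id
        intro q hq
        simp only [Function.comp, up2, down2]
        constructor <;> (split_ifs <;> omega)
      rw [hid, hcoredef, Finset.insert_erase hcr]

lemma card_L3 (hn : 4 ≤ n) (hev : n % 2 = 0) :
    Set.ncard {B | NS n B ∧ ∃ p ∈ B, p.1 = n / 2 ∨ p.2 = n / 2} =
      Set.ncard {N | NS (n - 2) N ∧ ∃ p ∈ N, p.1 + p.2 = n - 3} := by
  rw [← L3_image hn hev]
  exact (Set.ncard_image_of_injOn (L3_inj hn hev)).symm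

end L3rest
end NW

namespace NW

lemma ncard_partition (n : ℕ) (Q : Finset (ℕ × ℕ) → Prop) :
    Set.ncard {A | NS n A} = Set.ncard {A | NS n A ∧ Q A} + Set.ncard {A | NS n A ∧ ¬Q A} := by
  rw [← Set.ncard_union_eq ?_ (finite_sub n Q) (finite_sub n (fun A => ¬ Q A))]
  · congr 1
    ext A
    simp only [Set.mem_setOf_eq, Set.mem_union]
    tauto
  · rw [Set.disjoint_left]
    rintro A ⟨h1, h2⟩ ⟨h3, h4⟩
    exact h4 h2

/-- odd recurrence -/
lemma RecA (n : ℕ) (hn : 5 ≤ n) (hodd : n % 2 = 1) : R n = R (n - 1) + R (n - 2) := by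
  have e1 : Set.ncard {A | NS n A ∧ (n / 2 - 1, n / 2 + 1) ∈ A} =
      Set.ncard {A | NS (n - 2) A} := card_L2 n hn hodd
  have e2 : Set.ncard {A | NS n A ∧ ¬(n / 2 - 1, n / 2 + 1) ∈ A} =
      Set.ncard {A | NS (n - 1) A} := by
    rw [← card_L1 n (by omega)]
    congr 1
    ext B
    simp only [Set.mem_setOf_eq]
    constructor
    · rintro ⟨hB, h2⟩
      refine ⟨hB, ?_, h2⟩
      intro p hp
      have := center_unmatched hB (show (p.1, p.2) ∈ B by simpa using hp)
      omega
    · rintro ⟨hB, h2, h3⟩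
      exact ⟨hB, h3⟩
  rw [R_eq n, R_eq (n - 1), R_eq (n - 2),
    ncard_partition n (fun B => (n / 2 - 1, n / 2 + 1) ∈ B)]
  omega

/-- even recurrence -/
lemma RecB (n : ℕ) (hn : 4 ≤ n) (hev : n % 2 = 0) :
    R n + S (n / 2 - 1) = R (n - 1) + R (n - 2) := by
  have key1 : R n = Set.ncard {B | NS n B ∧ ∃ p ∈ B, p.1 = n / 2 ∨ p.2 = n / 2} + R (n - 1) := by
    rw [R_eq n, R_eq (n - 1), ncard_partition n (fun B => ∃ p ∈ B, p.1 = n / 2 ∨ p.2 = n / 2)]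
    congr 1
    rw [← card_L1 n (by omega)]
    congr 1
    ext B
    simp only [Set.mem_setOf_eq]
    constructor
    · rintro ⟨hB, h2⟩
      push_neg at h2
      have hnp : ∀ p ∈ B, p.1 ≠ n / 2 ∧ p.2 ≠ n / 2 := by
        intro p hp
        have := h2 p hp
        omega
      refine ⟨hB, hnp, ?_⟩
      intro hc
      have hmir := hB.2 _ hc
      simp only at hmir
      have := (hnp _ hmir).2
      omega
    · rintro ⟨hB, h2, h3⟩
      refine ⟨hB, ?_⟩
      intro ⟨p, hp, hor⟩
      have := h2 p hp
      omega
  have key2 : R (n - 2) = Set.ncard {B | NS n B ∧ ∃ p ∈ B, p.1 = n / 2 ∨ p.2 = n / 2} +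
      S (n / 2 - 1) := by
    rw [R_eq (n - 2), card_L3 hn hev,
      ncard_partition (n - 2) (fun N => ∃ p ∈ N, p.1 + p.2 = n - 3)]
    congr 1
    have := card_L5 (n / 2 - 1)
    rw [show 2 * (n / 2 - 1) = n - 2 by omega] at this
    rw [← this]
    congr 1
    ext N
    simp only [Set.mem_setOf_eq]
    constructor
    · rintro ⟨hN, h2⟩
      push_neg at h2
      refine ⟨hN, ?_⟩
      intro p hp
      have := h2 p hp
      omega
    · rintro ⟨hN, h2⟩
      refine ⟨hN, ?_⟩
      intro ⟨p, hp, hs⟩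
      exact h2 p hp hs
  omega

end NW

namespace NW

lemma S1 : S 1 = 1 := by
  rw [S_eq]
  have : {A : Finset (ℕ × ℕ) | NA 1 A} = {∅} := by
    ext A
    simp only [Set.mem_setOf_eq, Set.mem_singleton_iff]
    constructor
    · intro hA
      rw [Finset.eq_empty_iff_forall_notMem]
      intro p hp
      have := hA.1 p hp
      omega
    · rintro rfl
      exact ⟨by simp, by simp, by simp⟩
  rw [this, Set.ncard_singleton]

lemma R2 : R 2 = 1 := by
  rw [R_eq]
  have : {A : Finset (ℕ × ℕ) | NS 2 A} = {∅} := by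
    ext A
    simp only [Set.mem_setOf_eq, Set.mem_singleton_iff]
    constructor
    · intro hA
      rw [Finset.eq_empty_iff_forall_notMem]
      intro p hp
      have := hA.1.1 p hp
      omega
    · rintro rfl
      exact ⟨⟨by simp, by simp, by simp⟩, by simp⟩
  rw [this, Set.ncard_singleton]

lemma R3 : R 3 = 2 := by
  rw [R_eq]
  have : {A : Finset (ℕ × ℕ) | NS 3 A} = {∅, {(0, 2)}} := by
    ext A
    simp only [Set.mem_setOf_eq, Set.mem_insert_iff, Set.mem_singleton_iff]
    constructor
    · intro hA
      rw [← Finset.subset_singleton_iff]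
      intro p hp
      have := hA.1.1 p hp
      have hp1 : p = (0, 2) := by
        rw [Prod.ext_iff]
        omega
      simpa [hp1]
    · rintro (rfl | rfl)
      · exact ⟨⟨by simp, by simp, by simp⟩, by simp⟩
      · refine ⟨⟨?_, ?_, ?_⟩, ?_⟩
        · intro p hp
          rw [Finset.mem_singleton] at hp
          subst hp
          simp
        · intro p hp q hq hne
          rw [Finset.mem_singleton] at hp hq
          exact absurd (hp.trans hq.symm) hne
        · intro p hp q hq
          rw [Finset.mem_singleton] at hp hq
          subst hp; subst hq
          simp
        · intro p hp
          rw [Finset.mem_singleton] at hp ⊢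
          subst hp
          rfl
  rw [this, Set.ncard_pair]
  simp only [ne_eq]
  intro hc
  have : (0, 2) ∈ (∅ : Finset (ℕ × ℕ)) := by rw [hc]; simp
  simpa using this

lemma R4 : R 4 = 2 := by
  have := RecB 4 (by norm_num) (by norm_num)
  rw [show (4:ℕ) - 1 = 3 by norm_num, show (4:ℕ) - 2 = 2 by norm_num,
    show (4:ℕ)/2 - 1 = 1 by norm_num, R3, R2, S1] at this
  omega

lemma R5 : R 5 = 4 := by
  have := RecA 5 (by norm_num) (by norm_num)
  rw [show (5:ℕ) - 1 = 4 by norm_num, show (5:ℕ) - 2 = 3 by norm_num, R4, R3] at this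
  omega

end NW

theorem statement4' :
    ∀ n : ℕ, 4 ≤ n →
      R n + ∑ j ∈ Finset.Icc 1 (n / 2 - 1), S j * Nat.fib (n - 1 - 2 * j) = Nat.fib n := by
  intro n
  induction n using Nat.strong_induction_on with
  | _ n ih =>
    intro hn
    by_cases h6 : n < 6
    · -- base cases n = 4, 5
      have : n = 4 ∨ n = 5 := by omega
      rcases this with rfl | rfl
      · rw [show (4:ℕ)/2 - 1 = 1 by norm_num, Finset.Icc_self, Finset.sum_singleton,
          NW.R4, NW.S1, show (4:ℕ) - 1 - 2*1 = 1 by norm_num, Nat.fib_one]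
        decide
      · rw [show (5:ℕ)/2 - 1 = 1 by norm_num, Finset.Icc_self, Finset.sum_singleton,
          NW.R5, NW.S1, show (5:ℕ) - 1 - 2*1 = 2 by norm_num, Nat.fib_two]
        decide
    · push_neg at h6
      have ih1 := ih (n - 1) (by omega) (by omega)
      have ih2 := ih (n - 2) (by omega) (by omega)
      set k := n / 2 - 1 with hk
      have hk2 : 2 ≤ k := by omega
      -- split the top term of the sum over Icc 1 k
      have hsplit : ∀ m : ℕ, ∀ f : ℕ → ℕ, ∑ j ∈ Finset.Icc 1 (m + 1), f j =
          ∑ j ∈ Finset.Icc 1 m, f j + f (m + 1) := by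
        intro m f
        exact Finset.sum_Icc_succ_top (by omega) f
      have hstep : ∑ j ∈ Finset.Icc 1 k, S j * Nat.fib (n - 1 - 2 * j) =
          (∑ j ∈ Finset.Icc 1 (k - 1), S j * Nat.fib (n - 2 - 2 * j)) +
          (∑ j ∈ Finset.Icc 1 (k - 1), S j * Nat.fib (n - 3 - 2 * j)) + S k := by
        rw [show k = (k - 1) + 1 by omega, hsplit]
        rw [← Finset.sum_add_distrib]
        congr 1
        · apply Finset.sum_congr rfl
          intro j hj
          rw [Finset.mem_Icc] at hj
          rw [show n - 1 - 2 * j = (n - 3 - 2 * j) + 2 by omega, Nat.fib_add_two,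
            show n - 3 - 2 * j + 1 = n - 2 - 2 * j by omega, Nat.mul_add]
          omega
        · have : n - 1 - 2 * (k - 1 + 1) = 1 ∨ n - 1 - 2 * (k - 1 + 1) = 2 := by omega
          rcases this with h | h
          · rw [h, Nat.fib_one, Nat.mul_one]
          · rw [h, Nat.fib_two, Nat.mul_one]
      have hfib : Nat.fib n = Nat.fib (n - 1) + Nat.fib (n - 2) := by
        have h := Nat.fib_add_two (n := n - 2)
        rw [show n - 2 + 2 = n by omega, show n - 2 + 1 = n - 1 by omega] at h
        omega
      by_cases hev : n % 2 = 0
      · -- even case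
        have hrec := NW.RecB n (by omega) hev
        have e1 : ∑ j ∈ Finset.Icc 1 ((n - 1) / 2 - 1), S j * Nat.fib (n - 1 - 1 - 2 * j) =
            ∑ j ∈ Finset.Icc 1 (k - 1), S j * Nat.fib (n - 2 - 2 * j) := by
          rw [show (n - 1) / 2 - 1 = k - 1 by omega]
          exact Finset.sum_congr rfl (fun j _ => by rw [show n - 1 - 1 - 2 * j = n - 2 - 2 * j by omega])
        have e2 : ∑ j ∈ Finset.Icc 1 ((n - 2) / 2 - 1), S j * Nat.fib (n - 2 - 1 - 2 * j) =
            ∑ j ∈ Finset.Icc 1 (k - 1), S j * Nat.fib (n - 3 - 2 * j) := by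
          rw [show (n - 2) / 2 - 1 = k - 1 by omega]
          exact Finset.sum_congr rfl (fun j _ => by rw [show n - 2 - 1 - 2 * j = n - 3 - 2 * j by omega])
        rw [e1] at ih1
        rw [e2] at ih2
        rw [hstep, hfib]
        have hSk : S (n / 2 - 1) = S k := by rw [hk]
        omega
      · -- odd case
        have hodd : n % 2 = 1 := by omega
        have hrec := NW.RecA n (by omega) hodd
        have etop : S (k - 1 + 1) * Nat.fib (n - 1 - 1 - 2 * (k - 1 + 1)) = S k := by
          rw [show n - 1 - 1 - 2 * (k - 1 + 1) = 1 by omega, Nat.fib_one, Nat.mul_one,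
            show k - 1 + 1 = k by omega]
        have esum : ∑ j ∈ Finset.Icc 1 (k - 1), S j * Nat.fib (n - 1 - 1 - 2 * j) =
            ∑ j ∈ Finset.Icc 1 (k - 1), S j * Nat.fib (n - 2 - 2 * j) :=
          Finset.sum_congr rfl
            (fun j _ => by rw [show n - 1 - 1 - 2 * j = n - 2 - 2 * j by omega])
        have e1 : ∑ j ∈ Finset.Icc 1 ((n - 1) / 2 - 1), S j * Nat.fib (n - 1 - 1 - 2 * j) =
            (∑ j ∈ Finset.Icc 1 (k - 1), S j * Nat.fib (n - 2 - 2 * j)) + S k := by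
          rw [show (n - 1) / 2 - 1 = (k - 1) + 1 by omega, hsplit, esum, etop]
        have e2 : ∑ j ∈ Finset.Icc 1 ((n - 2) / 2 - 1), S j * Nat.fib (n - 2 - 1 - 2 * j) =
            ∑ j ∈ Finset.Icc 1 (k - 1), S j * Nat.fib (n - 3 - 2 * j) := by
          rw [show (n - 2) / 2 - 1 = k - 1 by omega]
          exact Finset.sum_congr rfl (fun j _ => by rw [show n - 2 - 1 - 2 * j = n - 3 - 2 * j by omega])
        rw [e1] at ih1
        rw [e2] at ih2
        rw [hstep, hfib]
        omega

/-- `R n = F n - ∑_{j=1}^{⌊n/2⌋-1} S j * F (n-1-2j)` with `F` the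
Fibonacci numbers (`F 1 = F 2 = 1`, i.e. `Nat.fib`), stated additively to avoid
truncated natural subtraction. -/
theorem statement4 :
    ∀ n : ℕ, 4 ≤ n →
      R n + ∑ j ∈ Finset.Icc 1 (n / 2 - 1), S j * Nat.fib (n - 1 - 2 * j) = Nat.fib n :=
  statement4'
end

section
/- Let P n be the number of partial matchings (crossings allowed) on n linearly ordered points with no arc connecting adjacent points; equivalently, the number of involutions on {1,…,n} with no transposition (i,i+1). Then P 1 = P 2 = 1, P 3 = 2, P 4 = 5, and for n ≥ 5: P n = P (n-1) + (n-1)·P (n-2) - P (n-3) + P (n-4). -/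
/-- The number of partial matchings (crossings allowed) on `n` points with no arc
connecting two adjacent points; equivalently, involutions on `{1,…,n}` with no
transposition `(i,i+1)`. -/
noncomputable def P (n : ℕ) : ℕ :=
  Nat.card {M : Finset (Fin n × Fin n) // IsMatching n M}

namespace S5
open Finset

def MatchN (S : Finset ℕ) (A : Finset (ℕ × ℕ)) : Prop :=
  (∀ p ∈ A, p.1 ∈ S ∧ p.2 ∈ S ∧ p.1 + 2 ≤ p.2) ∧
  ∀ p ∈ A, ∀ q ∈ A, p ≠ q → p.1 ≠ q.1 ∧ p.1 ≠ q.2 ∧ p.2 ≠ q.1 ∧ p.2 ≠ q.2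

instance (S : Finset ℕ) (A : Finset (ℕ × ℕ)) : Decidable (MatchN S A) := by
  unfold MatchN; infer_instance

def matchN (S : Finset ℕ) : Finset (Finset (ℕ × ℕ)) :=
  (S ×ˢ S).powerset.filter (MatchN S)

lemma mem_matchN {S : Finset ℕ} {A : Finset (ℕ × ℕ)} :
    A ∈ matchN S ↔ MatchN S A := by
  constructor
  · exact fun h => (mem_filter.1 h).2
  · intro h
    refine mem_filter.2 ⟨mem_powerset.2 ?_, h⟩
    intro p hp
    rcases h.1 p hp with ⟨h1, h2, _⟩
    exact mem_product.2 ⟨h1, h2⟩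

def c (S : Finset ℕ) : ℕ := (matchN S).card

lemma c_empty : c ∅ = 1 := by
  have : matchN (∅ : Finset ℕ) = {∅} := by
    ext A
    simp only [mem_matchN, mem_singleton]
    constructor
    · intro h
      ext p
      simp only [Finset.notMem_empty, iff_false]
      intro hp
      exact absurd (h.1 p hp).1 (by simp)
    · rintro rfl
      exact ⟨by simp, by simp⟩
  rw [c, this, card_singleton]

lemma matchN_image {S T : Finset ℕ} {φ : ℕ → ℕ} (hST : ∀ x ∈ S, φ x ∈ T)
    (hinj : ∀ x ∈ S, ∀ y ∈ S, φ x = φ y → x = y)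
    {A : Finset (ℕ × ℕ)} (hA : MatchN S A) (harc : ∀ p ∈ A, φ p.1 + 2 ≤ φ p.2) :
    MatchN T (A.image (fun p => (φ p.1, φ p.2))) := by
  constructor
  · intro p' hp'
    rcases mem_image.1 hp' with ⟨p, hp, rfl⟩
    exact ⟨hST _ (hA.1 p hp).1, hST _ (hA.1 p hp).2.1, harc p hp⟩
  · intro p' hp' q' hq' hne
    rcases mem_image.1 hp' with ⟨p, hp, rfl⟩
    rcases mem_image.1 hq' with ⟨q, hq, rfl⟩
    have hpq : p ≠ q := by rintro rfl; exact hne rfl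
    obtain ⟨d1, d2, d3, d4⟩ := hA.2 p hp q hq hpq
    obtain ⟨p1, p2, -⟩ := hA.1 p hp
    obtain ⟨q1, q2, -⟩ := hA.1 q hq
    refine ⟨?_, ?_, ?_, ?_⟩ <;>
      · intro h
        first
        | exact d1 (hinj _ p1 _ q1 h) | exact d2 (hinj _ p1 _ q2 h)
        | exact d3 (hinj _ p2 _ q1 h) | exact d4 (hinj _ p2 _ q2 h)

lemma transfer (S T : Finset ℕ) (X : Finset (ℕ × ℕ)) (φ ψ : ℕ → ℕ)
    (hST : ∀ x ∈ S, φ x ∈ T) (hTS : ∀ y ∈ T, ψ y ∈ S)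
    (hψφ : ∀ x ∈ S, ψ (φ x) = x) (hφψ : ∀ y ∈ T, φ (ψ y) = y)
    (hrel : ∀ x ∈ S, ∀ y ∈ S, (x, y) ∉ X → (x + 2 ≤ y ↔ φ x + 2 ≤ φ y))
    (hX : ∀ p ∈ X, ¬ (φ p.1 + 2 ≤ φ p.2)) :
    ((matchN S).filter (fun A => ∀ p ∈ X, p ∉ A)).card = c T := by
  have hinjS : ∀ x ∈ S, ∀ y ∈ S, φ x = φ y → x = y := by
    intro x hx y hy h
    rw [← hψφ x hx, ← hψφ y hy, h]
  have hinjT : ∀ x ∈ T, ∀ y ∈ T, ψ x = ψ y → x = y := by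
    intro x hx y hy h
    rw [← hφψ x hx, ← hφψ y hy, h]
  refine Finset.card_bij' (fun A _ => A.image (fun p => (φ p.1, φ p.2)))
      (fun B _ => B.image (fun p => (ψ p.1, ψ p.2))) ?hi ?hj ?li ?ri
  case hi =>
    intro A hA
    rw [mem_filter, mem_matchN] at hA
    rw [mem_matchN]
    apply matchN_image hST hinjS hA.1
    intro p hp
    have hpX : (p.1, p.2) ∉ X := by
      intro h
      exact hA.2 _ h (by simpa using hp)
    obtain ⟨h1, h2, h3⟩ := hA.1.1 p hp
    exact (hrel _ h1 _ h2 hpX).1 h3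
  case hj =>
    intro B hB
    rw [mem_matchN] at hB
    rw [mem_filter, mem_matchN]
    constructor
    · apply matchN_image hTS hinjT hB
      intro p hp
      obtain ⟨h1, h2, h3⟩ := hB.1 p hp
      refine (hrel _ (hTS _ h1) _ (hTS _ h2) ?_).2 ?_
      · intro hmem
        exact hX _ hmem (by simpa [hφψ _ h1, hφψ _ h2] using h3)
      · simpa [hφψ _ h1, hφψ _ h2] using h3
    · intro p hpX hpB
      rcases mem_image.1 hpB with ⟨q, hq, hq2⟩
      obtain ⟨h1, h2, h3⟩ := hB.1 q hq
      apply hX _ hpX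
      have e1 : p.1 = ψ q.1 := by rw [← hq2]
      have e2 : p.2 = ψ q.2 := by rw [← hq2]
      rw [e1, e2, hφψ _ h1, hφψ _ h2]
      exact h3
  case li =>
    intro A hA
    have hA : MatchN S A ∧ _ := ⟨mem_matchN.1 (mem_filter.1 hA).1, (mem_filter.1 hA).2⟩
    rw [Finset.image_image]
    have : ∀ p ∈ A, ((fun p : ℕ × ℕ => (ψ p.1, ψ p.2)) ∘ fun p : ℕ × ℕ => (φ p.1, φ p.2)) p = id p := by
      intro p hp
      obtain ⟨h1, h2, -⟩ := hA.1.1 p hp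
      simp [hψφ _ h1, hψφ _ h2]
    rw [Finset.image_congr this, Finset.image_id]
  case ri =>
    intro B hB
    have hB := mem_matchN.1 hB
    rw [Finset.image_image]
    have : ∀ p ∈ B, ((fun p : ℕ × ℕ => (φ p.1, φ p.2)) ∘ fun p : ℕ × ℕ => (ψ p.1, ψ p.2)) p = id p := by
      intro p hp
      obtain ⟨h1, h2, -⟩ := hB.1 p hp
      simp [hφψ _ h1, hφψ _ h2]
    rw [Finset.image_congr this, Finset.image_id]



lemma matchN_mono {S T : Finset ℕ} (hST : S ⊆ T) {A : Finset (ℕ × ℕ)}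
    (hA : MatchN S A) : MatchN T A := by
  refine ⟨fun p hp => ?_, hA.2⟩
  obtain ⟨h1, h2, h3⟩ := hA.1 p hp
  exact ⟨hST h1, hST h2, h3⟩

lemma erase_matchN {S : Finset ℕ} {A : Finset (ℕ × ℕ)} {u v : ℕ}
    (hA : MatchN S A) (hp : (u, v) ∈ A) :
    MatchN ((S.erase u).erase v) (A.erase (u, v)) := by
  constructor
  · intro q hq
    have hq' : q ∈ A := mem_of_mem_erase hq
    have hqne : q ≠ (u, v) := ne_of_mem_erase hq
    obtain ⟨h1, h2, h3⟩ := hA.1 q hq'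
    obtain ⟨d1, d2, d3, d4⟩ := hA.2 q hq' _ hp hqne
    exact ⟨mem_erase.2 ⟨d2, mem_erase.2 ⟨d1, h1⟩⟩, mem_erase.2 ⟨d4, mem_erase.2 ⟨d3, h2⟩⟩, h3⟩
  · intro p hp' q hq' hne
    exact hA.2 p (mem_of_mem_erase hp') q (mem_of_mem_erase hq') hne

lemma insert_matchN {S : Finset ℕ} {A : Finset (ℕ × ℕ)} {u v : ℕ}
    (hA : MatchN ((S.erase u).erase v) A) (hu : u ∈ S) (hv : v ∈ S) (huv : u + 2 ≤ v) :
    MatchN S (insert (u, v) A) := by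
  have hend : ∀ q ∈ A, q.1 ≠ u ∧ q.1 ≠ v ∧ q.2 ≠ u ∧ q.2 ≠ v := by
    intro q hq
    obtain ⟨h1, h2, -⟩ := hA.1 q hq
    rw [mem_erase, mem_erase] at h1 h2
    exact ⟨h1.2.1, h1.1, h2.2.1, h2.1⟩
  constructor
  · intro p hp
    rcases mem_insert.1 hp with rfl | hp'
    · exact ⟨hu, hv, huv⟩
    · obtain ⟨h1, h2, h3⟩ := hA.1 p hp'
      exact ⟨mem_of_mem_erase (mem_of_mem_erase h1), mem_of_mem_erase (mem_of_mem_erase h2), h3⟩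
  · intro p hp q hq hne
    rcases mem_insert.1 hp with rfl | hp' <;> rcases mem_insert.1 hq with rfl | hq'
    · exact absurd rfl hne
    · obtain ⟨e1, e2, e3, e4⟩ := hend q hq'
      exact ⟨e1.symm, e3.symm, e2.symm, e4.symm⟩
    · obtain ⟨e1, e2, e3, e4⟩ := hend p hp'
      exact ⟨e1, e2, e3, e4⟩
    · exact hA.2 p hp' q hq' hne

lemma not_mem_self_insert {S : Finset ℕ} {A : Finset (ℕ × ℕ)} {u v : ℕ}
    (hA : MatchN ((S.erase u).erase v) A) : (u, v) ∉ A := by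
  intro h
  obtain ⟨h1, -, -⟩ := hA.1 _ h
  exact (mem_erase.1 (mem_of_mem_erase h1)).1 rfl

lemma edge_split (S : Finset ℕ) (u v : ℕ) (hu : u ∈ S) (hv : v ∈ S) (huv : u + 2 ≤ v) :
    c S = ((matchN S).filter (fun A => (u, v) ∉ A)).card + c ((S.erase u).erase v) := by
  have key : (matchN S).filter (fun A => (u, v) ∈ A) =
      (matchN ((S.erase u).erase v)).image (insert (u, v)) := by
    ext B
    simp only [mem_filter, mem_image, mem_matchN]
    constructor
    · rintro ⟨hB, hmem⟩
      refine ⟨B.erase (u, v), erase_matchN hB hmem, insert_erase hmem⟩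
    · rintro ⟨A, hA, rfl⟩
      exact ⟨insert_matchN hA hu hv huv, mem_insert_self _ _⟩
  have hinj : Set.InjOn (insert (u, v)) (↑(matchN ((S.erase u).erase v)) : Set (Finset (ℕ × ℕ))) := by
    intro A₁ h₁ A₂ h₂ h
    have n₁ := not_mem_self_insert (mem_matchN.1 h₁)
    have n₂ := not_mem_self_insert (mem_matchN.1 h₂)
    rw [← erase_insert n₁, ← erase_insert n₂, h]
  have := Finset.card_filter_add_card_filter_not
      (s := matchN S) (p := fun A => (u, v) ∈ A)
  rw [c, ← this, key, Finset.card_image_of_injOn hinj, add_comm, c]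

lemma max_split (S : Finset ℕ) (x : ℕ) (hx : x ∈ S) (hmax : ∀ y ∈ S, y ≤ x) :
    c S = c (S.erase x) + ∑ y ∈ S.filter (fun y => y + 2 ≤ x), c ((S.erase x).erase y) := by
  classical
  have decomp : matchN S = matchN (S.erase x) ∪
      (S.filter (fun y => y + 2 ≤ x)).biUnion
        (fun y => (matchN ((S.erase x).erase y)).image (insert (y, x))) := by
    ext A
    simp only [mem_union, mem_biUnion, mem_filter, mem_image, mem_matchN]
    constructor
    · intro hA
      by_cases hcase : ∃ p ∈ A, p.2 = x
      · obtain ⟨p, hp, hpx⟩ := hcase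
        right
        obtain ⟨h1, h2, h3⟩ := hA.1 p hp
        have hpeq : p = (p.1, x) := by rw [← hpx]
        refine ⟨p.1, ⟨h1, by omega⟩, A.erase (p.1, x), ?_, ?_⟩
        · have := erase_matchN (u := p.1) (v := x) hA (hpeq ▸ hp)
          -- goal: MatchN ((S.erase p.1).erase x) vs ((S.erase x).erase p.1): swap
          have hswap : (S.erase p.1).erase x = (S.erase x).erase p.1 := erase_right_comm
          rwa [hswap] at this
        · rw [insert_erase (hpeq ▸ hp)]
      · left
        refine ⟨fun p hp => ?_, hA.2⟩
        obtain ⟨h1, h2, h3⟩ := hA.1 p hp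
        have h2x : p.2 ≠ x := fun h => hcase ⟨p, hp, h⟩
        have h1x : p.1 ≠ x := by
          intro h
          have := hmax p.2 h2
          omega
        exact ⟨mem_erase.2 ⟨h1x, h1⟩, mem_erase.2 ⟨h2x, h2⟩, h3⟩
    · intro hA
      rcases hA with hA | ⟨y, ⟨hyS, hyx⟩, A₀, hA₀, rfl⟩
      · exact matchN_mono (erase_subset _ _) hA
      · have : MatchN ((S.erase y).erase x) A₀ := by
          rwa [erase_right_comm] at hA₀
        exact insert_matchN this hyS hx hyx
  have hdisj : Disjoint (matchN (S.erase x))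
      ((S.filter (fun y => y + 2 ≤ x)).biUnion
        (fun y => (matchN ((S.erase x).erase y)).image (insert (y, x)))) := by
    rw [Finset.disjoint_left]
    intro A hA hA'
    rcases mem_biUnion.1 hA' with ⟨y, -, hAi⟩
    rcases mem_image.1 hAi with ⟨A₀, -, rfl⟩
    have := (mem_matchN.1 hA).1 _ (mem_insert_self (y, x) A₀)
    exact (mem_erase.1 this.2.1).1 rfl
  rw [c, decomp, card_union_of_disjoint hdisj, card_biUnion]
  · congr 1
    apply Finset.sum_congr rfl
    intro y hy
    apply Finset.card_image_of_injOn
    intro A₁ h₁ A₂ h₂ h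
    have swap : ∀ B ∈ matchN ((S.erase x).erase y), (y, x) ∉ B := by
      intro B hB hmem
      have := (mem_matchN.1 hB).1 _ hmem
      exact (mem_erase.1 (mem_of_mem_erase this.2.1)).1 rfl
    rw [← erase_insert (swap _ h₁), ← erase_insert (swap _ h₂), h]
  · intro y hy z hz hyz
    rw [Function.onFun, Finset.disjoint_left]
    intro A hAy hAz
    rcases mem_image.1 hAy with ⟨A₁, h₁, rfl⟩
    rcases mem_image.1 hAz with ⟨A₂, h₂, hins⟩
    have hyxA : (y, x) ∈ insert (z, x) A₂ := hins ▸ mem_insert_self _ _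
    rcases mem_insert.1 hyxA with h | h
    · exact hyz (congrArg Prod.fst h)
    · have := (mem_matchN.1 h₂).1 _ h
      exact (mem_erase.1 (mem_of_mem_erase this.2.1)).1 rfl



def g (a b : ℕ) : ℕ := c (range a ∪ Ico (a + 1) (a + b + 1))

def C (n : ℕ) : ℕ := c (range n)

lemma no_excl (S : Finset ℕ) :
    (matchN S).filter (fun A => ∀ p ∈ (∅ : Finset (ℕ × ℕ)), p ∉ A) = matchN S := by
  apply filter_true_of_mem; simp

lemma g_zero_right (a : ℕ) : g a 0 = C a := by
  rw [g, C, Ico_self, union_empty]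

lemma g_zero_left (b : ℕ) : g 0 b = C b := by
  rw [g, C]
  have := transfer (range b) (range 0 ∪ Ico 1 (b + 1)) ∅ (· + 1) (· - 1)
    (by intro x hx; simp only [mem_range] at hx; simp only [mem_union, mem_range, mem_Ico]; omega)
    (by intro y hy; simp only [mem_union, mem_range, mem_Ico] at hy; simp only [mem_range]; omega)
    (by intro x _; omega)
    (by intro y hy; simp only [mem_union, mem_range, mem_Ico] at hy; omega)
    (by intro x _ y _ _; omega)
    (by simp)
  rw [no_excl] at this
  have hT : range 0 ∪ Ico (0 + 1) (0 + b + 1) = range 0 ∪ Ico 1 (b + 1) := by norm_num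
  rw [hT]
  exact this.symm

lemma g_rec (a b : ℕ) : g (a + 1) (b + 1) = C (a + b + 2) + g a b := by
  have hu : a ∈ range (a + 1) ∪ Ico (a + 2) (a + 1 + (b + 1) + 1) := by
    simp only [mem_union, mem_range, mem_Ico]; omega
  have hv : a + 2 ∈ range (a + 1) ∪ Ico (a + 2) (a + 1 + (b + 1) + 1) := by
    simp only [mem_union, mem_range, mem_Ico]; omega
  have h1 := edge_split _ a (a + 2) hu hv (by omega)
  rw [g, h1]
  congr 1
  · -- filtered part = C (a+b+2)
    have := transfer (range (a + 1) ∪ Ico (a + 2) (a + 1 + (b + 1) + 1)) (range (a + b + 2))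
      {(a, a + 2)} (fun j => if j ≤ a then j else j - 1) (fun j => if j ≤ a then j else j + 1)
      (by intro x hx; simp only [mem_union, mem_range, mem_Ico] at hx
          simp only [mem_range]; first | omega | (split_ifs <;> omega) | (dsimp only; split_ifs <;> omega) | (dsimp only; omega))
      (by intro y hy; simp only [mem_range] at hy
          simp only [mem_union, mem_range, mem_Ico]; first | omega | (split_ifs <;> omega) | (dsimp only; split_ifs <;> omega) | (dsimp only; omega))
      (by intro x hx; simp only [mem_union, mem_range, mem_Ico] at hx
          first | omega | (split_ifs <;> omega) | (dsimp only; split_ifs <;> omega) | (dsimp only; omega))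
      (by intro y hy; simp only [mem_range] at hy
          first | omega | (split_ifs <;> omega) | (dsimp only; split_ifs <;> omega) | (dsimp only; omega))
      (by intro x hx y hy hne
          simp only [mem_union, mem_range, mem_Ico] at hx hy
          simp only [mem_singleton, Prod.mk.injEq, not_and] at hne
          first | omega | (split_ifs <;> omega) | (dsimp only; split_ifs <;> omega) | (dsimp only; omega))
      (by intro p hp; simp only [mem_singleton] at hp; subst hp
          simp only; first | omega | (split_ifs <;> omega) | (dsimp only; split_ifs <;> omega) | (dsimp only; omega))
    show _ = c (range (a + b + 2))
    rw [← this]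
    congr 1
    ext B
    simp only [mem_filter, mem_singleton, forall_eq]
  · -- erased part = g a b
    have hset : ((range (a + 1) ∪ Ico (a + 2) (a + 1 + (b + 1) + 1)).erase a).erase (a + 2) =
        range a ∪ Ico (a + 3) (a + b + 3) := by
      ext j
      simp only [mem_erase, mem_union, mem_range, mem_Ico]
      omega
    rw [hset, g]
    have := transfer (range a ∪ Ico (a + 3) (a + b + 3)) (range a ∪ Ico (a + 1) (a + b + 1)) ∅
      (fun j => if j < a then j else j - 2) (fun j => if j < a then j else j + 2)
      (by intro x hx; simp only [mem_union, mem_range, mem_Ico] at hx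
          simp only [mem_union, mem_range, mem_Ico]; first | omega | (split_ifs <;> omega) | (dsimp only; split_ifs <;> omega) | (dsimp only; omega))
      (by intro y hy; simp only [mem_union, mem_range, mem_Ico] at hy
          simp only [mem_union, mem_range, mem_Ico]; first | omega | (split_ifs <;> omega) | (dsimp only; split_ifs <;> omega) | (dsimp only; omega))
      (by intro x hx; simp only [mem_union, mem_range, mem_Ico] at hx
          first | omega | (split_ifs <;> omega) | (dsimp only; split_ifs <;> omega) | (dsimp only; omega))
      (by intro y hy; simp only [mem_union, mem_range, mem_Ico] at hy
          first | omega | (split_ifs <;> omega) | (dsimp only; split_ifs <;> omega) | (dsimp only; omega))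
      (by intro x hx y hy _
          simp only [mem_union, mem_range, mem_Ico] at hx hy
          first | omega | (split_ifs <;> omega) | (dsimp only; split_ifs <;> omega) | (dsimp only; omega))
      (by simp)
    rw [no_excl] at this
    exact this

lemma step1 (n : ℕ) : C (n + 2) = C (n + 1) + ∑ i ∈ range n, g i (n - i) := by
  have hx : n + 1 ∈ range (n + 2) := by simp
  have h := max_split (range (n + 2)) (n + 1) hx (by intro y hy; simp only [mem_range] at hy; omega)
  have he : (range (n + 2)).erase (n + 1) = range (n + 1) := by
    rw [range_add_one, erase_insert (by simp)]
  have hf : (range (n + 2)).filter (fun y => y + 2 ≤ n + 1) = range n := by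
    ext y; simp only [mem_filter, mem_range]; omega
  rw [C, h, he, hf, ← C]
  congr 1
  apply Finset.sum_congr rfl
  intro i hi
  simp only [mem_range] at hi
  have hset : (range (n + 1)).erase i = range i ∪ Ico (i + 1) (i + (n - i) + 1) := by
    ext j
    simp only [mem_erase, mem_union, mem_range, mem_Ico]
    omega
  rw [hset, g]



def Hs (n : ℕ) : ℕ := ∑ i ∈ range n, g i (n - i)

lemma step1' (n : ℕ) : C (n + 2) = C (n + 1) + Hs n := step1 n

lemma Hs_rec (n : ℕ) : Hs (n + 2) = (n + 2) * C (n + 2) + C n + Hs n := by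
  rw [Hs, Finset.sum_range_succ']
  have hterm : ∀ i ∈ range (n + 1), g (i + 1) (n + 2 - (i + 1)) = C (n + 2) + g i (n - i) := by
    intro i hi
    simp only [mem_range] at hi
    have e1 : n + 2 - (i + 1) = (n - i) + 1 := by omega
    have e2 : i + (n - i) + 2 = n + 2 := by omega
    rw [e1, g_rec, e2]
  rw [Finset.sum_congr rfl hterm, Finset.sum_add_distrib, Finset.sum_const, card_range,
    smul_eq_mul, Finset.sum_range_succ, Nat.sub_self, Nat.sub_zero, g_zero_right, g_zero_left, Hs]
  ring

lemma C_zero : C 0 = 1 := by rw [C, range_zero]; exact c_empty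

lemma C_one : C 1 = 1 := by
  have h := max_split (range 1) 0 (by simp) (by intro y hy; simp only [mem_range] at hy; omega)
  have h1 : (range 1).erase 0 = ∅ := by decide
  have h2 : (range 1).filter (fun y => y + 2 ≤ 0) = ∅ := by decide
  rw [C, h, h1, h2, Finset.sum_empty, c_empty]
  omega

lemma C_two : C 2 = 1 := by
  have := step1' 0
  rw [C_one] at this
  simpa [Hs] using this

set_option maxRecDepth 10000 in
lemma C_three : C 3 = 2 := by
  have := step1 1
  rw [C_two, Finset.sum_range_one] at this
  rw [this, g_zero_left, C_one]

set_option maxRecDepth 10000 in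
lemma C_four : C 4 = 5 := by
  have h := step1 2
  rw [Finset.sum_range_succ, Finset.sum_range_one] at h
  have e1 : g 0 (2 - 0) = C 2 := g_zero_left 2
  have e2 : g 1 (2 - 1) = C 2 + g 0 0 := g_rec 0 0
  have e3 : g 0 0 = C 0 := g_zero_left 0
  have h0 := C_zero
  have h2 := C_two
  have h3 := C_three
  have q1 : C (2 + 2) = C 4 := rfl
  have q2 : C (2 + 1) = C 3 := rfl
  omega

instance (n : ℕ) (M : Finset (Fin n × Fin n)) : Decidable (IsMatching n M) := by
  unfold IsMatching; infer_instance

lemma P_eq (n : ℕ) : P n = C n := by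
  rw [P, Nat.card_eq_fintype_card, Fintype.card_subtype, C]
  show (univ.filter (IsMatching n)).card = (matchN (range n)).card
  apply Finset.card_bij (fun M _ => M.image (fun p => (p.1.val, p.2.val)))
  · intro M hM
    obtain ⟨-, hM⟩ := mem_filter.1 hM
    rw [mem_matchN]
    constructor
    · intro p hp
      rcases mem_image.1 hp with ⟨q, hq, rfl⟩
      exact ⟨mem_range.2 q.1.isLt, mem_range.2 q.2.isLt, hM.1 q hq⟩
    · intro p hp q hq hne
      rcases mem_image.1 hp with ⟨p', hp', rfl⟩
      rcases mem_image.1 hq with ⟨q', hq', rfl⟩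
      have hne' : p' ≠ q' := by rintro rfl; exact hne rfl
      obtain ⟨d1, d2, d3, d4⟩ := hM.2 p' hp' q' hq' hne'
      refine ⟨?_, ?_, ?_, ?_⟩ <;>
        · intro h
          first
          | exact d1 (Fin.val_injective h) | exact d2 (Fin.val_injective h)
          | exact d3 (Fin.val_injective h) | exact d4 (Fin.val_injective h)
  · intro M₁ h₁ M₂ h₂ h
    have hinj : Function.Injective (fun p : Fin n × Fin n => (p.1.val, p.2.val)) := by
      intro p q hpq
      have h1 : p.1 = q.1 := Fin.val_injective (congrArg Prod.fst hpq)
      have h2 : p.2 = q.2 := Fin.val_injective (congrArg Prod.snd hpq)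
      exact Prod.ext h1 h2
    exact Finset.image_injective hinj h
  · intro B hB
    rw [mem_matchN] at hB
    have hbound : ∀ p ∈ B, p.1 < n ∧ p.2 < n := by
      intro p hp
      obtain ⟨h1, h2, -⟩ := hB.1 p hp
      exact ⟨mem_range.1 h1, mem_range.1 h2⟩
    refine ⟨univ.filter (fun q : Fin n × Fin n => (q.1.val, q.2.val) ∈ B), ?_, ?_⟩
    · rw [mem_filter]
      refine ⟨mem_univ _, ?_, ?_⟩
      · intro p hp
        obtain ⟨-, hpB⟩ := mem_filter.1 hp
        exact (hB.1 _ hpB).2.2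
      · intro p hp q hq hne
        obtain ⟨-, hpB⟩ := mem_filter.1 hp
        obtain ⟨-, hqB⟩ := mem_filter.1 hq
        have hne' : (p.1.val, p.2.val) ≠ (q.1.val, q.2.val) := by
          intro h
          apply hne
          have h1 : p.1 = q.1 := Fin.val_injective (congrArg Prod.fst h)
          have h2 : p.2 = q.2 := Fin.val_injective (congrArg Prod.snd h)
          exact Prod.ext h1 h2
        obtain ⟨d1, d2, d3, d4⟩ := hB.2 _ hpB _ hqB hne'
        refine ⟨?_, ?_, ?_, ?_⟩ <;>
          · intro h
            first
            | exact d1 (congrArg Fin.val h) | exact d2 (congrArg Fin.val h)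
            | exact d3 (congrArg Fin.val h) | exact d4 (congrArg Fin.val h)
    · ext p
      simp only [mem_image, mem_filter, mem_univ, true_and]
      constructor
      · rintro ⟨q, hq, rfl⟩
        exact hq
      · intro hp
        obtain ⟨h1, h2⟩ := hbound p hp
        exact ⟨(⟨p.1, h1⟩, ⟨p.2, h2⟩), hp, rfl⟩

theorem main : P 1 = 1 ∧ P 2 = 1 ∧ P 3 = 2 ∧ P 4 = 5 ∧
    ∀ n, 5 ≤ n →
      P n + P (n - 3) = P (n - 1) + (n - 1) * P (n - 2) + P (n - 4) := by
  refine ⟨by rw [P_eq, C_one], by rw [P_eq, C_two], by rw [P_eq, C_three], by rw [P_eq, C_four], ?_⟩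
  intro n hn
  obtain ⟨k, rfl⟩ : ∃ k, n = k + 5 := ⟨n - 5, by omega⟩
  have e1 : k + 5 - 3 = k + 2 := by omega
  have e2 : k + 5 - 1 = k + 4 := by omega
  have e3 : k + 5 - 2 = k + 3 := by omega
  have e4 : k + 5 - 4 = k + 1 := by omega
  rw [e1, e2, e3, e4, P_eq, P_eq, P_eq, P_eq, P_eq]
  have h5 : C (k + 5) = C (k + 4) + Hs (k + 3) := step1' (k + 3)
  have h3 : C (k + 3) = C (k + 2) + Hs (k + 1) := step1' (k + 1)
  have hr : Hs (k + 3) = (k + 3) * C (k + 3) + C (k + 1) + Hs (k + 1) := Hs_rec (k + 1)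
  have hm : (k + 4) * C (k + 3) = (k + 3) * C (k + 3) + C (k + 3) := by ring
  rw [hm]
  generalize (k + 3) * C (k + 3) = X at hr hm ⊢
  omega

end S5

/-- the recurrence `P n = P (n-1) + (n-1)·P (n-2) - P (n-3) + P (n-4)`
for `n ≥ 5`, stated additively to avoid truncated natural subtraction. -/
theorem statement5 :
    P 1 = 1 ∧ P 2 = 1 ∧ P 3 = 2 ∧ P 4 = 5 ∧
    ∀ n, 5 ≤ n →
      P n + P (n - 3) = P (n - 1) + (n - 1) * P (n - 2) + P (n - 4) := S5.main
end

section
/- Let Q n denote the number of partial matchings on n points with no arc between adjacent points (crossings allowed) that are invariant under the reflection i ↦ n+1-i. Then for all n ≥ 1: Q (2n+1) = Q (2n) + Q (2n-1). -/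
/-- The number of symmetric partial matchings (crossings allowed) on `n` points
with no arc between adjacent points. -/
noncomputable def Q (n : ℕ) : ℕ :=
  Nat.card {M : Finset (Fin n × Fin n) // IsMatching n M ∧ SymmMatching n M}

/-!
In a symmetric matching on `2m+3` points (numbered `0, …, 2m+2`) the centre `m+1` is unmatched:
an arc at the centre and its mirror image would share that endpoint. Split these matchings
according to whether they contain the short central arc `(m, m+2)`. If they do not, deleting the
centre gives a symmetric matching on `2m+2` points; the only arc that becomes too short under the
deletion, `(m, m+2) ↦ (m, m+1)`, is exactly the one excluded. If they do, removing that arc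
together with the points `m` and `m+2` gives a symmetric matching on `2m+1` points, whose centre
is the image of the old one and hence again unmatched, so no arc becomes too short.
-/

lemma Finset.natCard_subtype_map {α β : Type*} (f : α ↪ β) {P : Finset α → Prop}
    {R : Finset β → Prop} (hRP : ∀ s, R (s.map f) ↔ P s)
    (hrange : ∀ t, R t → ∀ x ∈ t, x ∈ Set.range f) :
    Nat.card {t // R t} = Nat.card {s // P s} := by
  classical
  refine (Nat.card_congr (Equiv.ofBijective (fun s => ⟨s.1.map f, (hRP _).2 s.2⟩)
    ⟨fun s s' h => Subtype.ext (Finset.map_injective f (congrArg Subtype.val h)), ?_⟩)).symm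
  rintro ⟨t, ht⟩
  have hmap : (t.preimage f f.injective.injOn).map f = t := by
    rw [Finset.map_eq_image, Finset.image_preimage, Finset.filter_true_of_mem (hrange t ht)]
  exact ⟨⟨t.preimage f f.injective.injOn, (hRP _).1 (hmap.symm ▸ ht)⟩, Subtype.ext hmap⟩

lemma Finset.natCard_subtype_mem {α : Type*} [DecidableEq α] (P : Finset α → Prop) (c : α) :
    Nat.card {s // P s ∧ c ∈ s} = Nat.card {t // P (insert c t) ∧ c ∉ t} :=
  Nat.card_congr
    { toFun s := ⟨s.1.erase c, by rw [Finset.insert_erase s.2.2]; exact s.2.1,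
        Finset.notMem_erase c _⟩
      invFun t := ⟨insert c t.1, t.2.1, Finset.mem_insert_self c _⟩
      left_inv s := Subtype.ext (Finset.insert_erase s.2.2)
      right_inv t := Subtype.ext (Finset.erase_insert t.2.2) }

lemma Nat.card_subtype_eq_add {α : Type*} [Finite α] (P Q : α → Prop) :
    Nat.card {x // P x} = Nat.card {x // P x ∧ Q x} + Nat.card {x // P x ∧ ¬Q x} := by
  classical
  rw [← Nat.card_sum]
  exact Nat.card_congr ((Equiv.sumCompl fun x : {x // P x} => Q x).symm.trans
    (Equiv.sumCongr (Equiv.subtypeSubtypeEquivSubtypeInter P Q)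
      (Equiv.subtypeSubtypeEquivSubtypeInter P (¬Q ·))))

lemma Fin.val_succAbove {n : ℕ} (p : Fin (n + 1)) (i : Fin n) :
    (p.succAbove i).val = if i.val < p.val then i.val else i.val + 1 := by
  unfold Fin.succAbove
  split_ifs <;> simp_all [Fin.lt_def]

def ArcsDisjoint {n : ℕ} (p q : Fin n × Fin n) : Prop :=
  p.1 ≠ q.1 ∧ p.1 ≠ q.2 ∧ p.2 ≠ q.1 ∧ p.2 ≠ q.2

lemma ArcsDisjoint.symm {n : ℕ} {p q : Fin n × Fin n} (h : ArcsDisjoint p q) :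
    ArcsDisjoint q p :=
  ⟨h.1.symm, h.2.2.1.symm, h.2.1.symm, h.2.2.2.symm⟩

lemma isMatching_iff_pairwise {n : ℕ} {M : Finset (Fin n × Fin n)} :
    IsMatching n M ↔
      (∀ p ∈ M, p.1.val + 2 ≤ p.2.val) ∧ (M : Set (Fin n × Fin n)).Pairwise ArcsDisjoint :=
  Iff.rfl

lemma IsMatching.rev_ne {n : ℕ} {M : Finset (Fin n × Fin n)} (hM : IsMatching n M)
    (hS : SymmMatching n M) {p : Fin n × Fin n} (hp : p ∈ M) :
    p.1.rev ≠ p.1 ∧ p.2.rev ≠ p.2 := by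
  have hne : p.1 ≠ p.2 := fun h => by have := hM.1 p hp; rw [h] at this; omega
  by_cases hself : (p.2.rev, p.1.rev) = p
  · have h₁ : p.2.rev = p.1 := congrArg Prod.fst hself
    have h₂ : p.1.rev = p.2 := congrArg Prod.snd hself
    exact ⟨fun h => hne (h.symm.trans h₂), fun h => hne (h₁.symm.trans h)⟩
  · have hdisj := hM.2 p hp _ (hS p hp) (Ne.symm hself)
    exact ⟨Ne.symm hdisj.2.1, Ne.symm hdisj.2.2.1⟩

lemma isMatching_insert_iff {n : ℕ} {c : Fin n × Fin n} {M : Finset (Fin n × Fin n)}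
    (hc : c ∉ M) :
    IsMatching n (insert c M) ↔
      c.1.val + 2 ≤ c.2.val ∧ (∀ p ∈ M, ArcsDisjoint c p) ∧ IsMatching n M := by
  have hne : ∀ p ∈ M, c ≠ p := fun p hp h => hc (h ▸ hp)
  rw [isMatching_iff_pairwise, isMatching_iff_pairwise, Finset.coe_insert, Set.pairwise_insert,
    Finset.forall_mem_insert]
  constructor
  · rintro ⟨⟨hgap, hgaps⟩, hpw, hcM⟩
    exact ⟨hgap, fun p hp => (hcM p hp (hne p hp)).1, hgaps, hpw⟩
  · rintro ⟨hgap, hcM, hgaps, hpw⟩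
    exact ⟨⟨hgap, hgaps⟩, hpw, fun p hp _ => ⟨hcM p hp, (hcM p hp).symm⟩⟩

lemma symmMatching_insert_iff {n : ℕ} {c : Fin n × Fin n} {M : Finset (Fin n × Fin n)}
    (hc : (c.2.rev, c.1.rev) = c) (hcM : c ∉ M) :
    SymmMatching n (insert c M) ↔ SymmMatching n M := by
  rw [SymmMatching, SymmMatching, Finset.forall_mem_insert, hc]
  simp only [Finset.mem_insert_self, true_and, Finset.mem_insert]
  refine forall₂_congr fun p hp => or_iff_right fun h => hcM ?_
  rw [← hc, ← h]
  simpa using hp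

section Relabel

variable {a b : ℕ} (e : Fin a ↪ Fin b)

lemma isMatching_map_iff {M : Finset (Fin a × Fin a)}
    (hgap : ∀ p ∈ M, p.1.val + 2 ≤ p.2.val ↔ (e p.1).val + 2 ≤ (e p.2).val) :
    IsMatching b (M.map (e.prodMap e)) ↔ IsMatching a M := by
  have hdisj : Function.onFun ArcsDisjoint (e.prodMap e) = ArcsDisjoint := by
    ext p q; simp [Function.onFun, ArcsDisjoint]
  rw [isMatching_iff_pairwise, isMatching_iff_pairwise, Finset.coe_map,
    (e.prodMap e).injective.injOn.pairwise_image, hdisj, Finset.forall_mem_map]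
  exact and_congr (forall₂_congr fun p hp => (hgap p hp).symm) Iff.rfl

lemma symmMatching_map_iff (he : ∀ i, e i.rev = (e i).rev) {M : Finset (Fin a × Fin a)} :
    SymmMatching b (M.map (e.prodMap e)) ↔ SymmMatching a M := by
  simp only [SymmMatching, Finset.forall_mem_map, Function.Embedding.coe_prodMap, Prod.map,
    ← he]
  exact forall₂_congr fun p _ => Finset.mem_map' (e.prodMap e) (a := (p.2.rev, p.1.rev))

lemma isMatching_map_iff_of_symmMatching (he : ∀ i, e i.rev = (e i).rev)
    (hgap : ∀ i j, i.rev ≠ i → j.rev ≠ j → (i.val + 2 ≤ j.val ↔ (e i).val + 2 ≤ (e j).val))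
    {M : Finset (Fin a × Fin a)} (hS : SymmMatching a M) :
    IsMatching b (M.map (e.prodMap e)) ↔ IsMatching a M := by
  constructor
  · intro hM
    refine (isMatching_map_iff e fun p hp => ?_).1 hM
    have hrev := hM.rev_ne ((symmMatching_map_iff e he).2 hS) (Finset.mem_map_of_mem _ hp)
    simp only [Function.Embedding.coe_prodMap, Prod.map, ← he, ne_eq, e.apply_eq_iff_eq] at hrev
    exact hgap _ _ hrev.1 hrev.2
  · intro hM
    exact (isMatching_map_iff e fun p hp => hgap _ _ (hM.rev_ne hS hp).1 (hM.rev_ne hS hp).2).2 hM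

end Relabel

def centralArc (m : ℕ) : Fin (2 * m + 3) × Fin (2 * m + 3) :=
  (⟨m, by omega⟩, ⟨m + 2, by omega⟩)

lemma centralArc_rev (m : ℕ) : ((centralArc m).2.rev, (centralArc m).1.rev) = centralArc m := by
  ext <;> simp [centralArc, Fin.val_rev] <;> omega

section DeleteCentre

variable (m : ℕ)

def deleteCentre : Fin (2 * m + 2) ↪ Fin (2 * m + 3) := Fin.succAboveEmb ⟨m + 1, by omega⟩

lemma val_deleteCentre (i : Fin (2 * m + 2)) :
    (deleteCentre m i).val = if i.val ≤ m then i.val else i.val + 1 := by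
  simp only [deleteCentre, Fin.coe_succAboveEmb, Fin.val_succAbove, Nat.lt_succ_iff]

lemma deleteCentre_rev (i : Fin (2 * m + 2)) : deleteCentre m i.rev = (deleteCentre m i).rev := by
  ext; simp only [val_deleteCentre, Fin.val_rev]; split_ifs <;> omega

lemma deleteCentre_gap_iff {i j : Fin (2 * m + 2)} (h : ¬(i.val = m ∧ j.val = m + 1)) :
    i.val + 2 ≤ j.val ↔ (deleteCentre m i).val + 2 ≤ (deleteCentre m j).val := by
  simp only [val_deleteCentre]; split_ifs <;> omega

lemma centralArc_eq_deleteCentre :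
    centralArc m =
      (deleteCentre m).prodMap (deleteCentre m) (⟨m, by omega⟩, ⟨m + 1, by omega⟩) := by
  ext <;> simp [centralArc, Function.Embedding.coe_prodMap, val_deleteCentre]

lemma mem_range_deleteCentre {x : Fin (2 * m + 3)} (hx : x.rev ≠ x) :
    x ∈ Set.range (deleteCentre m) := by
  rw [deleteCentre, Fin.coe_succAboveEmb, Fin.range_succAbove]
  rintro rfl
  exact hx (by ext; simp [Fin.val_rev]; omega)

lemma natCard_centralArc_notMem :
    Nat.card {M : Finset (Fin (2 * m + 3) × Fin (2 * m + 3)) //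
      (IsMatching _ M ∧ SymmMatching _ M) ∧ centralArc m ∉ M} = Q (2 * m + 2) := by
  refine Finset.natCard_subtype_map ((deleteCentre m).prodMap (deleteCentre m))
    (fun s => ?_) ?_
  · rw [symmMatching_map_iff _ (deleteCentre_rev m), centralArc_eq_deleteCentre, Finset.mem_map']
    constructor
    · rintro ⟨⟨hM, hS⟩, hs⟩
      refine ⟨(isMatching_map_iff _ fun p hp => deleteCentre_gap_iff m ?_).1 hM, hS⟩
      rintro ⟨h1, h2⟩
      have hp' : p = (⟨m, by omega⟩, ⟨m + 1, by omega⟩) := Prod.ext (Fin.ext h1) (Fin.ext h2)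
      exact hs (hp' ▸ hp)
    · rintro ⟨hM, hS⟩
      refine ⟨⟨(isMatching_map_iff _ fun p hp => deleteCentre_gap_iff m ?_).2 hM, hS⟩,
        fun h => by simpa using hM.1 _ h⟩
      have := hM.1 p hp
      omega
  · rintro t ⟨⟨hM, hS⟩, -⟩ x hx
    have hrev := hM.rev_ne hS hx
    rw [Function.Embedding.coe_prodMap, Set.range_prodMap]
    exact ⟨mem_range_deleteCentre m hrev.1, mem_range_deleteCentre m hrev.2⟩

end DeleteCentre

section SkipCentralArc

variable (m : ℕ)

def skipCentralArc : Fin (2 * m + 1) ↪ Fin (2 * m + 3) :=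
  (Fin.succAboveEmb (⟨m, by omega⟩ : Fin (2 * m + 2))).trans
    (Fin.succAboveEmb ⟨m + 2, by omega⟩)

lemma val_skipCentralArc (i : Fin (2 * m + 1)) :
    (skipCentralArc m i).val =
      if i.val < m then i.val else if i.val = m then m + 1 else i.val + 2 := by
  simp only [skipCentralArc, Function.Embedding.trans_apply, Fin.coe_succAboveEmb,
    Fin.val_succAbove]
  split_ifs <;> omega

lemma skipCentralArc_rev (i : Fin (2 * m + 1)) :
    skipCentralArc m i.rev = (skipCentralArc m i).rev := by
  ext; simp only [val_skipCentralArc, Fin.val_rev]; split_ifs <;> omega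

lemma skipCentralArc_gap_iff {i j : Fin (2 * m + 1)} (hi : i.rev ≠ i) (hj : j.rev ≠ j) :
    i.val + 2 ≤ j.val ↔ (skipCentralArc m i).val + 2 ≤ (skipCentralArc m j).val := by
  rw [ne_eq, Fin.ext_iff, Fin.val_rev] at hi hj
  simp only [val_skipCentralArc]; split_ifs <;> omega

lemma arcsDisjoint_centralArc_skipCentralArc (p : Fin (2 * m + 1) × Fin (2 * m + 1)) :
    ArcsDisjoint (centralArc m) ((skipCentralArc m).prodMap (skipCentralArc m) p) := by
  simp only [ArcsDisjoint, centralArc, Function.Embedding.coe_prodMap, Prod.map, ne_eq,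
    Fin.ext_iff, val_skipCentralArc]
  split_ifs <;> omega

lemma mem_range_skipCentralArc {x : Fin (2 * m + 3)} (h₁ : x ≠ (centralArc m).1)
    (h₂ : x ≠ (centralArc m).2) : x ∈ Set.range (skipCentralArc m) := by
  obtain ⟨y, rfl⟩ := Fin.exists_succAbove_eq h₂
  have hy : y ≠ ⟨m, by omega⟩ := by
    rintro rfl
    exact h₁ (by ext; simp [centralArc, Fin.val_succAbove])
  obtain ⟨z, rfl⟩ := Fin.exists_succAbove_eq hy
  exact ⟨z, rfl⟩

lemma natCard_centralArc_mem :
    Nat.card {M : Finset (Fin (2 * m + 3) × Fin (2 * m + 3)) //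
      (IsMatching _ M ∧ SymmMatching _ M) ∧ centralArc m ∈ M} = Q (2 * m + 1) := by
  classical
  rw [Finset.natCard_subtype_mem]
  refine Finset.natCard_subtype_map ((skipCentralArc m).prodMap (skipCentralArc m))
    (fun s => ?_) ?_
  · have hdisj : ∀ p ∈ s.map ((skipCentralArc m).prodMap (skipCentralArc m)),
        ArcsDisjoint (centralArc m) p := by
      simpa only [Finset.forall_mem_map] using
        fun p _ => arcsDisjoint_centralArc_skipCentralArc m p
    have hc : centralArc m ∉ s.map ((skipCentralArc m).prodMap (skipCentralArc m)) :=
      fun h => (hdisj _ h).1 rfl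
    rw [isMatching_insert_iff hc, symmMatching_insert_iff (centralArc_rev m) hc,
      symmMatching_map_iff _ (skipCentralArc_rev m)]
    have hgap : (centralArc m).1.val + 2 ≤ (centralArc m).2.val := by simp [centralArc]
    have hmap := isMatching_map_iff_of_symmMatching _ (skipCentralArc_rev m)
      (fun _ _ => skipCentralArc_gap_iff m) (M := s)
    constructor
    · rintro ⟨⟨⟨-, -, hM⟩, hS⟩, -⟩
      exact ⟨(hmap hS).1 hM, hS⟩
    · rintro ⟨hM, hS⟩
      exact ⟨⟨⟨hgap, hdisj, (hmap hS).2 hM⟩, hS⟩, hc⟩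
  · rintro t ⟨⟨hM, -⟩, hct⟩ x hx
    have hx' := ((isMatching_insert_iff hct).1 hM).2.1 x hx
    rw [Function.Embedding.coe_prodMap, Set.range_prodMap]
    exact ⟨mem_range_skipCentralArc m (Ne.symm hx'.1) (Ne.symm hx'.2.2.1),
      mem_range_skipCentralArc m (Ne.symm hx'.2.1) (Ne.symm hx'.2.2.2)⟩

end SkipCentralArc

theorem Q_two_mul_add_three (m : ℕ) : Q (2 * m + 3) = Q (2 * m + 2) + Q (2 * m + 1) := by
  rw [Q, Nat.card_subtype_eq_add _ (centralArc m ∉ ·), natCard_centralArc_notMem]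
  simp only [not_not, natCard_centralArc_mem]

theorem statement7 : ∀ n : ℕ, 1 ≤ n → Q (2 * n + 1) = Q (2 * n) + Q (2 * n - 1) := by
  rintro (_ | m) hn
  · omega
  · simpa [Nat.mul_succ] using Q_two_mul_add_three m
end

section
/- Let M n be the number of partitions of {1,…,n} that are noncrossing and in which no block contains two consecutive integers. Then M 1 = M 2 = 1 and for n ≥ 3: M n = M (n-1) + Σ_{j=3}^{n} M (j-2) · M (n-j+1). (Hence M n is the (n-1)-st Motzkin number.) -/
/-- A partition of the `n` points `{0,…,n-1}` given by its finite set of blocks. -/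
def IsPartition (n : ℕ) (P : Finset (Finset (Fin n))) : Prop :=
  (∀ B ∈ P, B.Nonempty) ∧ ∀ i : Fin n, ∃! B, B ∈ P ∧ i ∈ B

/-- No block contains two consecutive integers. -/
def NoConsec (n : ℕ) (P : Finset (Finset (Fin n))) : Prop :=
  ∀ B ∈ P, ∀ i ∈ B, ∀ j ∈ B, (i : ℕ) + 1 ≠ (j : ℕ)

/-- The partition is noncrossing: no `a < b < c < d` with `a,c` in one block
and `b,d` in a different block. -/
def NCPart (n : ℕ) (P : Finset (Finset (Fin n))) : Prop :=
  ∀ B ∈ P, ∀ C ∈ P, B ≠ C →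
    ∀ a ∈ B, ∀ c ∈ B, ∀ b ∈ C, ∀ d ∈ C, ¬(a < b ∧ b < c ∧ c < d)

/-- The partition is self-complementary: applying `j ↦ n+1-j` (here `Fin.rev`)
inside each block yields the same partition. -/
def SelfCompl (n : ℕ) (P : Finset (Finset (Fin n))) : Prop :=
  P.image (fun B => B.image Fin.rev) = P

/-- The number of noncrossing partitions of `{1,…,n}` in which no block contains
two consecutive integers. -/
noncomputable def M (n : ℕ) : ℕ :=
  Nat.card {P : Finset (Finset (Fin n)) // IsPartition n P ∧ NCPart n P ∧ NoConsec n P}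

/-!
Split a partition of `Ico a n` according to the block of its least point `a`. If that block is
`{a}`, removing it leaves a partition of `Ico (a + 1) n`. Otherwise let `p` be the next element of
the block; `p ≥ a + 2` because no block contains consecutive integers, and noncrossingness forces
every other block into `Ico (a + 1) p` or into `Ico p n`. Restricting to these two intervals
(which drops `a`) is then a bijection onto pairs of partitions of the same kind, whose inverse
re-attaches `a` to the block of `p`. Since the count only depends on the length of the interval,
this is the stated recurrence.
-/

open Finset

-- Partitions of an arbitrary finite `S ⊆ ℕ`, so that sub-intervals need no `Fin` casts.
structure IsMotzkinPartition (S : Finset ℕ) (P : Finset (Finset ℕ)) : Prop where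
  nonempty : ∀ B ∈ P, B.Nonempty
  subset : ∀ B ∈ P, B ⊆ S
  exists_mem : ∀ i ∈ S, ∃ B ∈ P, i ∈ B
  eq_of_mem : ∀ B ∈ P, ∀ C ∈ P, ∀ i ∈ B, i ∈ C → B = C
  noncrossing : ∀ B ∈ P, ∀ C ∈ P, B ≠ C →
    ∀ w ∈ B, ∀ y ∈ B, ∀ x ∈ C, ∀ z ∈ C, ¬(w < x ∧ x < y ∧ y < z)
  succ_notMem : ∀ B ∈ P, ∀ i ∈ B, i + 1 ∉ B

open Classical in
noncomputable def motzkinPartitions (S : Finset ℕ) : Finset (Finset (Finset ℕ)) :=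
  S.powerset.powerset.filter (IsMotzkinPartition S)

theorem mem_motzkinPartitions {S : Finset ℕ} {P : Finset (Finset ℕ)} :
    P ∈ motzkinPartitions S ↔ IsMotzkinPartition S P := by
  simp only [motzkinPartitions, mem_filter, mem_powerset, and_iff_right_iff_imp]
  exact fun hP B hB => mem_powerset.2 (hP.subset B hB)

theorem isMotzkinPartition_image_val_iff {n : ℕ} (P : Finset (Finset (Fin n))) :
    IsMotzkinPartition (range n) (P.image (image Fin.val)) ↔
      IsPartition n P ∧ NCPart n P ∧ NoConsec n P := by
  have hval := Fin.val_injective (n := n)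
  have himage : Function.Injective (image (Fin.val : Fin n → ℕ)) := image_injective hval
  simp only [IsPartition, NCPart, NoConsec, Fin.lt_def]
  constructor
  · rintro ⟨hne, -, hex, heq, hnc, hsucc⟩
    refine ⟨⟨fun B hB => image_nonempty.1 (hne _ (mem_image_of_mem _ hB)), fun i => ?_⟩,
      ?_, ?_⟩
    · obtain ⟨B', hB', hiB'⟩ := hex i (mem_range.2 i.isLt)
      obtain ⟨B, hB, rfl⟩ := mem_image.1 hB'
      refine ⟨B, ⟨hB, hval.mem_finset_image.1 hiB'⟩, fun C ⟨hC, hiC⟩ => himage ?_⟩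
      exact heq _ (mem_image_of_mem _ hC) _ hB' _ (mem_image_of_mem _ hiC) hiB'
    · intro B hB C hC hBC a ha c hc b hb d hd
      exact hnc _ (mem_image_of_mem _ hB) _ (mem_image_of_mem _ hC) (himage.ne hBC)
        _ (mem_image_of_mem _ ha) _ (mem_image_of_mem _ hc)
        _ (mem_image_of_mem _ hb) _ (mem_image_of_mem _ hd)
    · intro B hB i hi j hj hij
      exact hsucc _ (mem_image_of_mem _ hB) _ (mem_image_of_mem _ hi)
        (hij ▸ mem_image_of_mem _ hj)
  · rintro ⟨⟨hne, hex⟩, hnc, hsucc⟩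
    refine ⟨?_, ?_, fun i hi => ?_, ?_, ?_, ?_⟩ <;>
      simp only [forall_mem_image, exists_mem_image, ne_eq, himage.eq_iff, hval.mem_finset_image]
    · exact fun B hB => (hne B hB).image _
    · intro B _ x hx
      obtain ⟨i, -, rfl⟩ := mem_image.1 hx
      exact mem_range.2 i.isLt
    · obtain ⟨B, ⟨hB, hiB⟩, -⟩ := hex ⟨i, mem_range.1 hi⟩
      exact ⟨B, hB, mem_image_of_mem _ hiB⟩
    · intro B hB C hC i hiB hiC
      obtain ⟨_, _, huniq⟩ := hex i
      rw [huniq B ⟨hB, hiB⟩, huniq C ⟨hC, hiC⟩]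
    · exact hnc
    · intro B hB i hi hi'
      obtain ⟨j, hj, hij⟩ := mem_image.1 hi'
      exact hsucc B hB i hi j hj hij.symm

theorem M_eq_card_motzkinPartitions (n : ℕ) : M n = #(motzkinPartitions (range n)) := by
  classical
  set toFin : Finset ℕ → Finset (Fin n) := fun B => univ.filter fun i => (i : ℕ) ∈ B
  have toFin_image_val (B : Finset (Fin n)) : toFin (B.image Fin.val) = B := by
    ext i; simp [toFin, Fin.val_inj]
  have image_val_toFin (Q : Finset (Finset ℕ)) (hQ : ∀ B ∈ Q, B ⊆ range n) :
      (Q.image toFin).image (image Fin.val) = Q := by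
    rw [image_image]
    refine (image_congr fun B hB => ?_).trans image_id'
    show (toFin B).image Fin.val = B
    ext x
    simp only [toFin, mem_image, mem_filter, mem_univ, true_and]
    exact ⟨by rintro ⟨i, hi, rfl⟩; exact hi, fun hx => ⟨⟨x, mem_range.1 (hQ B hB hx)⟩, hx, rfl⟩⟩
  rw [M, Nat.card_eq_fintype_card, Fintype.card_subtype]
  refine card_nbij' (image (image Fin.val)) (image toFin) (fun P hP => ?_) (fun Q hQ => ?_)
    (fun P _ => ?_) (fun Q hQ => image_val_toFin Q (mem_motzkinPartitions.1 hQ).subset)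
  · exact mem_motzkinPartitions.2 ((isMotzkinPartition_image_val_iff P).2 (mem_filter.1 hP).2)
  · have hQ := mem_motzkinPartitions.1 hQ
    rw [← image_val_toFin Q hQ.subset, isMotzkinPartition_image_val_iff] at hQ
    exact mem_filter.2 ⟨mem_univ _, hQ⟩
  · rw [image_image]
    exact (image_congr fun B _ => toFin_image_val B).trans image_id'

namespace IsMotzkinPartition

variable {S : Finset ℕ} {P : Finset (Finset ℕ)} {a : ℕ}

theorem eq_of_subset {P' : Finset (Finset ℕ)} (hP : IsMotzkinPartition S P)
    (hP' : IsMotzkinPartition S P') (h : P ⊆ P') : P = P' := by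
  refine h.antisymm fun B hB => ?_
  obtain ⟨x, hx⟩ := hP'.nonempty B hB
  obtain ⟨C, hC, hxC⟩ := hP.exists_mem x (hP'.subset B hB hx)
  rwa [hP'.eq_of_mem B hB C (h hC) x hx hxC]

theorem erase_singleton (hP : IsMotzkinPartition S P) (ha : {a} ∈ P) :
    IsMotzkinPartition (S.erase a) (P.erase {a}) where
  nonempty B hB := hP.nonempty B (mem_of_mem_erase hB)
  subset B hB x hx := by
    obtain ⟨hBa, hB⟩ := mem_erase.1 hB
    refine mem_erase.2 ⟨fun hxa => hBa ?_, hP.subset B hB hx⟩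
    exact hP.eq_of_mem B hB {a} ha x hx (hxa ▸ mem_singleton_self a)
  exists_mem i hi := by
    obtain ⟨hia, hi⟩ := mem_erase.1 hi
    obtain ⟨B, hB, hiB⟩ := hP.exists_mem i hi
    exact ⟨B, mem_erase.2 ⟨fun h => hia (mem_singleton.1 (h ▸ hiB)), hB⟩, hiB⟩
  eq_of_mem B hB C hC := hP.eq_of_mem B (mem_of_mem_erase hB) C (mem_of_mem_erase hC)
  noncrossing B hB C hC := hP.noncrossing B (mem_of_mem_erase hB) C (mem_of_mem_erase hC)
  succ_notMem B hB := hP.succ_notMem B (mem_of_mem_erase hB)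

theorem insert_singleton (hP : IsMotzkinPartition S P) (ha : a ∉ S) :
    IsMotzkinPartition (insert a S) (insert {a} P) where
  nonempty B hB := by
    obtain rfl | hB := mem_insert.1 hB
    exacts [singleton_nonempty a, hP.nonempty B hB]
  subset B hB := by
    obtain rfl | hB := mem_insert.1 hB
    exacts [singleton_subset_iff.2 (mem_insert_self a S),
      (hP.subset B hB).trans (subset_insert a S)]
  exists_mem i hi := by
    obtain rfl | hi := mem_insert.1 hi
    · exact ⟨{i}, mem_insert_self _ _, mem_singleton_self i⟩
    · obtain ⟨B, hB, hiB⟩ := hP.exists_mem i hi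
      exact ⟨B, mem_insert_of_mem hB, hiB⟩
  eq_of_mem B hB C hC i hiB hiC := by
    have hia (D) (hD : D ∈ P) (hiD : i ∈ D) : i ≠ a := fun h => ha (h ▸ hP.subset D hD hiD)
    obtain rfl | hB := mem_insert.1 hB <;> obtain rfl | hC := mem_insert.1 hC
    · rfl
    · exact absurd (mem_singleton.1 hiB) (hia C hC hiC)
    · exact absurd (mem_singleton.1 hiC) (hia B hB hiB)
    · exact hP.eq_of_mem B hB C hC i hiB hiC
  noncrossing B hB C hC hBC w hw y hy x hx z hz := by
    obtain rfl | hB := mem_insert.1 hB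
    · rw [mem_singleton] at hw hy; omega
    obtain rfl | hC := mem_insert.1 hC
    · rw [mem_singleton] at hx hz; omega
    exact hP.noncrossing B hB C hC hBC w hw y hy x hx z hz
  succ_notMem B hB i hi := by
    obtain rfl | hB := mem_insert.1 hB
    · rw [mem_singleton] at hi ⊢; omega
    exact hP.succ_notMem B hB i hi

end IsMotzkinPartition

theorem card_filter_singleton_mem_motzkinPartitions {S : Finset ℕ} {a : ℕ} (ha : a ∈ S) :
    #((motzkinPartitions S).filter ({a} ∈ ·)) = #(motzkinPartitions (S.erase a)) := by
  refine card_nbij' (·.erase {a}) (insert {a}) (fun P hP => ?_) (fun Q hQ => ?_)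
    (fun P hP => insert_erase (mem_filter.1 hP).2) (fun Q hQ => erase_insert fun h => ?_)
  · obtain ⟨hP, haP⟩ := mem_filter.1 hP
    exact mem_motzkinPartitions.2 ((mem_motzkinPartitions.1 hP).erase_singleton haP)
  · have hQ := (mem_motzkinPartitions.1 hQ).insert_singleton (notMem_erase a S)
    rw [insert_erase ha] at hQ
    exact mem_filter.2 ⟨mem_motzkinPartitions.2 hQ, mem_insert_self _ _⟩
  · exact notMem_erase a S ((mem_motzkinPartitions.1 hQ).subset _ h (mem_singleton_self a))

section Restrict

variable {α : Type*} [DecidableEq α]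

def restrictParts (P : Finset (Finset α)) (T : Finset α) : Finset (Finset α) :=
  (P.image (· ∩ T)).erase ∅

theorem mem_restrictParts {P : Finset (Finset α)} {T C : Finset α} :
    C ∈ restrictParts P T ↔ C ≠ ∅ ∧ ∃ B ∈ P, B ∩ T = C := by
  simp [restrictParts]

theorem restrictParts_union (P R : Finset (Finset α)) (T : Finset α) :
    restrictParts (P ∪ R) T = restrictParts P T ∪ restrictParts R T := by
  simp only [restrictParts, image_union, erase_union_distrib]

theorem restrictParts_eq_empty {P : Finset (Finset α)} {T : Finset α}
    (h : ∀ B ∈ P, Disjoint B T) : restrictParts P T = ∅ := by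
  refine eq_empty_of_forall_notMem fun C hC => ?_
  obtain ⟨hC, B, hB, rfl⟩ := mem_restrictParts.1 hC
  exact hC (disjoint_iff_inter_eq_empty.1 (h B hB))

theorem restrictParts_eq_self {P : Finset (Finset α)} {T : Finset α}
    (hne : ∀ B ∈ P, B.Nonempty) (hsub : ∀ B ∈ P, B ⊆ T) : restrictParts P T = P := by
  ext C
  rw [mem_restrictParts]
  refine ⟨?_, fun hC => ⟨(hne C hC).ne_empty, C, hC, inter_eq_left.2 (hsub C hC)⟩⟩
  rintro ⟨-, B, hB, rfl⟩
  rwa [inter_eq_left.2 (hsub B hB)]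

end Restrict

theorem IsMotzkinPartition.restrict {S T : Finset ℕ} {P : Finset (Finset ℕ)}
    (hP : IsMotzkinPartition S P) (hT : T ⊆ S) :
    IsMotzkinPartition T (restrictParts P T) where
  nonempty C hC := nonempty_iff_ne_empty.2 (mem_restrictParts.1 hC).1
  subset C hC := by
    obtain ⟨-, B, -, rfl⟩ := mem_restrictParts.1 hC
    exact inter_subset_right
  exists_mem i hi := by
    obtain ⟨B, hB, hiB⟩ := hP.exists_mem i (hT hi)
    have hi : i ∈ B ∩ T := mem_inter.2 ⟨hiB, hi⟩
    exact ⟨B ∩ T, mem_restrictParts.2 ⟨ne_empty_of_mem hi, B, hB, rfl⟩, hi⟩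
  eq_of_mem C hC D hD i hiC hiD := by
    obtain ⟨-, B, hB, rfl⟩ := mem_restrictParts.1 hC
    obtain ⟨-, B', hB', rfl⟩ := mem_restrictParts.1 hD
    rw [hP.eq_of_mem B hB B' hB' i (mem_inter.1 hiC).1 (mem_inter.1 hiD).1]
  noncrossing C hC D hD hCD w hw y hy x hx z hz := by
    obtain ⟨-, B, hB, rfl⟩ := mem_restrictParts.1 hC
    obtain ⟨-, B', hB', rfl⟩ := mem_restrictParts.1 hD
    exact hP.noncrossing B hB B' hB' (fun h => hCD (h ▸ rfl)) w (mem_inter.1 hw).1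
      y (mem_inter.1 hy).1 x (mem_inter.1 hx).1 z (mem_inter.1 hz).1
  succ_notMem C hC i hi hi' := by
    obtain ⟨-, B, hB, rfl⟩ := mem_restrictParts.1 hC
    exact hP.succ_notMem B hB i (mem_inter.1 hi).1 (mem_inter.1 hi').1

section Glue

variable {α : Type*} [DecidableEq α]

def attachTo (a p : α) (B : Finset α) : Finset α :=
  if p ∈ B then insert a B else B

theorem mem_attachTo {a p x : α} {B : Finset α} :
    x ∈ attachTo a p B ↔ x ∈ B ∨ x = a ∧ p ∈ B := by
  unfold attachTo; split_ifs with h <;> simp [h, or_comm]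

theorem attachTo_of_notMem {a p : α} {B : Finset α} (h : p ∉ B) : attachTo a p B = B :=
  if_neg h

theorem restrictParts_image_attachTo {a p : α} {T : Finset α} (ha : a ∉ T)
    (P : Finset (Finset α)) : restrictParts (P.image (attachTo a p)) T = restrictParts P T := by
  have h (B : Finset α) : attachTo a p B ∩ T = B ∩ T := by
    ext x; simp only [mem_inter, mem_attachTo]; grind
  simp only [restrictParts, image_image, Function.comp_def, h]

def glueParts (a p : α) (I O : Finset (Finset α)) : Finset (Finset α) :=
  I ∪ O.image (attachTo a p)

theorem mem_glueParts {a p : α} {I O : Finset (Finset α)} {C : Finset α} :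
    C ∈ glueParts a p I O ↔ C ∈ I ∨ ∃ B ∈ O, attachTo a p B = C := by
  simp [glueParts]

end Glue

section GlueNat

variable {a p n : ℕ} {I O : Finset (Finset ℕ)}

theorem restrictParts_glueParts_inner (hI : IsMotzkinPartition (Ico (a + 1) p) I)
    (hO : IsMotzkinPartition (Ico p n) O) :
    restrictParts (glueParts a p I O) (Ico (a + 1) p) = I := by
  rw [glueParts, restrictParts_union, restrictParts_eq_self hI.nonempty hI.subset,
    restrictParts_image_attachTo (by simp), restrictParts_eq_empty, union_empty]
  exact fun B hB =>
    disjoint_of_subset_left (hO.subset B hB) (Ico_disjoint_Ico_consecutive _ _ _).symm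

theorem restrictParts_glueParts_outer (hI : IsMotzkinPartition (Ico (a + 1) p) I)
    (hO : IsMotzkinPartition (Ico p n) O) (hap : a < p) :
    restrictParts (glueParts a p I O) (Ico p n) = O := by
  rw [glueParts, restrictParts_union, restrictParts_image_attachTo (by simp [hap]),
    restrictParts_eq_self hO.nonempty hO.subset, restrictParts_eq_empty, empty_union]
  exact fun B hB =>
    disjoint_of_subset_left (hI.subset B hB) (Ico_disjoint_Ico_consecutive _ _ _)

theorem IsMotzkinPartition.mem_attachTo_cases (hO : IsMotzkinPartition (Ico p n) O)
    {B : Finset ℕ} (hB : B ∈ O) {x : ℕ} (hx : x ∈ attachTo a p B) :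
    x = a ∧ p ∈ B ∨ x ∈ B ∧ p ≤ x ∧ x < n := by
  obtain hx | hx := mem_attachTo.1 hx
  exacts [Or.inr ⟨hx, mem_Ico.1 (hO.subset B hB hx)⟩, Or.inl hx]

theorem eq_of_mem_glueParts (hI : IsMotzkinPartition (Ico (a + 1) p) I)
    (hO : IsMotzkinPartition (Ico p n) O) (hap : a < p) {C D : Finset ℕ}
    (hC : C ∈ glueParts a p I O) (hD : D ∈ glueParts a p I O) {i : ℕ} (hiC : i ∈ C)
    (hiD : i ∈ D) : C = D := by
  have inner {B} (hB : B ∈ I) {x} (hx : x ∈ B) := mem_Ico.1 (hI.subset B hB hx)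
  obtain hC | ⟨B, hB, rfl⟩ := mem_glueParts.1 hC <;>
    obtain hD | ⟨B', hB', rfl⟩ := mem_glueParts.1 hD
  · exact hI.eq_of_mem C hC D hD i hiC hiD
  · have := inner hC hiC; have := hO.mem_attachTo_cases hB' hiD; omega
  · have := inner hD hiD; have := hO.mem_attachTo_cases hB hiC; omega
  congr 1
  obtain ⟨hia, hpB⟩ | ⟨hiB, hpi, -⟩ := hO.mem_attachTo_cases hB hiC <;>
    obtain ⟨hia', hpB'⟩ | ⟨hiB', hpi', -⟩ := hO.mem_attachTo_cases hB' hiD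
  · exact hO.eq_of_mem B hB B' hB' p hpB hpB'
  · omega
  · omega
  · exact hO.eq_of_mem B hB B' hB' i hiB hiB'

theorem noncrossing_glueParts (hI : IsMotzkinPartition (Ico (a + 1) p) I)
    (hO : IsMotzkinPartition (Ico p n) O) (hap : a < p) {C D : Finset ℕ}
    (hC : C ∈ glueParts a p I O) (hD : D ∈ glueParts a p I O) (hCD : C ≠ D)
    {w x y z : ℕ} (hw : w ∈ C) (hy : y ∈ C)
    (hx : x ∈ D) (hz : z ∈ D) : ¬(w < x ∧ x < y ∧ y < z) := by
  rintro ⟨hwx, hxy, hyz⟩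
  have inner {B} (hB : B ∈ I) {x} (hx : x ∈ B) := mem_Ico.1 (hI.subset B hB hx)
  obtain hC | ⟨B, hB, rfl⟩ := mem_glueParts.1 hC <;>
    obtain hD | ⟨B', hB', rfl⟩ := mem_glueParts.1 hD
  · exact hI.noncrossing C hC D hD hCD w hw y hy x hx z hz ⟨hwx, hxy, hyz⟩
  · have := inner hC hw; have := inner hC hy; have := hO.mem_attachTo_cases hB' hx; omega
  · have := inner hD hx; have := inner hD hz; have := hO.mem_attachTo_cases hB hy; omega
  have hBB' : B ≠ B' := fun h => hCD (h ▸ rfl)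
  have haw : a ≤ w := by obtain ⟨h, -⟩ | ⟨-, h, -⟩ := hO.mem_attachTo_cases hB hw <;> omega
  obtain ⟨hxa, -⟩ | ⟨hxB', hpx, -⟩ := hO.mem_attachTo_cases hB' hx; · omega
  obtain ⟨hya, -⟩ | ⟨hyB, -⟩ := hO.mem_attachTo_cases hB hy; · omega
  obtain ⟨hza, -⟩ | ⟨hzB', -⟩ := hO.mem_attachTo_cases hB' hz; · omega
  obtain ⟨-, hpB⟩ | ⟨hwB, -⟩ := hO.mem_attachTo_cases hB hw
  · -- the point `a` of the glued block is traded for `p`, which lies in the same block of `O`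
    have hpx : p < x :=
      lt_of_le_of_ne hpx fun h => hBB' (hO.eq_of_mem B hB B' hB' p hpB (h ▸ hxB'))
    exact hO.noncrossing B hB B' hB' hBB' p hpB y hyB x hxB' z hzB' ⟨hpx, hxy, hyz⟩
  · exact hO.noncrossing B hB B' hB' hBB' w hwB y hyB x hxB' z hzB' ⟨hwx, hxy, hyz⟩

theorem isMotzkinPartition_glueParts (hI : IsMotzkinPartition (Ico (a + 1) p) I)
    (hO : IsMotzkinPartition (Ico p n) O) (hap : a + 2 ≤ p) (hpn : p < n) :
    IsMotzkinPartition (Ico a n) (glueParts a p I O) := by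
  refine ⟨fun C hC => ?_, fun C hC x hx => ?_, fun i hi => ?_, fun C hC D hD i hiC hiD => ?_,
    fun C hC D hD hCD w hw y hy x hx z hz => ?_, fun C hC i hi hi' => ?_⟩
  · obtain hC | ⟨B, hB, rfl⟩ := mem_glueParts.1 hC
    exacts [hI.nonempty C hC, (hO.nonempty B hB).mono fun x hx => mem_attachTo.2 (Or.inl hx)]
  · rw [mem_Ico]
    obtain hC | ⟨B, hB, rfl⟩ := mem_glueParts.1 hC
    · have := mem_Ico.1 (hI.subset C hC hx); omega
    · have := hO.mem_attachTo_cases hB hx; omega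
  · obtain ⟨hai, hin⟩ := mem_Ico.1 hi
    obtain rfl | hai := hai.eq_or_lt
    · obtain ⟨B, hB, hpB⟩ := hO.exists_mem p (mem_Ico.2 ⟨le_rfl, hpn⟩)
      exact ⟨_, mem_glueParts.2 (Or.inr ⟨B, hB, rfl⟩), mem_attachTo.2 (Or.inr ⟨rfl, hpB⟩)⟩
    obtain hip | hpi := lt_or_ge i p
    · obtain ⟨B, hB, hiB⟩ := hI.exists_mem i (mem_Ico.2 ⟨hai, hip⟩)
      exact ⟨B, mem_glueParts.2 (Or.inl hB), hiB⟩
    · obtain ⟨B, hB, hiB⟩ := hO.exists_mem i (mem_Ico.2 ⟨hpi, hin⟩)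
      exact ⟨_, mem_glueParts.2 (Or.inr ⟨B, hB, rfl⟩), mem_attachTo.2 (Or.inl hiB)⟩
  · exact eq_of_mem_glueParts hI hO (by omega) hC hD hiC hiD
  · exact noncrossing_glueParts hI hO (by omega) hC hD hCD hw hy hx hz
  · obtain hC | ⟨B, hB, rfl⟩ := mem_glueParts.1 hC
    · exact hI.succ_notMem C hC i hi hi'
    obtain ⟨hia, -⟩ | ⟨hiB, hpi, -⟩ := hO.mem_attachTo_cases hB hi <;>
      obtain ⟨hia', -⟩ | ⟨hiB', hpi', -⟩ := hO.mem_attachTo_cases hB hi'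
    · omega
    · omega
    · omega
    · exact hO.succ_notMem B hB i hiB hiB'

end GlueNat

def IsNextInBlock (P : Finset (Finset ℕ)) (a p : ℕ) : Prop :=
  ∃ B ∈ P, a ∈ B ∧ p ∈ B ∧ ∀ x ∈ B, x ≠ a → p ≤ x

instance (P : Finset (Finset ℕ)) (a p : ℕ) : Decidable (IsNextInBlock P a p) := by
  unfold IsNextInBlock; infer_instance

section NextInBlock

variable {a p n : ℕ} {P : Finset (Finset ℕ)}

theorem isNextInBlock_glueParts {I O : Finset (Finset ℕ)} (hO : IsMotzkinPartition (Ico p n) O)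
    (hpn : p < n) : IsNextInBlock (glueParts a p I O) a p := by
  obtain ⟨B, hB, hpB⟩ := hO.exists_mem p (mem_Ico.2 ⟨le_rfl, hpn⟩)
  refine ⟨attachTo a p B, mem_glueParts.2 (Or.inr ⟨B, hB, rfl⟩),
    mem_attachTo.2 (Or.inr ⟨rfl, hpB⟩), mem_attachTo.2 (Or.inl hpB), fun x hx hxa => ?_⟩
  obtain ⟨hxa', -⟩ | ⟨-, hpx, -⟩ := hO.mem_attachTo_cases hB hx
  exacts [absurd hxa' hxa, hpx]

theorem IsNextInBlock.eq_of_ne {q : ℕ} {S : Finset ℕ} (hP : IsMotzkinPartition S P)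
    (hp : IsNextInBlock P a p) (hq : IsNextInBlock P a q) (hpa : p ≠ a) (hqa : q ≠ a) :
    p = q := by
  obtain ⟨B, hB, haB, hpB, hminB⟩ := hp
  obtain ⟨C, hC, haC, hqC, hminC⟩ := hq
  obtain rfl := hP.eq_of_mem B hB C hC a haB haC
  exact le_antisymm (hminB q hqC hqa) (hminC p hpB hpa)

theorem IsNextInBlock.singleton_notMem {S : Finset ℕ} (hP : IsMotzkinPartition S P)
    (hp : IsNextInBlock P a p) (hpa : p ≠ a) : {a} ∉ P := by
  obtain ⟨B, hB, haB, hpB, -⟩ := hp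
  intro ha
  obtain rfl := hP.eq_of_mem B hB {a} ha a haB (mem_singleton_self a)
  exact hpa (mem_singleton.1 hpB)

theorem IsMotzkinPartition.exists_isNextInBlock (hP : IsMotzkinPartition (Ico a n) P)
    (han : a < n) (ha : {a} ∉ P) : ∃ p ∈ Ico (a + 2) n, IsNextInBlock P a p := by
  obtain ⟨B, hB, haB⟩ := hP.exists_mem a (mem_Ico.2 ⟨le_rfl, han⟩)
  have hne : (B.erase a).Nonempty := by
    rw [nonempty_iff_ne_empty, Ne, erase_eq_empty_iff, not_or]
    exact ⟨ne_empty_of_mem haB, fun h => ha (h ▸ hB)⟩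
  set p := (B.erase a).min' hne
  obtain ⟨hpa, hpB⟩ := mem_erase.1 (min'_mem _ hne)
  have hp := mem_Ico.1 (hP.subset B hB hpB)
  have hpa' : p ≠ a + 1 := fun h => hP.succ_notMem B hB a haB (h ▸ hpB)
  refine ⟨p, mem_Ico.2 ⟨by omega, hp.2⟩, B, hB, haB, hpB, fun x hx hxa => ?_⟩
  exact min'_le _ _ (mem_erase.2 ⟨hxa, hx⟩)

theorem IsMotzkinPartition.subset_Ico_or_subset_Ico (hP : IsMotzkinPartition (Ico a n) P)
    {B₀ B : Finset ℕ} (hB₀ : B₀ ∈ P) (haB₀ : a ∈ B₀) (hpB₀ : p ∈ B₀) (hB : B ∈ P)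
    (hne : B ≠ B₀) :
    B ⊆ Ico (a + 1) p ∨ B ⊆ Ico p n := by
  by_contra! h
  obtain ⟨⟨r, hrB, hr⟩, ⟨l, hlB, hl⟩⟩ := And.imp not_subset.1 not_subset.1 h
  have ha (z) (hz : z ∈ B) : z ≠ a := fun h => hne (hP.eq_of_mem B hB B₀ hB₀ z hz (h ▸ haB₀))
  have hp (z) (hz : z ∈ B) : z ≠ p := fun h => hne (hP.eq_of_mem B hB B₀ hB₀ z hz (h ▸ hpB₀))
  have := mem_Ico.1 (hP.subset B hB hrB); have := mem_Ico.1 (hP.subset B hB hlB)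
  have := ha r hrB; have := ha l hlB; have := hp r hrB; have := hp l hlB
  simp only [mem_Ico, not_and_or, not_le, not_lt] at hr hl
  refine hP.noncrossing B₀ hB₀ B hB hne.symm a haB₀ p hpB₀ l hlB r hrB ⟨?_, ?_, ?_⟩ <;> omega

end NextInBlock

section Decomposition

variable {a p n : ℕ} {P : Finset (Finset ℕ)}

theorem IsMotzkinPartition.subset_glueParts_restrictParts (hP : IsMotzkinPartition (Ico a n) P)
    (hnext : IsNextInBlock P a p) :
    P ⊆ glueParts a p (restrictParts P (Ico (a + 1) p)) (restrictParts P (Ico p n)) := by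
  obtain ⟨B₀, hB₀, haB₀, hpB₀, hmin⟩ := hnext
  intro B hB
  rw [mem_glueParts]
  by_cases hBB₀ : B = B₀
  · subst hBB₀
    have hpB : p ∈ B ∩ Ico p n :=
      mem_inter.2 ⟨hpB₀, mem_Ico.2 ⟨le_rfl, (mem_Ico.1 (hP.subset B hB hpB₀)).2⟩⟩
    refine Or.inr ⟨B ∩ Ico p n, mem_restrictParts.2 ⟨ne_empty_of_mem hpB, B, hB, rfl⟩, ?_⟩
    ext x
    rw [mem_attachTo, mem_inter, mem_Ico]
    refine ⟨by rintro (⟨hx, -⟩ | ⟨rfl, -⟩); exacts [hx, haB₀], fun hx => ?_⟩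
    by_cases hxa : x = a
    exacts [Or.inr ⟨hxa, hpB⟩, Or.inl ⟨hx, hmin x hx hxa, (mem_Ico.1 (hP.subset B hB hx)).2⟩]
  obtain hsub | hsub := hP.subset_Ico_or_subset_Ico hB₀ haB₀ hpB₀ hB hBB₀
  all_goals have hBT : B ∈ restrictParts P _ :=
    mem_restrictParts.2 ⟨(hP.nonempty B hB).ne_empty, B, hB, inter_eq_left.2 hsub⟩
  · exact Or.inl hBT
  · refine Or.inr ⟨B, hBT, attachTo_of_notMem fun hpB => hBB₀ ?_⟩
    exact hP.eq_of_mem B hB B₀ hB₀ p hpB hpB₀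

theorem IsMotzkinPartition.glueParts_restrictParts (hP : IsMotzkinPartition (Ico a n) P)
    (hnext : IsNextInBlock P a p) (hap : a + 2 ≤ p) (hpn : p < n) :
    glueParts a p (restrictParts P (Ico (a + 1) p)) (restrictParts P (Ico p n)) = P := by
  refine (hP.eq_of_subset ?_ (hP.subset_glueParts_restrictParts hnext)).symm
  exact isMotzkinPartition_glueParts (hP.restrict (Ico_subset_Ico (by omega) (by omega)))
    (hP.restrict (Ico_subset_Ico (by omega) (by omega))) hap hpn

theorem card_filter_isNextInBlock (hap : a + 2 ≤ p) (hpn : p < n) :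
    #((motzkinPartitions (Ico a n)).filter (IsNextInBlock · a p)) =
      #(motzkinPartitions (Ico (a + 1) p)) * #(motzkinPartitions (Ico p n)) := by
  classical
  rw [← card_product]
  refine card_nbij' (fun P => (restrictParts P (Ico (a + 1) p), restrictParts P (Ico p n)))
    (fun pair => glueParts a p pair.1 pair.2) (fun P hP => ?_) (fun pair hpair => ?_)
    (fun P hP => ?_) (fun pair hpair => ?_)
  · have hP := mem_motzkinPartitions.1 (mem_filter.1 hP).1
    exact mem_product.2
      ⟨mem_motzkinPartitions.2 (hP.restrict (Ico_subset_Ico (by omega) (by omega))),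
        mem_motzkinPartitions.2 (hP.restrict (Ico_subset_Ico (by omega) (by omega)))⟩
  · obtain ⟨hI, hO⟩ := mem_product.1 hpair
    have hI := mem_motzkinPartitions.1 hI
    have hO := mem_motzkinPartitions.1 hO
    exact mem_filter.2 ⟨mem_motzkinPartitions.2 (isMotzkinPartition_glueParts hI hO hap hpn),
      isNextInBlock_glueParts hO hpn⟩
  · obtain ⟨hP, hnext⟩ := mem_filter.1 hP
    exact (mem_motzkinPartitions.1 hP).glueParts_restrictParts hnext hap hpn
  · obtain ⟨hI, hO⟩ := mem_product.1 hpair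
    have hI := mem_motzkinPartitions.1 hI
    have hO := mem_motzkinPartitions.1 hO
    exact Prod.ext (restrictParts_glueParts_inner hI hO)
      (restrictParts_glueParts_outer hI hO (by omega))

end Decomposition

theorem card_motzkinPartitions_Ico_eq_add_sum {a n : ℕ} (han : a < n) :
    #(motzkinPartitions (Ico a n)) = #(motzkinPartitions (Ico (a + 1) n)) +
      ∑ p ∈ Ico (a + 2) n,
        #(motzkinPartitions (Ico (a + 1) p)) * #(motzkinPartitions (Ico p n)) := by
  set T := motzkinPartitions (Ico a n)
  rw [← card_filter_add_card_filter_not (s := T) ({a} ∈ ·),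
    card_filter_singleton_mem_motzkinPartitions (mem_Ico.2 ⟨le_rfl, han⟩),
    ← Nat.Ico_succ_left_eq_erase_Ico]
  have hsplit : T.filter (fun P => {a} ∉ P) =
      (Ico (a + 2) n).biUnion fun p => T.filter (IsNextInBlock · a p) := by
    ext P
    simp only [mem_filter, mem_biUnion]
    constructor
    · rintro ⟨hP, ha⟩
      obtain ⟨p, hp, hnext⟩ := (mem_motzkinPartitions.1 hP).exists_isNextInBlock han ha
      exact ⟨p, hp, hP, hnext⟩
    · rintro ⟨p, hp, hP, hnext⟩
      exact ⟨hP, hnext.singleton_notMem (mem_motzkinPartitions.1 hP) (by grind)⟩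
  rw [hsplit, card_biUnion]
  · exact congrArg _ (sum_congr rfl fun p hp => card_filter_isNextInBlock (by grind) (by grind))
  · intro p hp q hq hpq
    refine disjoint_filter.2 fun P hP hnext hnext' => hpq ?_
    exact hnext.eq_of_ne (mem_motzkinPartitions.1 hP) hnext' (by grind) (by grind)

theorem card_motzkinPartitions_Ico_add_one (a n : ℕ) :
    #(motzkinPartitions (Ico (a + 1) (n + 1))) = #(motzkinPartitions (Ico a n)) := by
  induction hk : n - a using Nat.strong_induction_on generalizing a n with
  | _ k ih =>
    obtain han | hna := lt_or_ge a n
    · rw [card_motzkinPartitions_Ico_eq_add_sum han,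
        card_motzkinPartitions_Ico_eq_add_sum (Nat.add_lt_add_right han 1),
        ih (n - (a + 1)) (by omega) (a + 1) n rfl, show a + 1 + 2 = a + 2 + 1 by rfl,
        ← sum_Ico_add']
      refine congrArg _ (sum_congr rfl fun p hp => ?_)
      have hp := mem_Ico.1 hp
      rw [ih (p - (a + 1)) (by omega) (a + 1) p rfl, ih (n - p) (by omega) p n rfl]
    · rw [Ico_eq_empty_of_le hna, Ico_eq_empty_of_le (Nat.add_le_add_right hna 1)]

theorem card_motzkinPartitions_Ico (a k : ℕ) : #(motzkinPartitions (Ico a (a + k))) = M k := by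
  induction a with
  | zero => rw [zero_add, ← range_eq_Ico, M_eq_card_motzkinPartitions]
  | succ a ih => rw [Nat.add_right_comm, card_motzkinPartitions_Ico_add_one, ih]

theorem M_eq_add_sum {n : ℕ} (hn : 1 ≤ n) :
    M n = M (n - 1) + ∑ j ∈ Icc 3 n, M (j - 2) * M (n - j + 1) := by
  have hM {a b : ℕ} (hab : a ≤ b) : #(motzkinPartitions (Ico a b)) = M (b - a) := by
    rw [← card_motzkinPartitions_Ico a, Nat.add_sub_cancel' hab]
  have := card_motzkinPartitions_Ico_eq_add_sum (a := 0) (n := n) (by omega)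
  rw [hM n.zero_le, hM (a := 0 + 1) hn, Nat.sub_zero] at this
  rw [this, ← Ico_add_one_right_eq_Icc, show 3 = 2 + 1 by rfl, ← sum_Ico_add']
  refine congrArg _ (sum_congr rfl fun p hp => ?_)
  have hp := mem_Ico.1 hp
  rw [hM (by omega), hM (by omega), show p + 1 - 2 = p - (0 + 1) by omega,
    show n - (p + 1) + 1 = n - p by omega]

theorem M_zero : M 0 = 1 := by
  rw [M_eq_card_motzkinPartitions, range_zero, card_eq_one]
  refine ⟨∅, eq_singleton_iff_unique_mem.2 ⟨mem_motzkinPartitions.2 ?_, fun P hP => ?_⟩⟩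
  · exact ⟨by simp, by simp, by simp, by simp, by simp, by simp⟩
  · have hP := mem_motzkinPartitions.1 hP
    exact eq_empty_of_forall_notMem fun B hB =>
      (hP.nonempty B hB).ne_empty (subset_empty.1 (hP.subset B hB))

theorem statement11 :
    M 1 = 1 ∧ M 2 = 1 ∧
    ∀ n, 3 ≤ n → M n = M (n - 1) + ∑ j ∈ Finset.Icc 3 n, M (j - 2) * M (n - j + 1) := by
  have hM₁ : M 1 = 1 := by simpa [M_zero] using M_eq_add_sum (n := 1) le_rfl
  refine ⟨hM₁, by simpa [hM₁] using M_eq_add_sum (n := 2) (by norm_num), fun n hn => ?_⟩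
  exact M_eq_add_sum (by omega)
end

section
/- There is a bijection between the set of Motzkin paths from (0,0) to (n-1,0) and the set of noncrossing partitions of {1,…,n} with no block containing two consecutive integers. -/
/-- `w` is a Motzkin path with `m` steps: each step is `(1,1)`, `(1,-1)` or `(1,0)`
(recorded by its height change), all partial sums are nonnegative, and the path
ends at height `0`. -/
def IsMotzkin (m : ℕ) (w : Fin m → ℤ) : Prop :=
  (∀ i, w i = 1 ∨ w i = -1 ∨ w i = 0) ∧
  (∀ k : ℕ, 0 ≤ ∑ i ∈ Finset.univ.filter (fun i : Fin m => (i : ℕ) < k), w i) ∧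
  ∑ i, w i = 0

/-!
A partition `P` of `{0, …, n-1}` gives the path whose step `i` goes up when `i` is not the
largest element of its block and down when `i + 1` is not the smallest element of its block;
when `P` has no crossings and no block with two consecutive integers, these two events never
happen together. It is a Motzkin path because "previous element in the block" maps the down
steps injectively to earlier up steps, and "next element in the block" maps the up steps
injectively to down steps.

Conversely, a Motzkin path matches each down step ending at `y` with the up step starting at
the last earlier point no higher than `y`; the blocks are the chains of matched steps. They
are noncrossing because a point strictly inside a chain but off it lies strictly higher than
the chain, and they contain no consecutive integers because a point with a later point in its
block starts an up step, while a point with an earlier one ends a down step.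

Both constructions only see which points are not the largest (smallest) element of their
block, so the path of the partition of a path is the path itself; and the partition of the path
of `P` is `P` because a noncrossing partition is determined by these two sets, by induction on
the previous element in the block.
-/

open Finset

lemma card_filter_val_lt_succ {n k : ℕ} (hk : k < n) (q : Fin n → Prop) [DecidablePred q] :
    #(univ.filter fun x : Fin n => x.val < k + 1 ∧ q x) =
      #(univ.filter fun x : Fin n => x.val < k ∧ q x) + if q ⟨k, hk⟩ then 1 else 0 := by
  split_ifs with hq
  · rw [← card_insert_of_notMem (a := ⟨k, hk⟩) (by simp)]
    congr 1
    ext x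
    simp only [mem_filter, mem_univ, true_and, mem_insert, Fin.ext_iff]
    grind
  · rw [add_zero]
    congr 1
    ext x
    simp only [mem_filter, mem_univ, true_and]
    grind

section Partition
variable {n : ℕ} {P Q : Finset (Finset (Fin n))}

def NotBlockMax (P : Finset (Finset (Fin n))) (x : Fin n) : Prop :=
  ∃ B ∈ P, x ∈ B ∧ ∃ y ∈ B, x < y

def NotBlockMin (P : Finset (Finset (Fin n))) (x : Fin n) : Prop :=
  ∃ B ∈ P, x ∈ B ∧ ∃ y ∈ B, y < x

instance : DecidablePred (NotBlockMax P) := fun _ => by unfold NotBlockMax; infer_instance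

instance : DecidablePred (NotBlockMin P) := fun _ => by unfold NotBlockMin; infer_instance

lemma not_notBlockMin_of_val_eq_zero {x : Fin n} (hx : (x : ℕ) = 0) : ¬NotBlockMin P x :=
  fun ⟨_, _, _, y, _, hyx⟩ => absurd (Fin.lt_def.1 hyx) (by omega)

namespace IsPartition

noncomputable def block (hP : IsPartition n P) (x : Fin n) : Finset (Fin n) :=
  (hP.2 x).exists.choose

lemma block_mem (hP : IsPartition n P) (x : Fin n) : hP.block x ∈ P :=
  (hP.2 x).exists.choose_spec.1

lemma mem_block_self (hP : IsPartition n P) (x : Fin n) : x ∈ hP.block x :=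
  (hP.2 x).exists.choose_spec.2

lemma eq_block (hP : IsPartition n P) {B : Finset (Fin n)} {x : Fin n}
    (hB : B ∈ P) (hx : x ∈ B) : B = hP.block x :=
  (hP.2 x).unique ⟨hB, hx⟩ ⟨hP.block_mem x, hP.mem_block_self x⟩

lemma block_eq_of_mem (hP : IsPartition n P) {x y : Fin n} (h : y ∈ hP.block x) :
    hP.block y = hP.block x :=
  (hP.eq_block (hP.block_mem x) h).symm

lemma mem_block_iff (hP : IsPartition n P) {x y : Fin n} :
    y ∈ hP.block x ↔ hP.block y = hP.block x :=
  ⟨hP.block_eq_of_mem, fun h => h ▸ hP.mem_block_self y⟩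

lemma eq_image_block (hP : IsPartition n P) : P = univ.image hP.block := by
  ext B
  simp only [mem_image, mem_univ, true_and]
  refine ⟨fun hB => ?_, fun ⟨x, hx⟩ => hx ▸ hP.block_mem x⟩
  obtain ⟨x, hx⟩ := hP.1 B hB
  exact ⟨x, (hP.eq_block hB hx).symm⟩

lemma notBlockMax_iff (hP : IsPartition n P) {x : Fin n} :
    NotBlockMax P x ↔ ∃ y ∈ hP.block x, x < y :=
  ⟨fun ⟨_, hB, hxB, hy⟩ => hP.eq_block hB hxB ▸ hy,
    fun h => ⟨_, hP.block_mem x, hP.mem_block_self x, h⟩⟩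

lemma notBlockMin_iff (hP : IsPartition n P) {x : Fin n} :
    NotBlockMin P x ↔ ∃ y ∈ hP.block x, y < x :=
  ⟨fun ⟨_, hB, hxB, hy⟩ => hP.eq_block hB hxB ▸ hy,
    fun h => ⟨_, hP.block_mem x, hP.mem_block_self x, h⟩⟩

/-- The previous element of the block of `x` (junk value `x` if `x` is its minimum). -/
noncomputable def prev (hP : IsPartition n P) (x : Fin n) : Fin n :=
  if h : ((hP.block x).filter (· < x)).Nonempty then ((hP.block x).filter (· < x)).max' h else x

/-- The next element of the block of `x` (junk value `x` if `x` is its maximum). -/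
noncomputable def next (hP : IsPartition n P) (x : Fin n) : Fin n :=
  if h : ((hP.block x).filter (x < ·)).Nonempty then ((hP.block x).filter (x < ·)).min' h else x

lemma prev_mem_filter (hP : IsPartition n P) {x : Fin n} (hx : NotBlockMin P x) :
    hP.prev x ∈ (hP.block x).filter (· < x) := by
  obtain ⟨y, hy, hyx⟩ := hP.notBlockMin_iff.1 hx
  rw [prev, dif_pos ⟨y, mem_filter.2 ⟨hy, hyx⟩⟩]
  exact max'_mem _ _

lemma prev_mem (hP : IsPartition n P) {x : Fin n} (hx : NotBlockMin P x) :
    hP.prev x ∈ hP.block x :=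
  (mem_filter.1 (hP.prev_mem_filter hx)).1

lemma prev_lt (hP : IsPartition n P) {x : Fin n} (hx : NotBlockMin P x) : hP.prev x < x :=
  (mem_filter.1 (hP.prev_mem_filter hx)).2

lemma le_prev (hP : IsPartition n P) {x z : Fin n} (hz : z ∈ hP.block x) (hzx : z < x) :
    z ≤ hP.prev x := by
  rw [prev, dif_pos ⟨z, mem_filter.2 ⟨hz, hzx⟩⟩]
  exact le_max' _ z (mem_filter.2 ⟨hz, hzx⟩)

lemma next_mem_filter (hP : IsPartition n P) {x : Fin n} (hx : NotBlockMax P x) :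
    hP.next x ∈ (hP.block x).filter (x < ·) := by
  obtain ⟨y, hy, hxy⟩ := hP.notBlockMax_iff.1 hx
  rw [next, dif_pos ⟨y, mem_filter.2 ⟨hy, hxy⟩⟩]
  exact min'_mem _ _

lemma next_mem (hP : IsPartition n P) {x : Fin n} (hx : NotBlockMax P x) :
    hP.next x ∈ hP.block x :=
  (mem_filter.1 (hP.next_mem_filter hx)).1

lemma lt_next (hP : IsPartition n P) {x : Fin n} (hx : NotBlockMax P x) : x < hP.next x :=
  (mem_filter.1 (hP.next_mem_filter hx)).2

lemma next_le (hP : IsPartition n P) {x z : Fin n} (hz : z ∈ hP.block x) (hxz : x < z) :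
    hP.next x ≤ z := by
  rw [next, dif_pos ⟨z, mem_filter.2 ⟨hz, hxz⟩⟩]
  exact min'_le _ z (mem_filter.2 ⟨hz, hxz⟩)

lemma notBlockMax_prev (hP : IsPartition n P) {x : Fin n} (hx : NotBlockMin P x) :
    NotBlockMax P (hP.prev x) :=
  hP.notBlockMax_iff.2 ⟨x, hP.block_eq_of_mem (hP.prev_mem hx) ▸ hP.mem_block_self x,
    hP.prev_lt hx⟩

lemma notBlockMin_next (hP : IsPartition n P) {x : Fin n} (hx : NotBlockMax P x) :
    NotBlockMin P (hP.next x) :=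
  hP.notBlockMin_iff.2 ⟨x, hP.block_eq_of_mem (hP.next_mem hx) ▸ hP.mem_block_self x,
    hP.lt_next hx⟩

lemma prev_next (hP : IsPartition n P) {x : Fin n} (hx : NotBlockMax P x) :
    hP.prev (hP.next x) = x := by
  have hblock := hP.block_eq_of_mem (hP.next_mem hx)
  refine le_antisymm (le_of_not_gt fun h => ?_)
    (hP.le_prev (hblock ▸ hP.mem_block_self x) (hP.lt_next hx))
  have hmem := hP.prev_mem (hP.notBlockMin_next hx)
  rw [hblock] at hmem
  exact absurd (hP.next_le hmem h) (not_le.2 (hP.prev_lt (hP.notBlockMin_next hx)))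

lemma prev_injOn (hP : IsPartition n P) : Set.InjOn hP.prev {x | NotBlockMin P x} := by
  intro x hx y hy h
  have hxy : hP.block x = hP.block y := by
    rw [← hP.block_eq_of_mem (hP.prev_mem hx), h, hP.block_eq_of_mem (hP.prev_mem hy)]
  by_contra hne
  rcases lt_or_gt_of_ne hne with hlt | hlt
  · have := hP.le_prev (hxy ▸ hP.mem_block_self x) hlt
    exact absurd (hP.prev_lt hx) (not_lt.2 (h ▸ this))
  · have := hP.le_prev (hxy ▸ hP.mem_block_self y) hlt
    exact absurd (hP.prev_lt hy) (not_lt.2 (h ▸ this))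

lemma next_injOn (hP : IsPartition n P) : Set.InjOn hP.next {x | NotBlockMax P x} :=
  fun x hx y hy h => by rw [← hP.prev_next hx, h, hP.prev_next hy]

lemma mem_block_comm (hP : IsPartition n P) {x y : Fin n} :
    y ∈ hP.block x ↔ x ∈ hP.block y := by
  rw [hP.mem_block_iff, hP.mem_block_iff, eq_comm]

lemma mem_block_iff_of_lt (hP : IsPartition n P) {x y : Fin n} (hxy : x < y) :
    x ∈ hP.block y ↔ NotBlockMin P y ∧ x ≤ hP.prev y ∧ x ∈ hP.block (hP.prev y) := by
  constructor
  · intro hx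
    have hy : NotBlockMin P y := hP.notBlockMin_iff.2 ⟨x, hx, hxy⟩
    exact ⟨hy, hP.le_prev hx hxy, hP.block_eq_of_mem (hP.prev_mem hy) ▸ hx⟩
  · rintro ⟨hy, -, hx⟩
    exact hP.block_eq_of_mem (hP.prev_mem hy) ▸ hx

lemma not_notBlockMin_succ (hP : IsPartition n P) (hnc : NCPart n P) (hcons : NoConsec n P)
    {x y : Fin n} (hxy : (x : ℕ) + 1 = y) (hx : NotBlockMax P x) : ¬NotBlockMin P y := by
  intro hy
  obtain ⟨x', hx', hxx'⟩ := hP.notBlockMax_iff.1 hx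
  obtain ⟨y', hy', hy'y⟩ := hP.notBlockMin_iff.1 hy
  by_cases hblock : hP.block x = hP.block y
  · exact hcons _ (hP.block_mem x) x (hP.mem_block_self x) y (hblock ▸ hP.mem_block_self y) hxy
  have hy'x : y' < x := lt_of_le_of_ne (Fin.le_def.2 (by have := Fin.lt_def.1 hy'y; omega))
    fun h => hblock (hP.block_eq_of_mem (h ▸ hy'))
  have hyx' : y < x' := lt_of_le_of_ne (Fin.le_def.2 (by have := Fin.lt_def.1 hxx'; omega))
    fun h => hblock (hP.block_eq_of_mem (h ▸ hx')).symm
  exact hnc _ (hP.block_mem y) _ (hP.block_mem x) (Ne.symm hblock) y' hy' y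
    (hP.mem_block_self y) x (hP.mem_block_self x) x' hx' ⟨hy'x, Fin.lt_def.2 (by omega), hyx'⟩

lemma card_filter_notBlockMin_le (hP : IsPartition n P) (k : ℕ) :
    #(univ.filter fun x : Fin n => x.val < k + 1 ∧ NotBlockMin P x) ≤
      #(univ.filter fun x : Fin n => x.val < k ∧ NotBlockMax P x) := by
  refine card_le_card_of_injOn hP.prev (fun x hx => ?_)
    (hP.prev_injOn.mono fun x hx => (mem_filter.1 hx).2.2)
  obtain ⟨hxk, hx⟩ := (mem_filter.1 hx).2
  have := Fin.lt_def.1 (hP.prev_lt hx)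
  exact mem_filter.2 ⟨mem_univ _, by omega, hP.notBlockMax_prev hx⟩

lemma card_filter_notBlockMax_le (hP : IsPartition n P) {k k' : ℕ} (hk' : n ≤ k') :
    #(univ.filter fun x : Fin n => x.val < k ∧ NotBlockMax P x) ≤
      #(univ.filter fun x : Fin n => x.val < k' ∧ NotBlockMin P x) := by
  refine card_le_card_of_injOn hP.next (fun x hx => ?_)
    (hP.next_injOn.mono fun x hx => (mem_filter.1 hx).2.2)
  have := (hP.next x).isLt
  exact mem_filter.2 ⟨mem_univ _, by omega, hP.notBlockMin_next (mem_filter.1 hx).2.2⟩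

/-- If `prev_P j < prev_Q j = i`, the next element `s` of the `P`-block of `i` lies in `(i, j)`
by noncrossing; by induction `prev_Q s = prev_P s = i = prev_Q j`, so `s = j`. -/
lemma prev_le_prev (hP : IsPartition n P) (hQ : IsPartition n Q) (hnc : NCPart n P)
    (hmax : ∀ x, NotBlockMax P x ↔ NotBlockMax Q x)
    (hmin : ∀ x, NotBlockMin P x ↔ NotBlockMin Q x) {j : Fin n} (hj : NotBlockMin P j)
    (ih : ∀ j' < j, NotBlockMin P j' → hP.prev j' = hQ.prev j') : hQ.prev j ≤ hP.prev j := by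
  by_contra! hlt
  have hjQ := (hmin j).1 hj
  set i := hQ.prev j
  have hi : NotBlockMax P i := (hmax i).2 (hQ.notBlockMax_prev hjQ)
  have hij : i < j := hQ.prev_lt hjQ
  have hblock : hP.block i ≠ hP.block j := fun h =>
    absurd (hP.le_prev (h ▸ hP.mem_block_self i) hij) (not_le.2 hlt)
  have hsj : hP.next i ≠ j := fun h =>
    hblock (h ▸ (hP.block_eq_of_mem (hP.next_mem hi)).symm)
  have hsj' : hP.next i < j := lt_of_le_of_ne (le_of_not_gt fun h => hnc _ (hP.block_mem j) _
    (hP.block_mem i) (Ne.symm hblock) _ (hP.prev_mem hj) j (hP.mem_block_self j) i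
    (hP.mem_block_self i) _ (hP.next_mem hi) ⟨hlt, hij, h⟩) hsj
  have hs := hP.notBlockMin_next hi
  have hprev : hQ.prev (hP.next i) = hQ.prev j := by rw [← ih _ hsj' hs, hP.prev_next hi]
  exact hsj (hQ.prev_injOn ((hmin _).1 hs) hjQ hprev)

lemma prev_eq_prev (hP : IsPartition n P) (hQ : IsPartition n Q)
    (hncP : NCPart n P) (hncQ : NCPart n Q) (hmax : ∀ x, NotBlockMax P x ↔ NotBlockMax Q x)
    (hmin : ∀ x, NotBlockMin P x ↔ NotBlockMin Q x) {j : Fin n} (hj : NotBlockMin P j) :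
    hP.prev j = hQ.prev j := by
  induction j using WellFoundedLT.induction with
  | _ j ih =>
    refine le_antisymm ?_ (hP.prev_le_prev hQ hncP hmax hmin hj ih)
    exact hQ.prev_le_prev hP hncQ (fun x => (hmax x).symm) (fun x => (hmin x).symm)
      ((hmin j).1 hj) fun j' hj' hm => (ih j' hj' ((hmin j').2 hm)).symm

lemma eq_of_notBlockMax_notBlockMin (hP : IsPartition n P) (hQ : IsPartition n Q)
    (hncP : NCPart n P) (hncQ : NCPart n Q) (hmax : ∀ x, NotBlockMax P x ↔ NotBlockMax Q x)
    (hmin : ∀ x, NotBlockMin P x ↔ NotBlockMin Q x) : P = Q := by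
  have hle : ∀ y x, x ≤ y → (x ∈ hP.block y ↔ x ∈ hQ.block y) := by
    intro y
    induction y using WellFoundedLT.induction with
    | _ y ih =>
      intro x hxy
      rcases hxy.lt_or_eq with hxy | rfl
      · rw [hP.mem_block_iff_of_lt hxy, hQ.mem_block_iff_of_lt hxy, hmin y]
        refine and_congr_right fun hy => ?_
        rw [← hP.prev_eq_prev hQ hncP hncQ hmax hmin ((hmin y).2 hy)]
        exact and_congr_right fun hx => ih _ (hP.prev_lt ((hmin y).2 hy)) x hx
      · exact iff_of_true (hP.mem_block_self x) (hQ.mem_block_self x)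
  have hblock : ∀ x, hP.block x = hQ.block x := by
    intro x
    ext y
    rcases le_total y x with h | h
    · exact hle x y h
    · rw [hP.mem_block_comm, hQ.mem_block_comm]
      exact hle y x h
  rw [hP.eq_image_block, hQ.eq_image_block]
  exact image_congr fun x _ => hblock x

end IsPartition
end Partition

namespace Motzkin

def extend {m : ℕ} (w : Fin m → ℤ) : ℕ → ℤ :=
  fun i => if h : i < m then w ⟨i, h⟩ else 0

def height (W : ℕ → ℤ) (k : ℕ) : ℤ := ∑ i ∈ range k, W i

@[simp] lemma height_zero (W : ℕ → ℤ) : height W 0 = 0 := by simp [height]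

lemma height_succ (W : ℕ → ℤ) (k : ℕ) : height W (k + 1) = height W k + W k :=
  sum_range_succ _ _

/-- A Motzkin path of length `m`, as a sequence of steps indexed by `ℕ` that vanishes from `m`
on; `height W k` is the height at abscissa `k`. -/
structure IsPath (m : ℕ) (W : ℕ → ℤ) : Prop where
  step : ∀ i, W i = 1 ∨ W i = -1 ∨ W i = 0
  height_nonneg : ∀ k, 0 ≤ height W k
  eq_zero_of_le : ∀ k, m ≤ k → W k = 0
  height_length : height W m = 0

lemma height_eq_height_min {m : ℕ} {W : ℕ → ℤ} (hW : ∀ k, m ≤ k → W k = 0) (k : ℕ) :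
    height W k = height W (min k m) := by
  rcases le_total k m with h | h
  · rw [min_eq_left h]
  · rw [min_eq_right h, height, height, ← sum_subset (range_subset_range.2 h)]
    intro x _ hx
    exact hW x (by simpa using hx)

lemma sum_filter_val_lt_eq_height {m : ℕ} (w : Fin m → ℤ) (k : ℕ) :
    ∑ i ∈ univ.filter (fun i : Fin m => (i : ℕ) < k), w i = height (extend w) (min k m) := by
  have hrange : (range m).filter (· < k) = range (min k m) := by
    ext j; simp only [mem_filter, mem_range]; omega
  rw [height, ← hrange, sum_filter, sum_filter, ← Fin.sum_univ_eq_sum_range]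
  simp [extend]

lemma isMotzkin_iff_isPath {m : ℕ} {w : Fin m → ℤ} :
    IsMotzkin m w ↔ IsPath m (extend w) := by
  have hzero : ∀ k, m ≤ k → extend w k = 0 := fun k hk => dif_neg (by omega)
  have hlength : height (extend w) m = ∑ i, w i := by
    simpa using (sum_filter_val_lt_eq_height w m).symm
  constructor
  · rintro ⟨hstep, hnonneg, hsum⟩
    refine ⟨fun i => ?_, fun k => ?_, hzero, hlength.trans hsum⟩
    · by_cases h : i < m
      · simpa [extend, h] using hstep ⟨i, h⟩
      · simp [extend, h]
    · rw [height_eq_height_min hzero, ← sum_filter_val_lt_eq_height]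
      exact hnonneg k
  · rintro ⟨hstep, hnonneg, -, hlen⟩
    refine ⟨fun i => by simpa [extend] using hstep i, fun k => ?_, hlength ▸ hlen⟩
    rw [sum_filter_val_lt_eq_height]
    exact hnonneg _

def IsDownEnd (W : ℕ → ℤ) (y : ℕ) : Prop := 0 < y ∧ W (y - 1) = -1

instance (W : ℕ → ℤ) : DecidablePred (IsDownEnd W) := fun _ => instDecidableAnd

/-- For a down step ending at `y`, the start of the matching up step. -/
def matchUp (W : ℕ → ℤ) (y : ℕ) : ℕ :=
  Nat.findGreatest (fun t => height W t ≤ height W y) (y - 1)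

lemma matchUp_lt {W : ℕ → ℤ} {y : ℕ} (hy : 0 < y) : matchUp W y < y :=
  (Nat.findGreatest_le _).trans_lt (by omega)

/-- The first point of the chain of matched steps through `x`. -/
def root (W : ℕ → ℤ) (x : ℕ) : ℕ :=
  if _ : IsDownEnd W x then root W (matchUp W x) else x
termination_by x
decreasing_by exact matchUp_lt ‹IsDownEnd W x›.1

section
variable {m : ℕ} {W : ℕ → ℤ}

lemma root_of_isDownEnd {x : ℕ} (h : IsDownEnd W x) : root W x = root W (matchUp W x) := by
  rw [root, dif_pos h]

lemma root_of_not_isDownEnd {x : ℕ} (h : ¬IsDownEnd W x) : root W x = x := by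
  rw [root, dif_neg h]

lemma root_le (x : ℕ) : root W x ≤ x := by
  induction x using Nat.strong_induction_on with
  | _ x ih =>
    by_cases h : IsDownEnd W x
    · rw [root_of_isDownEnd h]
      exact (ih _ (matchUp_lt h.1)).trans (matchUp_lt h.1).le
    · rw [root_of_not_isDownEnd h]

lemma isDownEnd_of_root_eq {x y : ℕ} (hyx : y < x) (h : root W x = root W y) :
    IsDownEnd W x := by
  by_contra hx
  rw [root_of_not_isDownEnd hx] at h
  exact absurd (root_le (W := W) y) (by omega)

lemma height_lt_of_matchUp_lt {y t : ℕ} (h₁ : matchUp W y < t) (h₂ : t < y) :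
    height W y < height W t :=
  lt_of_not_ge fun h => Nat.findGreatest_is_greatest (P := fun t => height W t ≤ height W y)
    h₁ (by omega) h

lemma height_matchUp_le (hW : IsPath m W) {y : ℕ} : height W (matchUp W y) ≤ height W y :=
  Nat.findGreatest_spec (P := fun t => height W t ≤ height W y) (Nat.zero_le _)
    (by simpa using hW.height_nonneg y)

lemma matchUp_spec (hW : IsPath m W) {y : ℕ} (hy : IsDownEnd W y) :
    W (matchUp W y) = 1 ∧ height W (matchUp W y) = height W y := by
  have hprev : height W y + 1 = height W (y - 1) := by
    have := height_succ W (y - 1)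
    rw [Nat.sub_add_cancel hy.1, hy.2] at this
    omega
  have hle := height_matchUp_le hW (y := y)
  have hlt := matchUp_lt (W := W) hy.1
  have hne : matchUp W y ≠ y - 1 := fun h => by rw [← h] at hprev; omega
  have hnext := height_lt_of_matchUp_lt (lt_add_one (matchUp W y)) (by omega)
  have hsucc := height_succ W (matchUp W y)
  rcases hW.step (matchUp W y) with h | h | h <;> rw [h] at hsucc <;> omega

lemma height_root (hW : IsPath m W) (x : ℕ) : height W (root W x) = height W x := by
  induction x using Nat.strong_induction_on with
  | _ x ih =>
    by_cases h : IsDownEnd W x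
    · rw [root_of_isDownEnd h, ih _ (matchUp_lt h.1), (matchUp_spec hW h).2]
    · rw [root_of_not_isDownEnd h]

lemma exists_matchUp_eq (hW : IsPath m W) {i : ℕ} (hi : W i = 1) :
    ∃ y, IsDownEnd W y ∧ y ≤ m ∧ matchUp W y = i := by
  have him : i < m := lt_of_not_ge fun h => by simp [hW.eq_zero_of_le i h] at hi
  have hex : ∃ t, i < t ∧ height W t ≤ height W i :=
    ⟨m, him, hW.height_length ▸ hW.height_nonneg i⟩
  classical
  obtain ⟨hiy, hy⟩ := Nat.find_spec hex
  set y := Nat.find hex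
  have hmin : ∀ t, i < t → t < y → height W i < height W t := fun t h₁ h₂ =>
    lt_of_not_ge fun h => Nat.find_min hex h₂ ⟨h₁, h⟩
  have hym : y ≤ m := Nat.find_le ⟨him, hW.height_length ▸ hW.height_nonneg i⟩
  have hiy' : i + 1 < y := by
    refine lt_of_le_of_ne hiy fun h => ?_
    rw [← h, height_succ, hi] at hy
    omega
  have hprev := hmin (y - 1) (by omega) (by omega)
  have hstep := height_succ W (y - 1)
  rw [Nat.sub_add_cancel (by omega)] at hstep
  have hdown : IsDownEnd W y := ⟨by omega, by rcases hW.step (y - 1) with h | h | h <;> omega⟩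
  have hyi : height W y = height W i := by rw [hdown.2] at hstep; omega
  refine ⟨y, hdown, hym, le_antisymm ?_ ?_⟩
  · refine le_of_not_gt fun h => ?_
    have := hmin _ h (matchUp_lt hdown.1)
    have := height_matchUp_le hW (y := y)
    omega
  · exact Nat.le_findGreatest (P := fun t => height W t ≤ height W y) (by omega) hyi.symm.le

lemma height_lt_of_root_lt (hW : IsPath m W) {y b : ℕ} (h₁ : root W y < b) (h₂ : b < y)
    (h₃ : root W b ≠ root W y) : height W y < height W b := by
  induction y using Nat.strong_induction_on with
  | _ y ih =>
    have hdown : IsDownEnd W y := by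
      by_contra h
      rw [root_of_not_isDownEnd h] at h₁
      omega
    rw [root_of_isDownEnd hdown] at h₁ h₃
    rcases lt_trichotomy (matchUp W y) b with hp | rfl | hp
    · exact height_lt_of_matchUp_lt hp h₂
    · exact absurd rfl h₃
    · rw [← (matchUp_spec hW hdown).2]
      exact ih _ (matchUp_lt hdown.1) h₁ hp h₃

lemma step_eq_one_of_root_eq (hW : IsPath m W) {x y : ℕ} (hxy : x < y)
    (h : root W x = root W y) : W x = 1 := by
  induction y using Nat.strong_induction_on with
  | _ y ih =>
    have hdown := isDownEnd_of_root_eq hxy h.symm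
    rw [root_of_isDownEnd hdown] at h
    rcases lt_trichotomy (matchUp W y) x with hp | rfl | hp
    · have := height_lt_of_matchUp_lt hp hxy
      rw [← height_root hW x, h, height_root hW, (matchUp_spec hW hdown).2] at this
      exact absurd this (lt_irrefl _)
    · exact (matchUp_spec hW hdown).1
    · exact ih _ (matchUp_lt hdown.1) hp h


def block (W : ℕ → ℤ) (n : ℕ) (x : Fin n) : Finset (Fin n) :=
  univ.filter fun y => root W y = root W x

def toPartition (W : ℕ → ℤ) (n : ℕ) : Finset (Finset (Fin n)) :=
  univ.image (block W n)

lemma mem_block {n : ℕ} {x y : Fin n} : y ∈ block W n x ↔ root W y = root W x := by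
  simp [block]

lemma mem_toPartition {n : ℕ} {B : Finset (Fin n)} :
    B ∈ toPartition W n ↔ ∃ x, block W n x = B := by
  simp [toPartition]

lemma block_eq_block {n : ℕ} {x y : Fin n} :
    block W n x = block W n y ↔ root W x = root W y := by
  refine ⟨fun h => mem_block.1 (h ▸ mem_block.2 rfl), fun h => ?_⟩
  ext z
  simp only [mem_block, h]

lemma isPartition_toPartition (n : ℕ) : IsPartition n (toPartition W n) := by
  refine ⟨fun B hB => ?_,
    fun x => ⟨block W n x, ⟨mem_toPartition.2 ⟨x, rfl⟩, mem_block.2 rfl⟩, ?_⟩⟩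
  · obtain ⟨x, rfl⟩ := mem_toPartition.1 hB
    exact ⟨x, mem_block.2 rfl⟩
  · rintro B ⟨hB, hxB⟩
    obtain ⟨y, rfl⟩ := mem_toPartition.1 hB
    exact block_eq_block.2 (mem_block.1 hxB).symm

lemma root_eq_of_mem_toPartition {n : ℕ} {B : Finset (Fin n)} (hB : B ∈ toPartition W n)
    {x y : Fin n} (hx : x ∈ B) (hy : y ∈ B) : root W x = root W y := by
  obtain ⟨z, rfl⟩ := mem_toPartition.1 hB
  rw [mem_block.1 hx, mem_block.1 hy]

lemma noConsec_toPartition (hW : IsPath m W) (n : ℕ) : NoConsec n (toPartition W n) := by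
  intro B hB i hi j hj hij
  have hroot := root_eq_of_mem_toPartition hB hi hj
  have hup := step_eq_one_of_root_eq hW (by omega) hroot
  have hdown := (isDownEnd_of_root_eq (by omega) hroot.symm).2
  rw [← hij, Nat.add_sub_cancel] at hdown
  omega

/-- A crossing `a < b < c < d` would make `b` higher than `c` and `c` higher than `d`,
while `b` and `d` are on the same chain, hence at the same height. -/
lemma ncPart_toPartition (hW : IsPath m W) (n : ℕ) : NCPart n (toPartition W n) := by
  intro B hB C hC hBC a ha c hc b hb d hd ⟨hab, hbc, hcd⟩
  have hac := root_eq_of_mem_toPartition hB ha hc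
  have hbd := root_eq_of_mem_toPartition hC hb hd
  have hbc' : root W b ≠ root W c := fun h => hBC <| by
    obtain ⟨x, rfl⟩ := mem_toPartition.1 hB
    obtain ⟨y, rfl⟩ := mem_toPartition.1 hC
    exact block_eq_block.2 ((mem_block.1 hc).symm.trans (h.symm.trans (mem_block.1 hb)))
  rw [Fin.lt_def] at hab hbc hcd
  have h₁ : height W c < height W b :=
    height_lt_of_root_lt hW (by have := root_le (W := W) a; omega) hbc hbc'
  have h₂ : height W d < height W c :=
    height_lt_of_root_lt hW (by have := root_le (W := W) b; omega) hcd (hbd ▸ hbc'.symm)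
  have h₃ : height W b = height W d := by rw [← height_root hW b, hbd, height_root hW]
  omega

lemma notBlockMax_toPartition_iff (hW : IsPath m W) {n : ℕ} (hmn : m < n) (x : Fin n) :
    NotBlockMax (toPartition W n) x ↔ W x = 1 := by
  constructor
  · rintro ⟨B, hB, hxB, y, hyB, hxy⟩
    exact step_eq_one_of_root_eq hW hxy (root_eq_of_mem_toPartition hB hxB hyB)
  · intro hx
    obtain ⟨y, hy, hym, hyx⟩ := exists_matchUp_eq hW hx
    refine ⟨block W n x, mem_toPartition.2 ⟨x, rfl⟩, mem_block.2 rfl, ⟨y, by omega⟩,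
      mem_block.2 ?_, Fin.lt_def.2 ?_⟩
    · rw [root_of_isDownEnd hy, hyx]
    · rw [← hyx]; exact matchUp_lt hy.1

lemma notBlockMin_toPartition_iff {n : ℕ} (x : Fin n) :
    NotBlockMin (toPartition W n) x ↔ IsDownEnd W x := by
  constructor
  · rintro ⟨B, hB, hxB, y, hyB, hyx⟩
    exact isDownEnd_of_root_eq hyx (root_eq_of_mem_toPartition hB hxB hyB)
  · intro hx
    refine ⟨block W n x, mem_toPartition.2 ⟨x, rfl⟩, mem_block.2 rfl,
      ⟨matchUp W x, (matchUp_lt hx.1).trans x.isLt⟩, mem_block.2 ?_,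
      Fin.lt_def.2 (matchUp_lt hx.1)⟩
    exact (root_of_isDownEnd hx).symm

end

section
variable {n : ℕ} {P : Finset (Finset (Fin n))}

def ofPartition (P : Finset (Finset (Fin n))) (i : ℕ) : ℤ :=
  if h : i + 1 < n then
    (if NotBlockMax P ⟨i, by omega⟩ then 1 else 0) -
      (if NotBlockMin P ⟨i + 1, h⟩ then 1 else 0)
  else 0

lemma ofPartition_of_le {k : ℕ} (hk : n - 1 ≤ k) : ofPartition P k = 0 :=
  dif_neg (by omega)

/-- The height at `k` is the number of arcs `(x, next x)` with `x < k` minus the number of those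
with `next x ≤ k`. -/
lemma height_ofPartition {k : ℕ} (hk : k ≤ n - 1) :
    height (ofPartition P) k = #(univ.filter fun x : Fin n => x.val < k ∧ NotBlockMax P x) -
      (#(univ.filter fun x : Fin n => x.val < k + 1 ∧ NotBlockMin P x) : ℤ) := by
  induction k with
  | zero =>
    have hmin : univ.filter (fun x : Fin n => x.val < 1 ∧ NotBlockMin P x) = ∅ :=
      filter_eq_empty_iff.2 fun x _ ⟨hx, hmin⟩ => not_notBlockMin_of_val_eq_zero (by omega) hmin
    rw [height_zero, hmin]
    simp
  | succ k ih =>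
    rw [height_succ, ih (by omega), card_filter_val_lt_succ (k := k) (by omega) (NotBlockMax P),
      card_filter_val_lt_succ (k := k + 1) (by omega) (NotBlockMin P), ofPartition,
      dif_pos (by omega)]
    push_cast
    ring

lemma isPath_ofPartition (hP : IsPartition n P) : IsPath (n - 1) (ofPartition P) := by
  have hzero : ∀ k, n - 1 ≤ k → ofPartition P k = 0 := fun k hk => ofPartition_of_le hk
  refine ⟨fun i => ?_, fun k => ?_, hzero, ?_⟩
  · unfold ofPartition
    split_ifs <;> norm_num
  · rw [height_eq_height_min hzero, height_ofPartition (min_le_right _ _), sub_nonneg]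
    exact_mod_cast hP.card_filter_notBlockMin_le _
  · rw [height_ofPartition le_rfl, sub_eq_zero]
    exact_mod_cast (hP.card_filter_notBlockMin_le _).antisymm'
      (hP.card_filter_notBlockMax_le (by omega))

lemma notBlockMax_iff_ofPartition_eq_one (hP : IsPartition n P) (hnc : NCPart n P)
    (hcons : NoConsec n P) (x : Fin n) : NotBlockMax P x ↔ ofPartition P x = 1 := by
  by_cases hx : (x : ℕ) + 1 < n
  · rw [ofPartition, dif_pos hx]
    by_cases hmax : NotBlockMax P x
    · simp [hmax, hP.not_notBlockMin_succ hnc hcons (y := ⟨x + 1, hx⟩) rfl hmax]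
    · rw [if_neg hmax]
      simp only [hmax, false_iff]
      split_ifs <;> norm_num
  · rw [ofPartition_of_le (by omega)]
    refine iff_of_false (fun ⟨_, _, _, y, _, hxy⟩ => ?_) (by norm_num)
    have := Fin.lt_def.1 hxy
    omega

lemma notBlockMin_iff_isDownEnd_ofPartition (hP : IsPartition n P) (hnc : NCPart n P)
    (hcons : NoConsec n P) (x : Fin n) : NotBlockMin P x ↔ IsDownEnd (ofPartition P) x := by
  by_cases hx : (x : ℕ) = 0
  · exact iff_of_false (not_notBlockMin_of_val_eq_zero hx) fun h => absurd h.1 (by omega)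
  have hx' : (x : ℕ) - 1 + 1 < n := by omega
  have hsucc : (⟨(x : ℕ) - 1 + 1, hx'⟩ : Fin n) = x := Fin.ext (by simp; omega)
  rw [IsDownEnd, ofPartition, dif_pos hx', hsucc]
  by_cases hmin : NotBlockMin P x
  · have hmax : ¬NotBlockMax P ⟨x - 1, by omega⟩ := fun hmax =>
      hP.not_notBlockMin_succ hnc hcons (by simp; omega) hmax hmin
    simp [hmin, hmax]
    omega
  · rw [if_neg hmin]
    simp only [hmin, false_iff, not_and]
    intro _
    split_ifs <;> norm_num

lemma extend_ofPartition : extend (fun i : Fin (n - 1) => ofPartition P i) = ofPartition P := by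
  funext i
  by_cases h : i < n - 1
  · simp [extend, h]
  · rw [extend, dif_neg h, ofPartition_of_le (by omega)]

lemma ofPartition_toPartition {W : ℕ → ℤ} (hW : IsPath (n - 1) W) :
    ofPartition (toPartition W n) = W := by
  funext i
  by_cases hi : i + 1 < n
  · rw [ofPartition, dif_pos hi]
    simp only [notBlockMax_toPartition_iff hW (show n - 1 < n by omega),
      notBlockMin_toPartition_iff, IsDownEnd, Nat.add_sub_cancel]
    rcases hW.step i with h | h | h <;> simp [h]
  · rw [ofPartition_of_le (by omega), hW.eq_zero_of_le i (by omega)]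

lemma toPartition_ofPartition (hP : IsPartition n P) (hnc : NCPart n P) (hcons : NoConsec n P) :
    toPartition (ofPartition P) n = P := by
  have hW := isPath_ofPartition hP
  refine (isPartition_toPartition n).eq_of_notBlockMax_notBlockMin hP (ncPart_toPartition hW n)
    hnc (fun x => ?_) (fun x => ?_)
  · rw [notBlockMax_toPartition_iff hW (by have := x.isLt; omega),
      notBlockMax_iff_ofPartition_eq_one hP hnc hcons]
  · rw [notBlockMin_toPartition_iff, notBlockMin_iff_isDownEnd_ofPartition hP hnc hcons]

end

def equivNCPartition (n : ℕ) : {w : Fin (n - 1) → ℤ // IsMotzkin (n - 1) w} ≃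
    {P : Finset (Finset (Fin n)) // IsPartition n P ∧ NCPart n P ∧ NoConsec n P} where
  toFun w :=
    have hw := isMotzkin_iff_isPath.1 w.2
    ⟨toPartition (extend w.1) n, isPartition_toPartition n, ncPart_toPartition hw n,
      noConsec_toPartition hw n⟩
  invFun P := ⟨fun i => ofPartition P.1 i,
    by rw [isMotzkin_iff_isPath, extend_ofPartition]; exact isPath_ofPartition P.2.1⟩
  left_inv w := Subtype.ext <| funext fun i => by
    simp [ofPartition_toPartition (isMotzkin_iff_isPath.1 w.2), extend]
  right_inv P := Subtype.ext <| by
    simp only [extend_ofPartition]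
    exact toPartition_ofPartition P.2.1 P.2.2.1 P.2.2.2

end Motzkin

theorem statement12_general (n : ℕ) :
    Nonempty ({w : Fin (n - 1) → ℤ // IsMotzkin (n - 1) w} ≃
      {P : Finset (Finset (Fin n)) // IsPartition n P ∧ NCPart n P ∧ NoConsec n P}) :=
  ⟨Motzkin.equivNCPartition n⟩

/-- there is a bijection between Motzkin paths from `(0,0)` to
`(n-1,0)` and noncrossing partitions of `{1,…,n}` with no block containing two
consecutive integers. -/
theorem statement12 (n : ℕ) (hn : 1 ≤ n) :
    Nonempty ({w : Fin (n - 1) → ℤ // IsMotzkin (n - 1) w} ≃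
      {P : Finset (Finset (Fin n)) // IsPartition n P ∧ NCPart n P ∧ NoConsec n P}) :=
  statement12_general n
end
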